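/- arXiv:0706.3263 — 6 statements merged into one kernel-verified Lean document; each statement's English description precedes it below -/
import Mathlib

section
/- If an orientation ε₁ of G is totally cyclic and ε₂ is Eulerian equivalent to ε₁, then ε₂ is also totally cyclic; i.e., Eulerian equivalence restricts to an equivalence relation on the set of totally cyclic orientations. -/
/-!  Multigraphs with labelled edges: an edge `e` has endpoints `fst e`, `snd e`.
An orientation is `ε : E → Bool`, where `ε e = true` means `e` is directed
from `fst e` (tail) to `snd e` (head), and `false` means the reverse. -/

structure MGraph (V E : Type) where
  fst : E → V
  snd : E → V

namespace MGraph

variable {V E : Type}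

/-- Head (target) of edge `e` under orientation `ε`. -/
def head (G : MGraph V E) (ε : E → Bool) (e : E) : V := cond (ε e) (G.snd e) (G.fst e)

/-- Tail (source) of edge `e` under orientation `ε`. -/
def tail (G : MGraph V E) (ε : E → Bool) (e : E) : V := cond (ε e) (G.fst e) (G.snd e)

/-- Directed reachability under `ε`. -/
def Reaches (G : MGraph V E) (ε : E → Bool) (u v : V) : Prop :=
  Relation.ReflTransGen (fun a b => ∃ e, G.tail ε e = a ∧ G.head ε e = b) u v

/-- Directed reachability avoiding the edge `e₀` (i.e. in `G - e₀`). -/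
def ReachesAvoiding (G : MGraph V E) (ε : E → Bool) (e₀ : E) (u v : V) : Prop :=
  Relation.ReflTransGen (fun a b => ∃ e, e ≠ e₀ ∧ G.tail ε e = a ∧ G.head ε e = b) u v

/-- `ε` has a directed cut: a set `S` of vertices with at least one edge leaving `S`
and no edge entering `S`. -/
def HasDirCut (G : MGraph V E) (ε : E → Bool) : Prop :=
  ∃ S : Set V, (∃ e, G.tail ε e ∈ S ∧ G.head ε e ∉ S) ∧
    ∀ e, G.head ε e ∈ S → G.tail ε e ∈ S

/-- A totally cyclic orientation: one without directed cuts. -/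
def TotallyCyclic (G : MGraph V E) (ε : E → Bool) : Prop := ¬ G.HasDirCut ε

/-- An acyclic orientation: no directed cycle, i.e. no edge whose head reaches its tail. -/
def Acyclic (G : MGraph V E) (ε : E → Bool) : Prop :=
  ∀ e, ¬ G.Reaches ε (G.head ε e) (G.tail ε e)

/-- The set of edges `D` induces a directed Eulerian subgraph w.r.t. `ε`:
in-degree equals out-degree at each vertex. -/
def IsEulerianSet (G : MGraph V E) (ε : E → Bool) (D : Set E) : Prop :=
  ∀ v, Nat.card {e : E // e ∈ D ∧ G.head ε e = v} =
       Nat.card {e : E // e ∈ D ∧ G.tail ε e = v}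

/-- The set of edges on which two orientations differ. -/
def diffSet (ε₁ ε₂ : E → Bool) : Set E := {e | ε₁ e ≠ ε₂ e}

/-- Eulerian equivalence of orientations. -/
def EulerianEquiv (G : MGraph V E) (ε₁ ε₂ : E → Bool) : Prop :=
  G.IsEulerianSet ε₁ (diffSet ε₁ ε₂)

/-- The edges crossing between `S` and its complement. -/
def cutEdges (G : MGraph V E) (S : Set V) : Set E :=
  {e | (G.fst e ∈ S ∧ G.snd e ∉ S) ∨ (G.fst e ∉ S ∧ G.snd e ∈ S)}

/-- A bond: a minimal nonempty edge cut. -/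
def IsBond (G : MGraph V E) (D : Set E) : Prop :=
  (∃ S, D = G.cutEdges S) ∧ D.Nonempty ∧
    ∀ D', (∃ S, D' = G.cutEdges S) → D'.Nonempty → D' ⊆ D → D' = D

/-- A directed bond w.r.t. `ε`: a bond all of whose edges go from `S` to its complement. -/
def IsDirectedBond (G : MGraph V E) (ε : E → Bool) (D : Set E) : Prop :=
  G.IsBond D ∧ ∃ S, D = G.cutEdges S ∧ ∀ e ∈ D, G.tail ε e ∈ S

/-- A directed cut: a disjoint union of directed bonds. -/
def IsDirectedCut (G : MGraph V E) (ε : E → Bool) (D : Set E) : Prop :=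
  ∃ (n : ℕ) (B : Fin n → Set E), (∀ i, G.IsDirectedBond ε (B i)) ∧
    (Pairwise fun i j => Disjoint (B i) (B j)) ∧ D = ⋃ i, B i

/-- Cut equivalence of orientations. -/
def CutEquiv (G : MGraph V E) (ε₁ ε₂ : E → Bool) : Prop :=
  G.IsDirectedCut ε₁ (diffSet ε₁ ε₂) ∨ G.IsDirectedCut ε₂ (diffSet ε₁ ε₂)

/-- Eulerian-cut equivalence of orientations: the differing edges split into an
edge-disjoint union of a directed Eulerian subgraph and a directed cut. -/
def EulCutEquiv (G : MGraph V E) (ε₁ ε₂ : E → Bool) : Prop :=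
  (∃ D₁ D₂ : Set E, Disjoint D₁ D₂ ∧ diffSet ε₁ ε₂ = D₁ ∪ D₂ ∧
      G.IsEulerianSet ε₁ D₁ ∧ G.IsDirectedCut ε₁ D₂) ∨
  (∃ D₁ D₂ : Set E, Disjoint D₁ D₂ ∧ diffSet ε₁ ε₂ = D₁ ∪ D₂ ∧
      G.IsEulerianSet ε₂ D₁ ∧ G.IsDirectedCut ε₂ D₂)

/-- Undirected connectivity via the edges of `A` (spanning subgraph `(V, A)`). -/
def connRel (G : MGraph V E) (A : Set E) : V → V → Prop :=
  Relation.EqvGen (fun u v => ∃ e ∈ A, (G.fst e = u ∧ G.snd e = v) ∨ (G.fst e = v ∧ G.snd e = u))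

/-- Number of connected components of the spanning subgraph `(V, A)`. -/
noncomputable def ncomp (G : MGraph V E) (A : Set E) : ℕ :=
  Nat.card (Quot (G.connRel A))

def Connected (G : MGraph V E) : Prop := ∀ u v : V, G.connRel Set.univ u v

/-- Rank of an edge set: `|V| - c(A)`. -/
noncomputable def rank (G : MGraph V E) [Fintype V] (A : Set E) : ℕ :=
  Fintype.card V - G.ncomp A

/-- The Tutte polynomial (Whitney rank expansion), evaluated at `(x, y)`. -/
noncomputable def tutte (G : MGraph V E) [Fintype V] [Fintype E] (x y : ℤ) : ℤ :=
  ∑ A : Finset E, (x - 1) ^ (G.rank (Set.univ : Set E) - G.rank (A : Set E)) *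
    (y - 1) ^ (A.card - G.rank (A : Set E))

/-- The Eulerian equivalence class (within totally cyclic orientations) of `ε`. -/
def eulClass (G : MGraph V E) (ε : E → Bool) : Set (E → Bool) :=
  {ε' | G.TotallyCyclic ε' ∧ G.EulerianEquiv ε ε'}

/-- The number of Eulerian equivalence classes of totally cyclic orientations. -/
noncomputable def numEulClasses (G : MGraph V E) : ℕ :=
  Nat.card {C : Set (E → Bool) // ∃ ε, G.TotallyCyclic ε ∧ C = G.eulClass ε}

/-- The cut equivalence class (within acyclic orientations) of `ε`. -/
def cutClass (G : MGraph V E) (ε : E → Bool) : Set (E → Bool) :=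
  {ε' | G.Acyclic ε' ∧ G.CutEquiv ε ε'}

/-- The number of cut equivalence classes of acyclic orientations. -/
noncomputable def numCutClasses (G : MGraph V E) : ℕ :=
  Nat.card {C : Set (E → Bool) // ∃ ε, G.Acyclic ε ∧ C = G.cutClass ε}

/-- Deletion of the edge `e`. -/
def deleteEdge (G : MGraph V E) (e : E) : MGraph V {f : E // f ≠ e} :=
  ⟨fun f => G.fst f.val, fun f => G.snd f.val⟩

/-- Contraction of the edge `e`: identify its two endpoints and remove `e`. -/
def contractEdge (G : MGraph V E) (e : E) :
    MGraph (Quot fun a b => a = G.fst e ∧ b = G.snd e) {f : E // f ≠ e} :=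
  ⟨fun f => Quot.mk _ (G.fst f.val), fun f => Quot.mk _ (G.snd f.val)⟩

/-- `e` is a bridge: its endpoints are disconnected in `G - e`. -/
def IsBridge (G : MGraph V E) (e : E) : Prop :=
  ¬ G.connRel {f | f ≠ e} (G.fst e) (G.snd e)

def IsLoop (G : MGraph V E) (e : E) : Prop := G.fst e = G.snd e

/-- A directed edge `e` is cycle flippable w.r.t. `ε` if there are directed paths
both from its tail to its head and from its head to its tail in `G - e`. -/
def CycleFlippable (G : MGraph V E) (ε : E → Bool) (e : E) : Prop :=
  G.ReachesAvoiding ε e (G.tail ε e) (G.head ε e) ∧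
  G.ReachesAvoiding ε e (G.head ε e) (G.tail ε e)

/-- A directed cycle: a nonempty list of distinct edges, consecutively joined
head-to-tail, closing up. -/
def IsDirectedCycle (G : MGraph V E) (ε : E → Bool) (C : List E) : Prop :=
  C ≠ [] ∧ C.Nodup ∧ C.Chain' (fun a b => G.head ε a = G.tail ε b) ∧
    ∀ h : C ≠ [], G.head ε (C.getLast h) = G.tail ε (C.head h)

/-- `ε` is reduced w.r.t. the normal orientation `εN` and the edge order: for each
edge `e`, either `ε` agrees with `εN` on `e`, or no directed cycle through `e`
has all its other edges smaller than `e`. -/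
def Reduced (G : MGraph V E) [LinearOrder E] (εN ε : E → Bool) : Prop :=
  ∀ e, ε e = εN e ∨
    ¬ ∃ C : List E, G.IsDirectedCycle ε C ∧ e ∈ C ∧ ∀ f ∈ C, f ≠ e → f < e

/-- `T` is (the edge set of) a spanning tree of `G`. -/
def IsSpanningTree (G : MGraph V E) [Fintype V] (T : Finset E) : Prop :=
  (∀ u v : V, G.connRel (↑T) u v) ∧ T.card + 1 = Fintype.card V

/-- `e ∈ T` is internally active: it is the smallest edge of the fundamental cut it defines. -/
def InternallyActive (G : MGraph V E) [Fintype V] [LinearOrder E] [DecidableEq E]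
    (T : Finset E) (e : E) : Prop :=
  e ∈ T ∧ ∀ f, G.IsSpanningTree (insert f (T.erase e)) → e ≤ f

/-- `e ∉ T` is externally active: it is the smallest edge of the fundamental cycle of `T + e`. -/
def ExternallyActive (G : MGraph V E) [Fintype V] [LinearOrder E] [DecidableEq E]
    (T : Finset E) (e : E) : Prop :=
  e ∉ T ∧ ∀ f ∈ T, G.IsSpanningTree (insert e (T.erase f)) → e ≤ f

/-- `v` is a source of `(G, ε)`. -/
def IsSource (G : MGraph V E) (ε : E → Bool) (v : V) : Prop :=
  ∀ e, G.head ε e ≠ v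

end MGraph

/-- Eulerian equivalence preserves total cyclicity. -/
theorem stmt2 {V E : Type} [Fintype V] [Fintype E] (G : MGraph V E)
    (ε₁ ε₂ : E → Bool) (h₁ : G.TotallyCyclic ε₁) (h : G.EulerianEquiv ε₁ ε₂) :
    G.TotallyCyclic ε₂ := by
  classical
  rintro ⟨S, ⟨e₀, he₀t, he₀h⟩, hcut⟩
  set D : E → Prop := fun e => ε₁ e ≠ ε₂ e with hD
  have hswap : ∀ e, D e → G.head ε₂ e = G.tail ε₁ e ∧ G.tail ε₂ e = G.head ε₁ e := by
    intro e he
    have h2 : ε₂ e = !ε₁ e := by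
      cases h1 : ε₁ e <;> cases h2 : ε₂ e <;>
        first | (exact absurd (h1.trans h2.symm) he) | simp
    cases h1 : ε₁ e <;> simp [MGraph.head, MGraph.tail, h2, h1]
  have hsame : ∀ e, ¬ D e → G.head ε₂ e = G.head ε₁ e ∧ G.tail ε₂ e = G.tail ε₁ e := by
    intro e he
    have h2 : ε₂ e = ε₁ e := by
      by_contra hne
      exact he (fun h' => hne h'.symm)
    simp [MGraph.head, MGraph.tail, h2]
  have key : ∀ v, (Finset.univ.filter (fun e => D e ∧ G.head ε₁ e = v)).card
      = (Finset.univ.filter (fun e => D e ∧ G.tail ε₁ e = v)).card := by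
    intro v
    have hv := h v
    simpa [Nat.card_eq_fintype_card, Fintype.card_subtype, MGraph.diffSet,
      Set.mem_setOf_eq, hD] using hv
  set A := Finset.univ.filter (fun e => D e ∧ G.head ε₁ e ∈ S) with hA
  set B := Finset.univ.filter (fun e => D e ∧ G.tail ε₁ e ∈ S) with hB
  set T := Finset.univ.filter (fun v => v ∈ S) with hT
  have hAcard : A.card = ∑ v ∈ T, (A.filter (fun e => G.head ε₁ e = v)).card := by
    apply Finset.card_eq_sum_card_fiberwise
    intro e he
    simp only [Finset.mem_coe, hA, Finset.mem_filter, Finset.mem_univ, true_and] at he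
    simp [hT, he.2]
  have hBcard : B.card = ∑ v ∈ T, (B.filter (fun e => G.tail ε₁ e = v)).card := by
    apply Finset.card_eq_sum_card_fiberwise
    intro e he
    simp only [Finset.mem_coe, hB, Finset.mem_filter, Finset.mem_univ, true_and] at he
    simp [hT, he.2]
  have hcards : A.card = B.card := by
    rw [hAcard, hBcard]
    apply Finset.sum_congr rfl
    intro v hv
    simp only [hT, Finset.mem_filter, Finset.mem_univ, true_and] at hv
    have hAv : A.filter (fun e => G.head ε₁ e = v)
        = Finset.univ.filter (fun e => D e ∧ G.head ε₁ e = v) := by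
      ext e
      simp only [hA, Finset.mem_filter, Finset.mem_univ, true_and]
      constructor
      · rintro ⟨⟨h1, _⟩, h3⟩; exact ⟨h1, h3⟩
      · rintro ⟨h1, h3⟩; exact ⟨⟨h1, h3 ▸ hv⟩, h3⟩
    have hBv : B.filter (fun e => G.tail ε₁ e = v)
        = Finset.univ.filter (fun e => D e ∧ G.tail ε₁ e = v) := by
      ext e
      simp only [hB, Finset.mem_filter, Finset.mem_univ, true_and]
      constructor
      · rintro ⟨⟨h1, _⟩, h3⟩; exact ⟨h1, h3⟩
      · rintro ⟨h1, h3⟩; exact ⟨⟨h1, h3 ▸ hv⟩, h3⟩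
    rw [hAv, hBv, key]
  have hBA : B ⊆ A := by
    intro e he
    simp only [hB, Finset.mem_filter, Finset.mem_univ, true_and] at he
    obtain ⟨hde, hte⟩ := he
    have hs := hswap e hde
    have : G.head ε₂ e ∈ S := hs.1 ▸ hte
    have := hcut e this
    simp only [hA, Finset.mem_filter, Finset.mem_univ, true_and]
    exact ⟨hde, hs.2 ▸ this⟩
  have hAB : A = B := (Finset.eq_of_subset_of_card_le hBA hcards.le).symm
  -- now derive a directed cut for ε₁ at S
  apply h₁
  refine ⟨S, ⟨e₀, ?_, ?_⟩, ?_⟩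
  · -- tail ε₁ e₀ ∈ S
    by_cases hde : D e₀
    · exfalso
      have hs := hswap e₀ hde
      have he₀A : e₀ ∈ A := by
        simp only [hA, Finset.mem_filter, Finset.mem_univ, true_and]
        exact ⟨hde, hs.2.symm ▸ he₀t⟩
      rw [hAB] at he₀A
      simp only [hB, Finset.mem_filter, Finset.mem_univ, true_and] at he₀A
      exact he₀h (hs.1 ▸ he₀A.2)
    · exact (hsame e₀ hde).2 ▸ he₀t
  · -- head ε₁ e₀ ∉ S
    by_cases hde : D e₀
    · exfalso
      have hs := hswap e₀ hde
      have he₀A : e₀ ∈ A := by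
        simp only [hA, Finset.mem_filter, Finset.mem_univ, true_and]
        exact ⟨hde, hs.2.symm ▸ he₀t⟩
      rw [hAB] at he₀A
      simp only [hB, Finset.mem_filter, Finset.mem_univ, true_and] at he₀A
      exact he₀h (hs.1 ▸ he₀A.2)
    · exact (hsame e₀ hde).1 ▸ he₀h
  · intro e hhe
    by_cases hde : D e
    · have he₀A : e ∈ A := by
        simp only [hA, Finset.mem_filter, Finset.mem_univ, true_and]
        exact ⟨hde, hhe⟩
      rw [hAB] at he₀A
      simp only [hB, Finset.mem_filter, Finset.mem_univ, true_and] at he₀A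
      exact he₀A.2
    · have hs := hsame e hde
      have := hcut e (hs.1 ▸ hhe)
      exact hs.2 ▸ this
end

section
/- Cut equivalence is an equivalence relation on the set of orientations of G, and it restricts to an equivalence relation on the set of acyclic orientations. -/
/-!  Multigraphs with labelled edges: an edge `e` has endpoints `fst e`, `snd e`.
An orientation is `ε : E → Bool`, where `ε e = true` means `e` is directed
from `fst e` (tail) to `snd e` (head), and `false` means the reverse. -/

structure LabGraph (V E : Type) where
  fst : E → V
  snd : E → V

namespace LabGraph

variable {V E : Type}

/-- Head (target) of edge `e` under orientation `ε`. -/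
def head (G : LabGraph V E) (ε : E → Bool) (e : E) : V := cond (ε e) (G.snd e) (G.fst e)

/-- Tail (source) of edge `e` under orientation `ε`. -/
def tail (G : LabGraph V E) (ε : E → Bool) (e : E) : V := cond (ε e) (G.fst e) (G.snd e)

/-- Directed reachability under `ε`. -/
def Reaches (G : LabGraph V E) (ε : E → Bool) (u v : V) : Prop :=
  Relation.ReflTransGen (fun a b => ∃ e, G.tail ε e = a ∧ G.head ε e = b) u v

/-- Directed reachability avoiding the edge `e₀` (i.e. in `G - e₀`). -/
def ReachesAvoiding (G : LabGraph V E) (ε : E → Bool) (e₀ : E) (u v : V) : Prop :=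
  Relation.ReflTransGen (fun a b => ∃ e, e ≠ e₀ ∧ G.tail ε e = a ∧ G.head ε e = b) u v

/-- `ε` has a directed cut: a set `S` of vertices with at least one edge leaving `S`
and no edge entering `S`. -/
def HasDirCut (G : LabGraph V E) (ε : E → Bool) : Prop :=
  ∃ S : Set V, (∃ e, G.tail ε e ∈ S ∧ G.head ε e ∉ S) ∧
    ∀ e, G.head ε e ∈ S → G.tail ε e ∈ S

/-- A totally cyclic orientation: one without directed cuts. -/
def TotallyCyclic (G : LabGraph V E) (ε : E → Bool) : Prop := ¬ G.HasDirCut ε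

/-- An acyclic orientation: no directed cycle, i.e. no edge whose head reaches its tail. -/
def Acyclic (G : LabGraph V E) (ε : E → Bool) : Prop :=
  ∀ e, ¬ G.Reaches ε (G.head ε e) (G.tail ε e)

/-- The set of edges `D` induces a directed Eulerian subgraph w.r.t. `ε`:
in-degree equals out-degree at each vertex. -/
def IsEulerianSet (G : LabGraph V E) (ε : E → Bool) (D : Set E) : Prop :=
  ∀ v, Nat.card {e : E // e ∈ D ∧ G.head ε e = v} =
       Nat.card {e : E // e ∈ D ∧ G.tail ε e = v}

/-- The set of edges on which two orientations differ. -/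
def diffSet (ε₁ ε₂ : E → Bool) : Set E := {e | ε₁ e ≠ ε₂ e}

/-- Eulerian equivalence of orientations. -/
def EulerianEquiv (G : LabGraph V E) (ε₁ ε₂ : E → Bool) : Prop :=
  G.IsEulerianSet ε₁ (diffSet ε₁ ε₂)

/-- The edges crossing between `S` and its complement. -/
def cutEdges (G : LabGraph V E) (S : Set V) : Set E :=
  {e | (G.fst e ∈ S ∧ G.snd e ∉ S) ∨ (G.fst e ∉ S ∧ G.snd e ∈ S)}

/-- A bond: a minimal nonempty edge cut. -/
def IsBond (G : LabGraph V E) (D : Set E) : Prop :=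
  (∃ S, D = G.cutEdges S) ∧ D.Nonempty ∧
    ∀ D', (∃ S, D' = G.cutEdges S) → D'.Nonempty → D' ⊆ D → D' = D

/-- A directed bond w.r.t. `ε`: a bond all of whose edges go from `S` to its complement. -/
def IsDirectedBond (G : LabGraph V E) (ε : E → Bool) (D : Set E) : Prop :=
  G.IsBond D ∧ ∃ S, D = G.cutEdges S ∧ ∀ e ∈ D, G.tail ε e ∈ S

/-- A directed cut: a disjoint union of directed bonds. -/
def IsDirectedCut (G : LabGraph V E) (ε : E → Bool) (D : Set E) : Prop :=
  ∃ (n : ℕ) (B : Fin n → Set E), (∀ i, G.IsDirectedBond ε (B i)) ∧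
    (Pairwise fun i j => Disjoint (B i) (B j)) ∧ D = ⋃ i, B i

/-- Cut equivalence of orientations. -/
def CutEquiv (G : LabGraph V E) (ε₁ ε₂ : E → Bool) : Prop :=
  G.IsDirectedCut ε₁ (diffSet ε₁ ε₂) ∨ G.IsDirectedCut ε₂ (diffSet ε₁ ε₂)

/-- Eulerian-cut equivalence of orientations: the differing edges split into an
edge-disjoint union of a directed Eulerian subgraph and a directed cut. -/
def EulCutEquiv (G : LabGraph V E) (ε₁ ε₂ : E → Bool) : Prop :=
  (∃ D₁ D₂ : Set E, Disjoint D₁ D₂ ∧ diffSet ε₁ ε₂ = D₁ ∪ D₂ ∧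
      G.IsEulerianSet ε₁ D₁ ∧ G.IsDirectedCut ε₁ D₂) ∨
  (∃ D₁ D₂ : Set E, Disjoint D₁ D₂ ∧ diffSet ε₁ ε₂ = D₁ ∪ D₂ ∧
      G.IsEulerianSet ε₂ D₁ ∧ G.IsDirectedCut ε₂ D₂)

/-- Undirected connectivity via the edges of `A` (spanning subgraph `(V, A)`). -/
def connRel (G : LabGraph V E) (A : Set E) : V → V → Prop :=
  Relation.EqvGen (fun u v => ∃ e ∈ A, (G.fst e = u ∧ G.snd e = v) ∨ (G.fst e = v ∧ G.snd e = u))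

/-- Number of connected components of the spanning subgraph `(V, A)`. -/
noncomputable def ncomp (G : LabGraph V E) (A : Set E) : ℕ :=
  Nat.card (Quot (G.connRel A))

def Connected (G : LabGraph V E) : Prop := ∀ u v : V, G.connRel Set.univ u v

/-- Rank of an edge set: `|V| - c(A)`. -/
noncomputable def rank (G : LabGraph V E) [Fintype V] (A : Set E) : ℕ :=
  Fintype.card V - G.ncomp A

/-- The Tutte polynomial (Whitney rank expansion), evaluated at `(x, y)`. -/
noncomputable def tutte (G : LabGraph V E) [Fintype V] [Fintype E] (x y : ℤ) : ℤ :=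
  ∑ A : Finset E, (x - 1) ^ (G.rank (Set.univ : Set E) - G.rank (A : Set E)) *
    (y - 1) ^ (A.card - G.rank (A : Set E))

/-- The Eulerian equivalence class (within totally cyclic orientations) of `ε`. -/
def eulClass (G : LabGraph V E) (ε : E → Bool) : Set (E → Bool) :=
  {ε' | G.TotallyCyclic ε' ∧ G.EulerianEquiv ε ε'}

/-- The number of Eulerian equivalence classes of totally cyclic orientations. -/
noncomputable def numEulClasses (G : LabGraph V E) : ℕ :=
  Nat.card {C : Set (E → Bool) // ∃ ε, G.TotallyCyclic ε ∧ C = G.eulClass ε}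

/-- The cut equivalence class (within acyclic orientations) of `ε`. -/
def cutClass (G : LabGraph V E) (ε : E → Bool) : Set (E → Bool) :=
  {ε' | G.Acyclic ε' ∧ G.CutEquiv ε ε'}

/-- The number of cut equivalence classes of acyclic orientations. -/
noncomputable def numCutClasses (G : LabGraph V E) : ℕ :=
  Nat.card {C : Set (E → Bool) // ∃ ε, G.Acyclic ε ∧ C = G.cutClass ε}

/-- Deletion of the edge `e`. -/
def deleteEdge (G : LabGraph V E) (e : E) : LabGraph V {f : E // f ≠ e} :=
  ⟨fun f => G.fst f.val, fun f => G.snd f.val⟩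

/-- Contraction of the edge `e`: identify its two endpoints and remove `e`. -/
def contractEdge (G : LabGraph V E) (e : E) :
    LabGraph (Quot fun a b => a = G.fst e ∧ b = G.snd e) {f : E // f ≠ e} :=
  ⟨fun f => Quot.mk _ (G.fst f.val), fun f => Quot.mk _ (G.snd f.val)⟩

/-- `e` is a bridge: its endpoints are disconnected in `G - e`. -/
def IsBridge (G : LabGraph V E) (e : E) : Prop :=
  ¬ G.connRel {f | f ≠ e} (G.fst e) (G.snd e)

def IsLoop (G : LabGraph V E) (e : E) : Prop := G.fst e = G.snd e

/-- A directed edge `e` is cycle flippable w.r.t. `ε` if there are directed paths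
both from its tail to its head and from its head to its tail in `G - e`. -/
def CycleFlippable (G : LabGraph V E) (ε : E → Bool) (e : E) : Prop :=
  G.ReachesAvoiding ε e (G.tail ε e) (G.head ε e) ∧
  G.ReachesAvoiding ε e (G.head ε e) (G.tail ε e)

/-- A directed cycle: a nonempty list of distinct edges, consecutively joined
head-to-tail, closing up. -/
def IsDirectedCycle (G : LabGraph V E) (ε : E → Bool) (C : List E) : Prop :=
  C ≠ [] ∧ C.Nodup ∧ C.Chain' (fun a b => G.head ε a = G.tail ε b) ∧
    ∀ h : C ≠ [], G.head ε (C.getLast h) = G.tail ε (C.head h)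

/-- `ε` is reduced w.r.t. the normal orientation `εN` and the edge order: for each
edge `e`, either `ε` agrees with `εN` on `e`, or no directed cycle through `e`
has all its other edges smaller than `e`. -/
def Reduced (G : LabGraph V E) [LinearOrder E] (εN ε : E → Bool) : Prop :=
  ∀ e, ε e = εN e ∨
    ¬ ∃ C : List E, G.IsDirectedCycle ε C ∧ e ∈ C ∧ ∀ f ∈ C, f ≠ e → f < e

/-- `T` is (the edge set of) a spanning tree of `G`. -/
def IsSpanningTree (G : LabGraph V E) [Fintype V] (T : Finset E) : Prop :=
  (∀ u v : V, G.connRel (↑T) u v) ∧ T.card + 1 = Fintype.card V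

/-- `e ∈ T` is internally active: it is the smallest edge of the fundamental cut it defines. -/
def InternallyActive (G : LabGraph V E) [Fintype V] [LinearOrder E] [DecidableEq E]
    (T : Finset E) (e : E) : Prop :=
  e ∈ T ∧ ∀ f, G.IsSpanningTree (insert f (T.erase e)) → e ≤ f

/-- `e ∉ T` is externally active: it is the smallest edge of the fundamental cycle of `T + e`. -/
def ExternallyActive (G : LabGraph V E) [Fintype V] [LinearOrder E] [DecidableEq E]
    (T : Finset E) (e : E) : Prop :=
  e ∉ T ∧ ∀ f ∈ T, G.IsSpanningTree (insert e (T.erase f)) → e ≤ f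

/-- `v` is a source of `(G, ε)`. -/
def IsSource (G : LabGraph V E) (ε : E → Bool) (v : V) : Prop :=
  ∀ e, G.head ε e ≠ v

end LabGraph

namespace LabGraph

variable {V E : Type}

lemma tail_head_cases' (G : LabGraph V E) (ε : E → Bool) (e : E) :
    (G.tail ε e = G.fst e ∧ G.head ε e = G.snd e) ∨
    (G.tail ε e = G.snd e ∧ G.head ε e = G.fst e) := by
  cases h : ε e <;> simp [LabGraph.tail, LabGraph.head, h]

lemma mem_cutEdges_iff' (G : LabGraph V E) (ε : E → Bool) (S : Set V) (e : E) :
    e ∈ G.cutEdges S ↔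
      ((G.tail ε e ∈ S ∧ G.head ε e ∉ S) ∨ (G.tail ε e ∉ S ∧ G.head ε e ∈ S)) := by
  rcases G.tail_head_cases' ε e with ⟨h1, h2⟩ | ⟨h1, h2⟩ <;>
    simp only [LabGraph.cutEdges, Set.mem_setOf_eq, ← h1, ← h2] <;> tauto

lemma cutEdges_compl (G : LabGraph V E) (S : Set V) : G.cutEdges Sᶜ = G.cutEdges S := by
  ext e; simp only [LabGraph.cutEdges, Set.mem_setOf_eq, Set.mem_compl_iff]; tauto

open scoped Classical

/-- A potential function certifying `D` as a directed cut. -/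
noncomputable def HasPot (G : LabGraph V E) (ε : E → Bool) (D : Set E) (f : V → ℤ) : Prop :=
  ∀ e, f (G.tail ε e) - f (G.head ε e) = if e ∈ D then 1 else 0

lemma connRel_const (G : LabGraph V E) {A : Set E} {W : Set V}
    (h : ∀ e ∈ A, (G.fst e ∈ W ↔ G.snd e ∈ W)) {u v : V} (huv : G.connRel A u v) :
    u ∈ W ↔ v ∈ W := by
  induction huv with
  | rel u v hr =>
    obtain ⟨e, he, ⟨h1, h2⟩ | ⟨h1, h2⟩⟩ := hr
    · rw [← h1, ← h2]; exact h e he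
    · rw [← h1, ← h2]; exact (h e he).symm
  | refl => exact Iff.rfl
  | symm _ _ _ ih => exact ih.symm
  | trans _ _ _ _ _ ih1 ih2 => exact ih1.trans ih2

lemma dirCut_empty (G : LabGraph V E) (ε : E → Bool) : G.IsDirectedCut ε ∅ := by
  refine ⟨0, Fin.elim0, fun i => i.elim0, fun i => i.elim0, ?_⟩
  simp

lemma dirCut_union (G : LabGraph V E) (ε : E → Bool) {B D : Set E}
    (hb : G.IsDirectedBond ε B) (hd : G.IsDirectedCut ε D) (hdisj : Disjoint B D) :
    G.IsDirectedCut ε (B ∪ D) := by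
  obtain ⟨m, Bs, h1, h2, rfl⟩ := hd
  refine ⟨m + 1, Fin.cons B Bs, ?_, ?_, ?_⟩
  · intro i
    induction i using Fin.cases with
    | zero => simpa using hb
    | succ j => simpa using h1 j
  · intro i j hij
    induction i using Fin.cases with
    | zero =>
      induction j using Fin.cases with
      | zero => exact absurd rfl hij
      | succ j' =>
        simp only [Fin.cons_zero, Fin.cons_succ]
        exact hdisj.mono_right (Set.subset_iUnion Bs j')
    | succ i' =>
      induction j using Fin.cases with
      | zero =>
        simp only [Fin.cons_zero, Fin.cons_succ]
        exact (hdisj.mono_right (Set.subset_iUnion Bs i')).symm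
      | succ j' =>
        simp only [Fin.cons_succ]
        exact h2 (fun hc => hij (by rw [hc]))
  · ext x
    simp only [Set.mem_union, Set.mem_iUnion, Fin.exists_fin_succ_pi]
    constructor
    · rintro (hx | ⟨i, hi⟩)
      · exact ⟨0, by simpa using hx⟩
      · exact ⟨i.succ, by simpa using hi⟩
    · rintro ⟨i, hi⟩
      induction i using Fin.cases with
      | zero => exact Or.inl (by simpa using hi)
      | succ j => exact Or.inr ⟨j, by simpa using hi⟩

lemma dirCut_pot (G : LabGraph V E) (ε : E → Bool) (D : Set E)
    (h : G.IsDirectedCut ε D) : ∃ f, G.HasPot ε D f := by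
  obtain ⟨n, B, hbond, hdisj, rfl⟩ := h
  choose S hS htail using fun i => (hbond i).2
  refine ⟨fun v => ∑ i : Fin n, if v ∈ S i then (1 : ℤ) else 0, fun e => ?_⟩
  rw [← Finset.sum_sub_distrib]
  have hterm : ∀ i : Fin n,
      ((if G.tail ε e ∈ S i then (1:ℤ) else 0) - (if G.head ε e ∈ S i then (1:ℤ) else 0))
        = if e ∈ B i then 1 else 0 := by
    intro i
    by_cases he : e ∈ B i
    · have ht := htail i e he
      have hmem := (G.mem_cutEdges_iff' ε (S i) e).mp (by rw [← hS i]; exact he)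
      rcases hmem with ⟨h1, h2⟩ | ⟨h1, h2⟩
      · rw [if_pos h1, if_neg h2, if_pos he]
        omega
      · exact absurd ht h1
    · have hnc : ¬ e ∈ G.cutEdges (S i) := by rw [← hS i]; exact he
      rw [G.mem_cutEdges_iff' ε (S i) e] at hnc
      rw [if_neg he]
      by_cases h1 : G.tail ε e ∈ S i
      · rw [if_pos h1, if_pos (show G.head ε e ∈ S i by tauto)]; ring
      · rw [if_neg h1, if_neg (show ¬ G.head ε e ∈ S i by tauto)]; ring
  rw [Finset.sum_congr rfl (fun i _ => hterm i)]
  by_cases he : e ∈ ⋃ i, B i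
  · obtain ⟨i, hi⟩ := Set.mem_iUnion.mp he
    rw [if_pos he,
      Finset.sum_eq_single i
        (fun j _ hji => if_neg (fun hj => Set.disjoint_left.mp (hdisj hji) hj hi))
        (fun h => absurd (Finset.mem_univ i) h),
      if_pos hi]
  · rw [if_neg he]
    exact Finset.sum_eq_zero
      (fun i _ => if_neg (fun hi => he (Set.mem_iUnion.mpr ⟨i, hi⟩)))

end LabGraph
namespace LabGraph

variable {V E : Type}

open scoped Classical

lemma exists_dir_bond [Fintype E] (G : LabGraph V E) (ε : E → Bool) (D : Set E) (f : V → ℤ)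
    (hf : G.HasPot ε D f) (hne : D.Nonempty) :
    ∃ (B : Set E) (f' : V → ℤ), G.IsDirectedBond ε B ∧ B ⊆ D ∧ B.Nonempty ∧
      G.HasPot ε (D \ B) f' := by
  -- the maximum potential value of a tail of a D-edge
  have hTne : (D.toFinset.image (fun e => f (G.tail ε e))).Nonempty := by
    obtain ⟨e, he⟩ := hne
    exact ⟨f (G.tail ε e), Finset.mem_image_of_mem _ (Set.mem_toFinset.mpr he)⟩
  obtain ⟨K, hKmem, hmaxall⟩ : ∃ K, K ∈ D.toFinset.image (fun e => f (G.tail ε e)) ∧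
      ∀ x ∈ D.toFinset.image (fun e => f (G.tail ε e)), x ≤ K :=
    ⟨_, Finset.max'_mem _ hTne, fun x hx => Finset.le_max' _ x hx⟩
  have hmax : ∀ e ∈ D, f (G.tail ε e) ≤ K := fun e he =>
    hmaxall _ (Finset.mem_image_of_mem _ (Set.mem_toFinset.mpr he))
  obtain ⟨e₀, he₀m, he₀K⟩ := Finset.mem_image.mp hKmem
  have he₀D : e₀ ∈ D := Set.mem_toFinset.mp he₀m
  set S : Set V := {v | K ≤ f v} with hSdef
  set L := G.cutEdges S with hLdef
  have hfD : ∀ e ∈ D, f (G.tail ε e) = f (G.head ε e) + 1 := by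
    intro e he; have := hf e; rw [if_pos he] at this; omega
  have hfnD : ∀ e ∉ D, f (G.tail ε e) = f (G.head ε e) := by
    intro e he; have := hf e; rw [if_neg he] at this; omega
  have hLD : ∀ e ∈ L, e ∈ D ∧ G.tail ε e ∈ S ∧ G.head ε e ∉ S := by
    intro e he
    rw [hLdef, G.mem_cutEdges_iff' ε] at he
    by_cases hd : e ∈ D
    · have h1 := hfD e hd
      have h2 := hmax e hd
      refine ⟨hd, ?_⟩
      rcases he with ⟨ha, hb⟩ | ⟨ha, hb⟩
      · exact ⟨ha, hb⟩
      · exfalso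
        simp only [hSdef, Set.mem_setOf_eq, not_le] at ha hb
        omega
    · exfalso
      have h1 := hfnD e hd
      simp only [hSdef, Set.mem_setOf_eq, not_le] at he
      rcases he with ⟨ha, hb⟩ | ⟨ha, hb⟩ <;> omega
  have hnotL : ∀ e ∉ L, (G.fst e ∈ S ↔ G.snd e ∈ S) := by
    intro e he
    rw [hLdef] at he
    simp only [LabGraph.cutEdges, Set.mem_setOf_eq] at he
    tauto
  -- C₀ : the component of tail e₀ in G - L
  set C₀ : Set V := {v | G.connRel {e | e ∉ L} (G.tail ε e₀) v} with hC₀def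
  have ht₀S : G.tail ε e₀ ∈ S := by
    simp only [hSdef, Set.mem_setOf_eq, he₀K, le_refl]
  have hC₀S : C₀ ⊆ S := by
    intro v hv
    exact (G.connRel_const (fun e he => hnotL e he) hv).mp ht₀S
  have hstep : ∀ e ∉ L, (G.fst e ∈ C₀ ↔ G.snd e ∈ C₀) := by
    intro e he
    constructor
    · intro h
      exact Relation.EqvGen.trans _ _ _ h
        (Relation.EqvGen.rel _ _ ⟨e, he, Or.inl ⟨rfl, rfl⟩⟩)
    · intro h
      exact Relation.EqvGen.trans _ _ _ h
        (Relation.EqvGen.rel _ _ ⟨e, he, Or.inr ⟨rfl, rfl⟩⟩)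
  have hC₀cut : ∀ e ∈ G.cutEdges C₀, e ∈ L := by
    intro e he
    by_contra hc
    have := hstep e hc
    simp only [LabGraph.cutEdges, Set.mem_setOf_eq] at he
    tauto
  have hdir : ∀ e ∈ G.cutEdges C₀, G.tail ε e ∈ C₀ ∧ G.head ε e ∉ C₀ := by
    intro e he
    have heL := hC₀cut e he
    have hh : G.head ε e ∉ S := (hLD e heL).2.2
    have hhC : G.head ε e ∉ C₀ := fun h => hh (hC₀S h)
    rw [G.mem_cutEdges_iff' ε] at he
    tauto
  have he₀C : e₀ ∈ G.cutEdges C₀ := by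
    rw [G.mem_cutEdges_iff' ε]
    left
    refine ⟨Relation.EqvGen.refl _, fun h => ?_⟩
    have hh := hC₀S h
    have h1 := hfD e₀ he₀D
    simp only [hSdef, Set.mem_setOf_eq] at hh
    omega
  -- pick a minimum-cardinality nonempty cut inside cutEdges C₀
  set N : Set ℕ := {k | ∃ T : Set V, (G.cutEdges T).Nonempty ∧
      G.cutEdges T ⊆ G.cutEdges C₀ ∧ (G.cutEdges T).ncard = k} with hNdef
  have hNne : N.Nonempty := ⟨(G.cutEdges C₀).ncard, C₀, ⟨e₀, he₀C⟩, subset_rfl, rfl⟩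
  obtain ⟨W₀, hW₀ne, hW₀sub, hW₀card⟩ := Nat.sInf_mem hNne
  have hmincard : ∀ T : Set V, (G.cutEdges T).Nonempty → G.cutEdges T ⊆ G.cutEdges C₀ →
      (G.cutEdges W₀).ncard ≤ (G.cutEdges T).ncard := by
    intro T h1 h2
    rw [hW₀card]
    exact Nat.sInf_le ⟨T, h1, h2, rfl⟩
  -- normalize the side of W₀ so that C₀ ⊆ W
  have hWconst : ∀ v ∈ C₀, (G.tail ε e₀ ∈ W₀ ↔ v ∈ W₀) := by
    intro v hv
    refine G.connRel_const (fun e he => ?_) hv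
    have hB : e ∉ G.cutEdges W₀ := fun hc => he (hC₀cut e (hW₀sub hc))
    simp only [LabGraph.cutEdges, Set.mem_setOf_eq] at hB
    tauto
  obtain ⟨W, hWeq, hWC⟩ : ∃ W : Set V, G.cutEdges W = G.cutEdges W₀ ∧ C₀ ⊆ W := by
    by_cases h : G.tail ε e₀ ∈ W₀
    · exact ⟨W₀, rfl, fun v hv => (hWconst v hv).mp h⟩
    · exact ⟨W₀ᶜ, G.cutEdges_compl W₀, fun v hv hv' => h ((hWconst v hv).mpr hv')⟩
  have hBsub : G.cutEdges W ⊆ G.cutEdges C₀ := hWeq ▸ hW₀sub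
  have hBne : (G.cutEdges W).Nonempty := hWeq ▸ hW₀ne
  have hBdir : ∀ e ∈ G.cutEdges W, G.tail ε e ∈ W ∧ G.head ε e ∉ W := by
    intro e he
    have h1 := hdir e (hBsub he)
    have ht : G.tail ε e ∈ W := hWC h1.1
    rw [G.mem_cutEdges_iff' ε] at he
    tauto
  have hbond : G.IsDirectedBond ε (G.cutEdges W) := by
    refine ⟨⟨⟨W, rfl⟩, hBne, ?_⟩, W, rfl, fun e he => (hBdir e he).1⟩
    rintro D' ⟨T, rfl⟩ hD'ne hsub
    refine Set.eq_of_subset_of_ncard_le hsub ?_ (Set.toFinite _)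
    rw [hWeq]
    exact hmincard T hD'ne (hsub.trans hBsub)
  have hBD : G.cutEdges W ⊆ D := fun e he => (hLD e (hC₀cut e (hBsub he))).1
  refine ⟨G.cutEdges W, fun v => f v - (if v ∈ W then 1 else 0), hbond, hBD, hBne, ?_⟩
  intro e
  dsimp only
  by_cases he : e ∈ G.cutEdges W
  · obtain ⟨ht, hh⟩ := hBdir e he
    have heD : e ∈ D := hBD he
    have h1 := hfD e heD
    have : e ∉ D \ G.cutEdges W := fun h => h.2 he
    rw [if_neg this, if_pos ht, if_neg hh]
    omega
  · have hcross : (G.tail ε e ∈ W ↔ G.head ε e ∈ W) := by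
      rw [G.mem_cutEdges_iff' ε] at he
      tauto
    have h1 := hf e
    simp only [Set.mem_diff]
    split_ifs at h1 ⊢ <;> first | omega | tauto

lemma pot_dirCut [Fintype E] (G : LabGraph V E) (ε : E → Bool) :
    ∀ (n : ℕ) (D : Set E) (f : V → ℤ), D.ncard ≤ n → G.HasPot ε D f →
      G.IsDirectedCut ε D := by
  intro n
  induction n with
  | zero =>
    intro D f h _
    have : D = ∅ := by
      rw [← Set.ncard_eq_zero (Set.toFinite D)]
      omega
    rw [this]
    exact G.dirCut_empty ε
  | succ n ih =>
    intro D f hle hf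
    rcases D.eq_empty_or_nonempty with rfl | hne
    · exact G.dirCut_empty ε
    obtain ⟨B, f', hbond, hBD, hBne, hf'⟩ := G.exists_dir_bond ε D f hf hne
    have hcard : (D \ B).ncard ≤ n := by
      have h1 := Set.ncard_diff hBD (Set.toFinite B)
      have h2 : 0 < B.ncard := (Set.ncard_pos (Set.toFinite B)).mpr hBne
      omega
    have hrest := ih (D \ B) f' hcard hf'
    have hD : D = B ∪ (D \ B) := (Set.union_diff_cancel hBD).symm
    rw [hD]
    exact G.dirCut_union ε hbond hrest Set.disjoint_sdiff_right

end LabGraph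
namespace LabGraph

variable {V E : Type}

open scoped Classical

lemma diffSet_comm (ε₁ ε₂ : E → Bool) : diffSet ε₂ ε₁ = diffSet ε₁ ε₂ := by
  ext e; simp only [diffSet, Set.mem_setOf_eq]; exact ne_comm

lemma tail_head_flip (G : LabGraph V E) {ε₁ ε₂ : E → Bool} {e : E} (h : ε₁ e ≠ ε₂ e) :
    G.tail ε₁ e = G.head ε₂ e ∧ G.head ε₁ e = G.tail ε₂ e := by
  cases ha : ε₁ e <;> cases hb : ε₂ e <;>
    simp_all [LabGraph.tail, LabGraph.head]

lemma tail_head_eq (G : LabGraph V E) {ε₁ ε₂ : E → Bool} {e : E} (h : ε₁ e = ε₂ e) :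
    G.tail ε₁ e = G.tail ε₂ e ∧ G.head ε₁ e = G.head ε₂ e := by
  simp [LabGraph.tail, LabGraph.head, h]

lemma pot_flip (G : LabGraph V E) {ε₁ ε₂ : E → Bool} {f : V → ℤ}
    (hf : G.HasPot ε₂ (diffSet ε₁ ε₂) f) :
    G.HasPot ε₁ (diffSet ε₁ ε₂) (-f) := by
  intro e
  have h2 := hf e
  by_cases he : e ∈ diffSet ε₁ ε₂
  · have hne : ε₁ e ≠ ε₂ e := he
    obtain ⟨ht, hh⟩ := G.tail_head_flip hne
    rw [if_pos he] at h2 ⊢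
    rw [ht, hh]
    simp only [Pi.neg_apply]
    omega
  · have heq : ε₁ e = ε₂ e := not_not.mp he
    obtain ⟨ht, hh⟩ := G.tail_head_eq heq
    rw [if_neg he] at h2 ⊢
    rw [ht, hh]
    simp only [Pi.neg_apply]
    omega

lemma pot_trans (G : LabGraph V E) {ε₁ ε₂ ε₃ : E → Bool} {f g : V → ℤ}
    (hf : G.HasPot ε₁ (diffSet ε₁ ε₂) f) (hg : G.HasPot ε₂ (diffSet ε₂ ε₃) g) :
    G.HasPot ε₁ (diffSet ε₁ ε₃) (f + g) := by
  intro e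
  have h1 := hf e
  have h2 := hg e
  simp only [Pi.add_apply]
  by_cases a : ε₁ e = ε₂ e <;> by_cases b : ε₂ e = ε₃ e
  · have hc : ε₁ e = ε₃ e := a.trans b
    rw [if_neg (show e ∉ diffSet ε₁ ε₂ from not_not.mpr a)] at h1
    rw [if_neg (show e ∉ diffSet ε₂ ε₃ from not_not.mpr b)] at h2
    rw [if_neg (show e ∉ diffSet ε₁ ε₃ from not_not.mpr hc)]
    obtain ⟨ht, hh⟩ := G.tail_head_eq a
    rw [← ht, ← hh] at h2
    omega
  · have hc : ε₁ e ≠ ε₃ e := fun h => b (a.symm.trans h)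
    rw [if_neg (show e ∉ diffSet ε₁ ε₂ from not_not.mpr a)] at h1
    rw [if_pos (show e ∈ diffSet ε₂ ε₃ from b)] at h2
    rw [if_pos (show e ∈ diffSet ε₁ ε₃ from hc)]
    obtain ⟨ht, hh⟩ := G.tail_head_eq a
    rw [← ht, ← hh] at h2
    omega
  · have hc : ε₁ e ≠ ε₃ e := fun h => a (h.trans b.symm)
    rw [if_pos (show e ∈ diffSet ε₁ ε₂ from a)] at h1
    rw [if_neg (show e ∉ diffSet ε₂ ε₃ from not_not.mpr b)] at h2
    rw [if_pos (show e ∈ diffSet ε₁ ε₃ from hc)]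
    obtain ⟨ht, hh⟩ := G.tail_head_flip a
    rw [← ht, ← hh] at h2
    omega
  · have hc : ε₁ e = ε₃ e := by
      cases h1' : ε₁ e <;> cases h2' : ε₂ e <;> cases h3' : ε₃ e <;> simp_all
    rw [if_pos (show e ∈ diffSet ε₁ ε₂ from a)] at h1
    rw [if_pos (show e ∈ diffSet ε₂ ε₃ from b)] at h2
    rw [if_neg (show e ∉ diffSet ε₁ ε₃ from not_not.mpr hc)]
    obtain ⟨ht, hh⟩ := G.tail_head_flip a
    rw [← ht, ← hh] at h2
    omega

lemma acyclic_of_pot (G : LabGraph V E) {ε₁ ε₂ : E → Bool} {f : V → ℤ}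
    (hf : G.HasPot ε₂ (diffSet ε₁ ε₂) f) (h1 : G.Acyclic ε₁) : G.Acyclic ε₂ := by
  have key : ∀ u v, G.Reaches ε₂ u v →
      f v ≤ f u ∧ (f v = f u → G.Reaches ε₁ u v) := by
    intro u v h
    induction h with
    | refl => exact ⟨le_rfl, fun _ => Relation.ReflTransGen.refl⟩
    | @tail b c hab hbc ih =>
      obtain ⟨e, hte, hhe⟩ := hbc
      have h0 := hf e
      have hfc : f c ≤ f b := by
        rw [hte, hhe] at h0
        split_ifs at h0 <;> omega
      refine ⟨hfc.trans ih.1, fun hcu => ?_⟩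
      have hcb : f c = f b := le_antisymm hfc (by have := ih.1; omega)
      have hbu : f b = f u := by omega
      have hnd : e ∉ diffSet ε₁ ε₂ := by
        intro hd
        rw [hte, hhe, if_pos hd] at h0
        omega
      have heq : ε₁ e = ε₂ e := not_not.mp hnd
      obtain ⟨ht, hh⟩ := G.tail_head_eq heq
      exact Relation.ReflTransGen.tail (ih.2 hbu) ⟨e, ht.trans hte, hh.trans hhe⟩
  intro e hre
  obtain ⟨hle, heq⟩ := key _ _ hre
  have h0 := hf e
  by_cases hd : e ∈ diffSet ε₁ ε₂
  · rw [if_pos hd] at h0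
    omega
  · rw [if_neg hd] at h0
    have hr1 := heq (by omega)
    have heo : ε₁ e = ε₂ e := not_not.mp hd
    obtain ⟨ht, hh⟩ := G.tail_head_eq heo
    rw [← ht, ← hh] at hr1
    exact h1 e hr1

lemma cutEquiv_pot [Fintype V] [Fintype E] (G : LabGraph V E) {ε₁ ε₂ : E → Bool}
    (h : G.CutEquiv ε₁ ε₂) : ∃ f, G.HasPot ε₁ (diffSet ε₁ ε₂) f := by
  rcases h with h | h
  · exact G.dirCut_pot ε₁ _ h
  · obtain ⟨f, hf⟩ := G.dirCut_pot ε₂ _ h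
    exact ⟨-f, G.pot_flip hf⟩

end LabGraph

/-- Cut equivalence is an equivalence relation on orientations, and it
restricts to the acyclic orientations. -/
theorem stmt3 {V E : Type} [Fintype V] [Fintype E] (G : LabGraph V E) :
    Equivalence (G.CutEquiv) ∧
      ∀ ε₁ ε₂ : E → Bool, G.Acyclic ε₁ → G.CutEquiv ε₁ ε₂ → G.Acyclic ε₂ := by
  classical
  constructor
  · refine ⟨?_, ?_, ?_⟩
    · intro ε
      refine Or.inl ?_
      have hd : LabGraph.diffSet ε ε = (∅ : Set E) := by
        ext e; simp [LabGraph.diffSet]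
      rw [hd]
      exact G.dirCut_empty ε
    · intro ε₁ ε₂ h
      unfold LabGraph.CutEquiv at h ⊢
      rw [LabGraph.diffSet_comm]
      exact h.symm
    · intro ε₁ ε₂ ε₃ h12 h23
      obtain ⟨f, hf⟩ := G.cutEquiv_pot h12
      obtain ⟨g, hg⟩ := G.cutEquiv_pot h23
      exact Or.inl (G.pot_dirCut ε₁ _ _ (f + g) le_rfl (G.pot_trans hf hg))
  · intro ε₁ ε₂ h1 h12
    have h' : ∃ f, G.HasPot ε₂ (LabGraph.diffSet ε₁ ε₂) f := by
      rcases h12 with h | h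
      · obtain ⟨f, hf⟩ := G.dirCut_pot ε₁ _ h
        have hf' : G.HasPot ε₁ (LabGraph.diffSet ε₂ ε₁) f := by
          rw [LabGraph.diffSet_comm]; exact hf
        have h2 := G.pot_flip (ε₁ := ε₂) (ε₂ := ε₁) hf'
        rw [LabGraph.diffSet_comm] at h2
        exact ⟨-f, h2⟩
      · exact G.dirCut_pot ε₂ _ h
    obtain ⟨f, hf⟩ := h'
    exact G.acyclic_of_pot hf h1
end

section
/- The cycle-flippability of a fixed edge is invariant on Eulerian equivalence classes: if ε and ε′ are Eulerian equivalent totally cyclic orientations with ε(e) = ε′(e), then e is cycle flippable relative to ε if and only if e is cycle flippable relative to ε′. -/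
namespace StmtFive

open LabGraph Relation Finset

variable {V E : Type}

lemma flip_head (G : LabGraph V E) {ε ε' : E → Bool} {g : E} (h : ε g ≠ ε' g) :
    G.head ε' g = G.tail ε g := by
  have h' : ε' g = !ε g := by cases hg : ε g <;> cases hg' : ε' g <;> simp_all
  simp only [LabGraph.head, LabGraph.tail, h']
  cases ε g <;> rfl

lemma flip_tail (G : LabGraph V E) {ε ε' : E → Bool} {g : E} (h : ε g ≠ ε' g) :
    G.tail ε' g = G.head ε g := by
  have h' : ε' g = !ε g := by cases hg : ε g <;> cases hg' : ε' g <;> simp_all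
  simp only [LabGraph.head, LabGraph.tail, h']
  cases ε g <;> rfl

lemma natcard_filter {α : Type} [Fintype α] (p : α → Prop) [DecidablePred p] :
    Nat.card {x // p x} = (Finset.univ.filter p).card := by
  simp [Nat.card_eq_fintype_card, Fintype.card_subtype]

/-- In an Eulerian edge set, the head of each edge reaches its tail within the set. -/
lemma eulerian_head_reaches_tail [Fintype V] [Fintype E] (G : LabGraph V E) (ε : E → Bool)
    (D : Set E) (hD : G.IsEulerianSet ε D) {f : E} (hf : f ∈ D) :
    Relation.ReflTransGen (fun a b => ∃ g, g ∈ D ∧ G.tail ε g = a ∧ G.head ε g = b)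
      (G.head ε f) (G.tail ε f) := by
  classical
  set R : V → V → Prop := fun a b => ∃ g, g ∈ D ∧ G.tail ε g = a ∧ G.head ε g = b with hR
  set S : Set V := {v | Relation.ReflTransGen R (G.head ε f) v} with hS
  set A : Finset E := Finset.univ.filter (fun g => g ∈ D ∧ G.tail ε g ∈ S) with hA
  set B : Finset E := Finset.univ.filter (fun g => g ∈ D ∧ G.head ε g ∈ S) with hB
  have hAB : A ⊆ B := by
    intro g hg
    simp only [hA, hB, Finset.mem_filter, Finset.mem_univ, true_and] at hg ⊢
    exact ⟨hg.1, hg.2.tail ⟨g, hg.1, rfl, rfl⟩⟩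
  have hcards : ∀ v : V,
      (Finset.univ.filter (fun g => g ∈ D ∧ G.head ε g = v)).card =
      (Finset.univ.filter (fun g => g ∈ D ∧ G.tail ε g = v)).card := by
    intro v
    have := hD v
    rwa [natcard_filter, natcard_filter] at this
  set Sfin : Finset V := Finset.univ.filter (· ∈ S) with hSfin
  have hBcard : B.card = ∑ v ∈ Sfin, (Finset.univ.filter (fun g => g ∈ D ∧ G.head ε g = v)).card := by
    rw [Finset.card_eq_sum_card_fiberwise (f := fun g => G.head ε g) (t := Sfin)
      (fun g hg => by
        simp only [hB, Finset.mem_coe, Finset.mem_filter, Finset.mem_univ, true_and] at hg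
        simp [hSfin, hg.2])]
    refine Finset.sum_congr rfl (fun v hv => ?_)
    congr 1
    ext g
    simp only [hB, hSfin, Finset.mem_filter, Finset.mem_univ, true_and] at hv ⊢
    constructor
    · rintro ⟨⟨h1, h2⟩, h3⟩; exact ⟨h1, h3⟩
    · rintro ⟨h1, h3⟩; exact ⟨⟨h1, h3 ▸ hv⟩, h3⟩
  have hAcard : A.card = ∑ v ∈ Sfin, (Finset.univ.filter (fun g => g ∈ D ∧ G.tail ε g = v)).card := by
    rw [Finset.card_eq_sum_card_fiberwise (f := fun g => G.tail ε g) (t := Sfin)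
      (fun g hg => by
        simp only [hA, Finset.mem_coe, Finset.mem_filter, Finset.mem_univ, true_and] at hg
        simp [hSfin, hg.2])]
    refine Finset.sum_congr rfl (fun v hv => ?_)
    congr 1
    ext g
    simp only [hA, hSfin, Finset.mem_filter, Finset.mem_univ, true_and] at hv ⊢
    constructor
    · rintro ⟨⟨h1, h2⟩, h3⟩; exact ⟨h1, h3⟩
    · rintro ⟨h1, h3⟩; exact ⟨⟨h1, h3 ▸ hv⟩, h3⟩
  have hle : B.card ≤ A.card := by
    rw [hAcard, hBcard]
    exact le_of_eq (Finset.sum_congr rfl fun v _ => hcards v)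
  have hEq : A = B := Finset.eq_of_subset_of_card_le hAB hle
  have hfB : f ∈ B := by
    simp only [hB, Finset.mem_filter, Finset.mem_univ, true_and]
    exact ⟨hf, Relation.ReflTransGen.refl⟩
  have hfA : f ∈ A := hEq ▸ hfB
  simp only [hA, Finset.mem_filter, Finset.mem_univ, true_and] at hfA
  exact hfA.2

lemma reach_transfer [Fintype V] [Fintype E] (G : LabGraph V E) (ε ε' : E → Bool)
    (heq : G.IsEulerianSet ε (LabGraph.diffSet ε ε')) (e : E) (he : ε e = ε' e) {u v : V}
    (h : G.ReachesAvoiding ε e u v) : G.ReachesAvoiding ε' e u v := by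
  classical
  induction h with
  | refl => exact Relation.ReflTransGen.refl
  | tail _ hstep ih =>
    rename_i b c _
    refine ih.trans ?_
    obtain ⟨g, hge, htail, hhead⟩ := hstep
    by_cases hgD : ε g = ε' g
    · exact Relation.ReflTransGen.single ⟨g, hge, by
        simpa [LabGraph.tail, LabGraph.head, hgD] using htail, by
        simpa [LabGraph.tail, LabGraph.head, hgD] using hhead⟩
    · -- g ∈ diffSet; use Eulerian cycle to route b → c under ε'
      have hgD' : g ∈ LabGraph.diffSet ε ε' := hgD
      have hpath := eulerian_head_reaches_tail G ε _ heq hgD'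
      rw [htail, hhead] at hpath
      -- hpath : ReflTransGen RD c b; reverse it
      have hsw : Relation.ReflTransGen
          (Function.swap fun a b => ∃ g, g ∈ LabGraph.diffSet ε ε' ∧ G.tail ε g = a ∧ G.head ε g = b)
          b c := Relation.reflTransGen_swap.mpr hpath
      refine Relation.ReflTransGen.mono ?_ b c hsw
      rintro x y ⟨g', hg', ht', hh'⟩
      have hne : g' ≠ e := fun hgg => hg' (hgg ▸ he)
      exact ⟨g', hne, by rw [flip_tail G hg', hh'], by rw [flip_head G hg', ht']⟩

lemma eulerian_symm (G : LabGraph V E) [Fintype V] [Fintype E] (ε ε' : E → Bool)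
    (h : G.IsEulerianSet ε (LabGraph.diffSet ε ε')) :
    G.IsEulerianSet ε' (LabGraph.diffSet ε' ε) := by
  have hDeq : LabGraph.diffSet ε' ε = LabGraph.diffSet ε ε' := by
    ext g; exact ne_comm
  rw [hDeq]
  intro v
  have e1 : Nat.card {g : E // g ∈ LabGraph.diffSet ε ε' ∧ G.head ε' g = v} =
      Nat.card {g : E // g ∈ LabGraph.diffSet ε ε' ∧ G.tail ε g = v} := by
    apply Nat.card_congr
    apply Equiv.subtypeEquivRight
    intro g
    constructor
    · rintro ⟨h1, h2⟩; exact ⟨h1, by rw [← flip_head G h1, h2]⟩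
    · rintro ⟨h1, h2⟩; exact ⟨h1, by rw [flip_head G h1, h2]⟩
  have e2 : Nat.card {g : E // g ∈ LabGraph.diffSet ε ε' ∧ G.tail ε' g = v} =
      Nat.card {g : E // g ∈ LabGraph.diffSet ε ε' ∧ G.head ε g = v} := by
    apply Nat.card_congr
    apply Equiv.subtypeEquivRight
    intro g
    constructor
    · rintro ⟨h1, h2⟩; exact ⟨h1, by rw [← flip_tail G h1, h2]⟩
    · rintro ⟨h1, h2⟩; exact ⟨h1, by rw [flip_tail G h1, h2]⟩
  rw [e1, e2, h v]

end StmtFive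


/-- Cycle-flippability of a fixed edge is invariant on Eulerian
equivalence classes of totally cyclic orientations. -/
theorem stmt5 {V E : Type} [Fintype V] [Fintype E] (G : LabGraph V E) (e : E)
    (ε ε' : E → Bool) (hε : G.TotallyCyclic ε) (hε' : G.TotallyCyclic ε')
    (heq : G.EulerianEquiv ε ε') (he : ε e = ε' e) :
    G.CycleFlippable ε e ↔ G.CycleFlippable ε' e := by
  classical
  have heq' := StmtFive.eulerian_symm G ε ε' heq
  have htl : G.tail ε e = G.tail ε' e := by simp [LabGraph.tail, he]
  have hhd : G.head ε e = G.head ε' e := by simp [LabGraph.head, he]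
  constructor
  · rintro ⟨h1, h2⟩
    exact ⟨htl ▸ hhd ▸ StmtFive.reach_transfer G ε ε' heq e he h1,
           htl ▸ hhd ▸ StmtFive.reach_transfer G ε ε' heq e he h2⟩
  · rintro ⟨h1, h2⟩
    exact ⟨htl ▸ hhd ▸ StmtFive.reach_transfer G ε' ε heq' e he.symm h1,
           htl ▸ hhd ▸ StmtFive.reach_transfer G ε' ε heq' e he.symm h2⟩
end

section
/- If e is a loop of G, then the number of Eulerian equivalence classes of totally cyclic orientations of G equals that of G − e. -/
/-!  Multigraphs with labelled edges: an edge `e` has endpoints `fst e`, `snd e`.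
An orientation is `ε : E → Bool`, where `ε e = true` means `e` is directed
from `fst e` (tail) to `snd e` (head), and `false` means the reverse. -/

structure LGraph (V E : Type) where
  fst : E → V
  snd : E → V

namespace LGraph

variable {V E : Type}

/-- Head (target) of edge `e` under orientation `ε`. -/
def head (G : LGraph V E) (ε : E → Bool) (e : E) : V := cond (ε e) (G.snd e) (G.fst e)

/-- Tail (source) of edge `e` under orientation `ε`. -/
def tail (G : LGraph V E) (ε : E → Bool) (e : E) : V := cond (ε e) (G.fst e) (G.snd e)

/-- Directed reachability under `ε`. -/
def Reaches (G : LGraph V E) (ε : E → Bool) (u v : V) : Prop :=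
  Relation.ReflTransGen (fun a b => ∃ e, G.tail ε e = a ∧ G.head ε e = b) u v

/-- Directed reachability avoiding the edge `e₀` (i.e. in `G - e₀`). -/
def ReachesAvoiding (G : LGraph V E) (ε : E → Bool) (e₀ : E) (u v : V) : Prop :=
  Relation.ReflTransGen (fun a b => ∃ e, e ≠ e₀ ∧ G.tail ε e = a ∧ G.head ε e = b) u v

/-- `ε` has a directed cut: a set `S` of vertices with at least one edge leaving `S`
and no edge entering `S`. -/
def HasDirCut (G : LGraph V E) (ε : E → Bool) : Prop :=
  ∃ S : Set V, (∃ e, G.tail ε e ∈ S ∧ G.head ε e ∉ S) ∧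
    ∀ e, G.head ε e ∈ S → G.tail ε e ∈ S

/-- A totally cyclic orientation: one without directed cuts. -/
def TotallyCyclic (G : LGraph V E) (ε : E → Bool) : Prop := ¬ G.HasDirCut ε

/-- An acyclic orientation: no directed cycle, i.e. no edge whose head reaches its tail. -/
def Acyclic (G : LGraph V E) (ε : E → Bool) : Prop :=
  ∀ e, ¬ G.Reaches ε (G.head ε e) (G.tail ε e)

/-- The set of edges `D` induces a directed Eulerian subgraph w.r.t. `ε`:
in-degree equals out-degree at each vertex. -/
def IsEulerianSet (G : LGraph V E) (ε : E → Bool) (D : Set E) : Prop :=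
  ∀ v, Nat.card {e : E // e ∈ D ∧ G.head ε e = v} =
       Nat.card {e : E // e ∈ D ∧ G.tail ε e = v}

/-- The set of edges on which two orientations differ. -/
def diffSet (ε₁ ε₂ : E → Bool) : Set E := {e | ε₁ e ≠ ε₂ e}

/-- Eulerian equivalence of orientations. -/
def EulerianEquiv (G : LGraph V E) (ε₁ ε₂ : E → Bool) : Prop :=
  G.IsEulerianSet ε₁ (diffSet ε₁ ε₂)

/-- The edges crossing between `S` and its complement. -/
def cutEdges (G : LGraph V E) (S : Set V) : Set E :=
  {e | (G.fst e ∈ S ∧ G.snd e ∉ S) ∨ (G.fst e ∉ S ∧ G.snd e ∈ S)}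

/-- A bond: a minimal nonempty edge cut. -/
def IsBond (G : LGraph V E) (D : Set E) : Prop :=
  (∃ S, D = G.cutEdges S) ∧ D.Nonempty ∧
    ∀ D', (∃ S, D' = G.cutEdges S) → D'.Nonempty → D' ⊆ D → D' = D

/-- A directed bond w.r.t. `ε`: a bond all of whose edges go from `S` to its complement. -/
def IsDirectedBond (G : LGraph V E) (ε : E → Bool) (D : Set E) : Prop :=
  G.IsBond D ∧ ∃ S, D = G.cutEdges S ∧ ∀ e ∈ D, G.tail ε e ∈ S

/-- A directed cut: a disjoint union of directed bonds. -/
def IsDirectedCut (G : LGraph V E) (ε : E → Bool) (D : Set E) : Prop :=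
  ∃ (n : ℕ) (B : Fin n → Set E), (∀ i, G.IsDirectedBond ε (B i)) ∧
    (Pairwise fun i j => Disjoint (B i) (B j)) ∧ D = ⋃ i, B i

/-- Cut equivalence of orientations. -/
def CutEquiv (G : LGraph V E) (ε₁ ε₂ : E → Bool) : Prop :=
  G.IsDirectedCut ε₁ (diffSet ε₁ ε₂) ∨ G.IsDirectedCut ε₂ (diffSet ε₁ ε₂)

/-- Eulerian-cut equivalence of orientations: the differing edges split into an
edge-disjoint union of a directed Eulerian subgraph and a directed cut. -/
def EulCutEquiv (G : LGraph V E) (ε₁ ε₂ : E → Bool) : Prop :=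
  (∃ D₁ D₂ : Set E, Disjoint D₁ D₂ ∧ diffSet ε₁ ε₂ = D₁ ∪ D₂ ∧
      G.IsEulerianSet ε₁ D₁ ∧ G.IsDirectedCut ε₁ D₂) ∨
  (∃ D₁ D₂ : Set E, Disjoint D₁ D₂ ∧ diffSet ε₁ ε₂ = D₁ ∪ D₂ ∧
      G.IsEulerianSet ε₂ D₁ ∧ G.IsDirectedCut ε₂ D₂)

/-- Undirected connectivity via the edges of `A` (spanning subgraph `(V, A)`). -/
def connRel (G : LGraph V E) (A : Set E) : V → V → Prop :=
  Relation.EqvGen (fun u v => ∃ e ∈ A, (G.fst e = u ∧ G.snd e = v) ∨ (G.fst e = v ∧ G.snd e = u))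

/-- Number of connected components of the spanning subgraph `(V, A)`. -/
noncomputable def ncomp (G : LGraph V E) (A : Set E) : ℕ :=
  Nat.card (Quot (G.connRel A))

def Connected (G : LGraph V E) : Prop := ∀ u v : V, G.connRel Set.univ u v

/-- Rank of an edge set: `|V| - c(A)`. -/
noncomputable def rank (G : LGraph V E) [Fintype V] (A : Set E) : ℕ :=
  Fintype.card V - G.ncomp A

/-- The Tutte polynomial (Whitney rank expansion), evaluated at `(x, y)`. -/
noncomputable def tutte (G : LGraph V E) [Fintype V] [Fintype E] (x y : ℤ) : ℤ :=
  ∑ A : Finset E, (x - 1) ^ (G.rank (Set.univ : Set E) - G.rank (A : Set E)) *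
    (y - 1) ^ (A.card - G.rank (A : Set E))

/-- The Eulerian equivalence class (within totally cyclic orientations) of `ε`. -/
def eulClass (G : LGraph V E) (ε : E → Bool) : Set (E → Bool) :=
  {ε' | G.TotallyCyclic ε' ∧ G.EulerianEquiv ε ε'}

/-- The number of Eulerian equivalence classes of totally cyclic orientations. -/
noncomputable def numEulClasses (G : LGraph V E) : ℕ :=
  Nat.card {C : Set (E → Bool) // ∃ ε, G.TotallyCyclic ε ∧ C = G.eulClass ε}

/-- The cut equivalence class (within acyclic orientations) of `ε`. -/
def cutClass (G : LGraph V E) (ε : E → Bool) : Set (E → Bool) :=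
  {ε' | G.Acyclic ε' ∧ G.CutEquiv ε ε'}

/-- The number of cut equivalence classes of acyclic orientations. -/
noncomputable def numCutClasses (G : LGraph V E) : ℕ :=
  Nat.card {C : Set (E → Bool) // ∃ ε, G.Acyclic ε ∧ C = G.cutClass ε}

/-- Deletion of the edge `e`. -/
def deleteEdge (G : LGraph V E) (e : E) : LGraph V {f : E // f ≠ e} :=
  ⟨fun f => G.fst f.val, fun f => G.snd f.val⟩

/-- Contraction of the edge `e`: identify its two endpoints and remove `e`. -/
def contractEdge (G : LGraph V E) (e : E) :
    LGraph (Quot fun a b => a = G.fst e ∧ b = G.snd e) {f : E // f ≠ e} :=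
  ⟨fun f => Quot.mk _ (G.fst f.val), fun f => Quot.mk _ (G.snd f.val)⟩

/-- `e` is a bridge: its endpoints are disconnected in `G - e`. -/
def IsBridge (G : LGraph V E) (e : E) : Prop :=
  ¬ G.connRel {f | f ≠ e} (G.fst e) (G.snd e)

def IsLoop (G : LGraph V E) (e : E) : Prop := G.fst e = G.snd e

/-- A directed edge `e` is cycle flippable w.r.t. `ε` if there are directed paths
both from its tail to its head and from its head to its tail in `G - e`. -/
def CycleFlippable (G : LGraph V E) (ε : E → Bool) (e : E) : Prop :=
  G.ReachesAvoiding ε e (G.tail ε e) (G.head ε e) ∧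
  G.ReachesAvoiding ε e (G.head ε e) (G.tail ε e)

/-- A directed cycle: a nonempty list of distinct edges, consecutively joined
head-to-tail, closing up. -/
def IsDirectedCycle (G : LGraph V E) (ε : E → Bool) (C : List E) : Prop :=
  C ≠ [] ∧ C.Nodup ∧ C.Chain' (fun a b => G.head ε a = G.tail ε b) ∧
    ∀ h : C ≠ [], G.head ε (C.getLast h) = G.tail ε (C.head h)

/-- `ε` is reduced w.r.t. the normal orientation `εN` and the edge order: for each
edge `e`, either `ε` agrees with `εN` on `e`, or no directed cycle through `e`
has all its other edges smaller than `e`. -/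
def Reduced (G : LGraph V E) [LinearOrder E] (εN ε : E → Bool) : Prop :=
  ∀ e, ε e = εN e ∨
    ¬ ∃ C : List E, G.IsDirectedCycle ε C ∧ e ∈ C ∧ ∀ f ∈ C, f ≠ e → f < e

/-- `T` is (the edge set of) a spanning tree of `G`. -/
def IsSpanningTree (G : LGraph V E) [Fintype V] (T : Finset E) : Prop :=
  (∀ u v : V, G.connRel (↑T) u v) ∧ T.card + 1 = Fintype.card V

/-- `e ∈ T` is internally active: it is the smallest edge of the fundamental cut it defines. -/
def InternallyActive (G : LGraph V E) [Fintype V] [LinearOrder E] [DecidableEq E]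
    (T : Finset E) (e : E) : Prop :=
  e ∈ T ∧ ∀ f, G.IsSpanningTree (insert f (T.erase e)) → e ≤ f

/-- `e ∉ T` is externally active: it is the smallest edge of the fundamental cycle of `T + e`. -/
def ExternallyActive (G : LGraph V E) [Fintype V] [LinearOrder E] [DecidableEq E]
    (T : Finset E) (e : E) : Prop :=
  e ∉ T ∧ ∀ f ∈ T, G.IsSpanningTree (insert e (T.erase f)) → e ≤ f

/-- `v` is a source of `(G, ε)`. -/
def IsSource (G : LGraph V E) (ε : E → Bool) (v : V) : Prop :=
  ∀ e, G.head ε e ≠ v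

end LGraph

section Aux

variable {V E : Type} [Fintype E] (G : LGraph V E) (e : E)

lemma loop_head_eq_tail (he : G.IsLoop e) (ε : E → Bool) :
    G.head ε e = G.tail ε e := by
  unfold LGraph.head LGraph.tail
  cases ε e <;> simp only [cond_false, cond_true] <;> first | exact he | exact he.symm

open scoped Classical in
lemma card_split (P : E → Prop) :
    Nat.card {f : E // P f} =
      Nat.card {f : {f : E // f ≠ e} // P f.val} + (if P e then 1 else 0) := by
  classical
  have equiv1 : {f : {f : E // f ≠ e} // P f.val} ≃ {f : E // P f ∧ f ≠ e} :=
    ⟨fun x => ⟨x.1.1, x.2, x.1.2⟩, fun x => ⟨⟨x.1, x.2.2⟩, x.2.1⟩,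
      fun x => rfl, fun x => rfl⟩
  rw [Nat.card_congr equiv1, Nat.card_eq_fintype_card, Nat.card_eq_fintype_card,
    Fintype.card_subtype, Fintype.card_subtype]
  by_cases hPe : P e
  · have h1 : (Finset.univ.filter fun f => P f ∧ f ≠ e) =
        (Finset.univ.filter fun f => P f).erase e := by
      ext f
      simp [Finset.mem_erase, and_comm]
    have hmem : e ∈ Finset.univ.filter fun f => P f := by simp [hPe]
    rw [h1, Finset.card_erase_of_mem hmem, if_pos hPe]
    have hpos : 0 < (Finset.univ.filter fun f => P f).card :=
      Finset.card_pos.mpr ⟨e, hmem⟩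
    omega
  · rw [if_neg hPe]
    have h1 : (Finset.univ.filter fun f => P f ∧ f ≠ e)
        = Finset.univ.filter fun f => P f := by
      ext f
      simp only [Finset.mem_filter, Finset.mem_univ, true_and, and_iff_left_iff_imp]
      rintro hPf rfl
      exact hPe hPf
    rw [h1, Nat.add_zero]

lemma hasDirCut_iff (he : G.IsLoop e) (ε : E → Bool) :
    G.HasDirCut ε ↔ (G.deleteEdge e).HasDirCut (fun f => ε f.val) := by
  constructor
  · rintro ⟨S, ⟨f, hf1, hf2⟩, hAll⟩
    have hfe : f ≠ e := by
      rintro rfl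
      exact hf2 (by rw [loop_head_eq_tail G f he]; exact hf1)
    exact ⟨S, ⟨⟨f, hfe⟩, hf1, hf2⟩, fun g hg => hAll g.val hg⟩
  · rintro ⟨S, ⟨f, hf1, hf2⟩, hAll⟩
    refine ⟨S, ⟨f.val, hf1, hf2⟩, fun g hg => ?_⟩
    by_cases hge : g = e
    · subst hge
      rw [← loop_head_eq_tail G g he]
      exact hg
    · exact hAll ⟨g, hge⟩ hg

lemma totallyCyclic_iff (he : G.IsLoop e) (ε : E → Bool) :
    G.TotallyCyclic ε ↔ (G.deleteEdge e).TotallyCyclic (fun f => ε f.val) :=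
  not_congr (hasDirCut_iff G e he ε)

lemma isEulerianSet_iff (he : G.IsLoop e) (ε : E → Bool) (D : Set E) :
    G.IsEulerianSet ε D ↔
      (G.deleteEdge e).IsEulerianSet (fun f => ε f.val) {f | f.val ∈ D} := by
  classical
  unfold LGraph.IsEulerianSet
  refine forall_congr' fun v => ?_
  have h1 := card_split e (fun f => f ∈ D ∧ G.head ε f = v)
  have h2 := card_split e (fun f => f ∈ D ∧ G.tail ε f = v)
  rw [loop_head_eq_tail G e he ε] at h1
  rw [h1, h2, Nat.add_right_cancel_iff]
  exact Iff.rfl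

lemma eulEquiv_iff (he : G.IsLoop e) (ε ε' : E → Bool) :
    G.EulerianEquiv ε ε' ↔
      (G.deleteEdge e).EulerianEquiv (fun f => ε f.val) (fun f => ε' f.val) :=
  isEulerianSet_iff G e he ε (LGraph.diffSet ε ε')

lemma eulClass_preimage (he : G.IsLoop e) (ε : E → Bool) :
    G.eulClass ε =
      (fun (ε' : E → Bool) (f : {f : E // f ≠ e}) => ε' f.val) ⁻¹'
        ((G.deleteEdge e).eulClass fun f => ε f.val) := by
  ext ε'
  simp only [LGraph.eulClass, Set.mem_setOf_eq, Set.mem_preimage]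
  rw [totallyCyclic_iff G e he ε', eulEquiv_iff G e he ε ε']

end Aux

/-- Deleting a loop does not change the number of Eulerian equivalence
classes of totally cyclic orientations. -/
theorem stmt7 {V E : Type} [Fintype V] [Fintype E] (G : LGraph V E) (e : E)
    (he : G.IsLoop e) :
    G.numEulClasses = (G.deleteEdge e).numEulClasses := by
  classical
  set r := fun (ε : E → Bool) (f : {f : E // f ≠ e}) => ε f.val with hrdef
  have hr : Function.Surjective r := by
    intro δ
    refine ⟨fun f => if h : f = e then true else δ ⟨f, h⟩, ?_⟩
    funext f
    simp [hrdef, f.2]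
  refine Nat.card_congr ⟨fun C => ⟨r '' C.1, ?_⟩, fun C' => ⟨r ⁻¹' C'.1, ?_⟩, ?_, ?_⟩
  · obtain ⟨ε, hTC, hC⟩ := C.2
    refine ⟨r ε, (totallyCyclic_iff G e he ε).mp hTC, ?_⟩
    rw [hC, eulClass_preimage G e he ε, Set.image_preimage_eq _ hr]
  · obtain ⟨δ, hTC, hC⟩ := C'.2
    obtain ⟨ε, rfl⟩ := hr δ
    refine ⟨ε, (totallyCyclic_iff G e he ε).mpr hTC, ?_⟩
    rw [hC, eulClass_preimage G e he ε]
  · rintro ⟨C, hC⟩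
    apply Subtype.ext
    obtain ⟨ε, _, rfl⟩ := hC
    simp only
    rw [eulClass_preimage G e he ε, Set.image_preimage_eq _ hr]
  · rintro ⟨C', hC'⟩
    exact Subtype.ext (Set.image_preimage_eq _ hr)
end

section
/- If e is neither a bridge nor a loop of G, then the number α(G) of Eulerian equivalence classes of totally cyclic orientations satisfies the deletion-contraction recurrence α(G) = α(G − e) + α(G/e). -/
namespace MGraph

attribute [local instance] Classical.propDecidable

variable {V E : Type}

lemma head_congr (G : MGraph V E) {ε₁ ε₂ : E → Bool} {f : E} (h : ε₁ f = ε₂ f) :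
    G.head ε₁ f = G.head ε₂ f := by unfold head; rw [h]

lemma head_flip (G : MGraph V E) {ε₁ ε₂ : E → Bool} {f : E} (h : ε₁ f ≠ ε₂ f) :
    G.head ε₂ f = G.tail ε₁ f := by
  unfold head tail
  cases h1 : ε₁ f <;> cases h2 : ε₂ f <;> simp_all

lemma tail_flip (G : MGraph V E) {ε₁ ε₂ : E → Bool} {f : E} (h : ε₁ f ≠ ε₂ f) :
    G.tail ε₂ f = G.head ε₁ f := by
  unfold head tail
  cases h1 : ε₁ f <;> cases h2 : ε₂ f <;> simp_all

lemma card_congr_iff {α : Type} {p q : α → Prop} (h : ∀ a, p a ↔ q a) :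
    Nat.card {a // p a} = Nat.card {a // q a} :=
  Nat.card_congr (Equiv.subtypeEquivRight h)

lemma card_split {α : Type} [Finite α] (p q : α → Prop) :
    Nat.card {a : α // p a} = Nat.card {a // p a ∧ q a} + Nat.card {a // p a ∧ ¬ q a} := by
  rw [← Nat.card_sum]
  apply Nat.card_congr
  refine ⟨fun x => if h : q x.1 then .inl ⟨x.1, x.2, h⟩ else .inr ⟨x.1, x.2, h⟩,
    Sum.elim (fun a => ⟨a.1, a.2.1⟩) (fun a => ⟨a.1, a.2.1⟩), fun x => ?_, fun x => ?_⟩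
  · by_cases h : q x.1 <;> simp [h]
  · rcases x with a | a
    · simp [a.2.2]
    · simp [a.2.2]

lemma card_eq_zero_of_empty {α : Type} [Finite α] {p : α → Prop} (h : ∀ a, ¬ p a) :
    Nat.card {a // p a} = 0 := by
  have : IsEmpty {a // p a} := ⟨fun x => h x.1 x.2⟩
  simp

/-- in-degree of `v` -/
noncomputable def indeg (G : MGraph V E) (ε : E → Bool) (v : V) : ℕ :=
  Nat.card {f : E // G.head ε f = v}

lemma reaches_closed {G : MGraph V E} {ε : E → Bool} {S : Set V}
    (hS : ∀ f, G.tail ε f ∈ S → G.head ε f ∈ S) {u v : V}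
    (h : G.Reaches ε u v) (hu : u ∈ S) : v ∈ S := by
  induction h with
  | refl => exact hu
  | tail _ h ih => obtain ⟨f, hf1, hf2⟩ := h; exact hf2 ▸ hS f (hf1 ▸ ih)

lemma reaches_closed_rev {G : MGraph V E} {ε : E → Bool} {S : Set V}
    (hS : ∀ f, G.head ε f ∈ S → G.tail ε f ∈ S) {u v : V}
    (h : G.Reaches ε u v) (hv : v ∈ S) : u ∈ S := by
  induction h with
  | refl => exact hv
  | tail _ h ih => obtain ⟨f, hf1, hf2⟩ := h; exact ih (hf1 ▸ hS f (hf2 ▸ hv))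

lemma totallyCyclic_iff (G : MGraph V E) (ε : E → Bool) :
    G.TotallyCyclic ε ↔ ∀ f, G.Reaches ε (G.head ε f) (G.tail ε f) := by
  constructor
  · intro h f
    by_contra hf
    exact h ⟨{v | G.Reaches ε v (G.tail ε f)},
      ⟨f, Relation.ReflTransGen.refl, hf⟩,
      fun g hg => (Relation.ReflTransGen.single ⟨g, rfl, rfl⟩).trans hg⟩
  · rintro h ⟨S, ⟨f, hf1, hf2⟩, hcl⟩
    exact hf2 (reaches_closed_rev hcl (h f) hf1)

lemma reaches_of_avoiding {G : MGraph V E} {ε : E → Bool} {e : E} {u v : V}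
    (h : G.ReachesAvoiding ε e u v) : G.Reaches ε u v := by
  induction h with
  | refl => exact Relation.ReflTransGen.refl
  | tail _ h ih => obtain ⟨f, _, hf1, hf2⟩ := h; exact ih.tail ⟨f, hf1, hf2⟩

lemma avoiding_of_reaches {G : MGraph V E} {ε : E → Bool} {e : E} {u v : V}
    (hx : G.ReachesAvoiding ε e (G.tail ε e) (G.head ε e))
    (h : G.Reaches ε u v) : G.ReachesAvoiding ε e u v := by
  induction h with
  | refl => exact Relation.ReflTransGen.refl
  | tail _ h ih =>
    obtain ⟨f, hf1, hf2⟩ := h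
    by_cases hfe : f = e
    · subst hfe; exact ih.trans (hf1 ▸ hf2 ▸ hx)
    · exact ih.tail ⟨f, hfe, hf1, hf2⟩

lemma avoiding_or_of_reaches {G : MGraph V E} {ε : E → Bool} {e : E} {u v : V}
    (h : G.Reaches ε u v) :
    G.ReachesAvoiding ε e u v ∨ G.ReachesAvoiding ε e (G.head ε e) v := by
  induction h with
  | refl => exact Or.inl Relation.ReflTransGen.refl
  | tail _ h ih =>
    obtain ⟨f, hf1, hf2⟩ := h
    by_cases hfe : f = e
    · subst hfe; exact Or.inr (hf2 ▸ Relation.ReflTransGen.refl)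
    · exact ih.imp (fun a => a.tail ⟨f, hfe, hf1, hf2⟩) (fun a => a.tail ⟨f, hfe, hf1, hf2⟩)

/-- automatic backwards avoiding reach for a totally cyclic orientation -/
lemma avoiding_head_tail {G : MGraph V E} {ε : E → Bool} (h : G.TotallyCyclic ε) (e : E) :
    G.ReachesAvoiding ε e (G.head ε e) (G.tail ε e) := by
  rcases avoiding_or_of_reaches (e := e) ((G.totallyCyclic_iff ε).1 h e) with h' | h' <;> exact h'

lemma eulerianEquiv_iff {G : MGraph V E} [Finite E] (ε₁ ε₂ : E → Bool) :
    G.EulerianEquiv ε₁ ε₂ ↔ ∀ v, G.indeg ε₁ v = G.indeg ε₂ v := by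
  have key : ∀ v,
      (Nat.card {f : E // ε₁ f ≠ ε₂ f ∧ G.head ε₁ f = v}
        = Nat.card {f : E // ε₁ f ≠ ε₂ f ∧ G.tail ε₁ f = v})
      ↔ G.indeg ε₁ v = G.indeg ε₂ v := by
    intro v
    have h1 : G.indeg ε₁ v
        = Nat.card {f : E // ε₁ f ≠ ε₂ f ∧ G.head ε₁ f = v}
          + Nat.card {f : E // ¬ (ε₁ f ≠ ε₂ f) ∧ G.head ε₁ f = v} := by
      rw [indeg, card_split (fun f => G.head ε₁ f = v) (fun f => ε₁ f ≠ ε₂ f)]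
      congr 1 <;> exact card_congr_iff (fun a => and_comm)
    have h2 : G.indeg ε₂ v
        = Nat.card {f : E // ε₁ f ≠ ε₂ f ∧ G.tail ε₁ f = v}
          + Nat.card {f : E // ¬ (ε₁ f ≠ ε₂ f) ∧ G.head ε₁ f = v} := by
      rw [indeg, card_split (fun f => G.head ε₂ f = v) (fun f => ε₁ f ≠ ε₂ f)]
      congr 1
      · refine card_congr_iff (fun f => ?_)
        constructor
        · rintro ⟨h, hd⟩; exact ⟨hd, (G.head_flip hd ▸ h : _)⟩
        · rintro ⟨hd, h⟩; exact ⟨G.head_flip hd ▸ h, hd⟩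
      · refine card_congr_iff (fun f => ?_)
        constructor
        · rintro ⟨h, hd⟩
          exact ⟨hd, (G.head_congr (not_not.1 hd)) ▸ h⟩
        · rintro ⟨hd, h⟩
          exact ⟨(G.head_congr (not_not.1 hd)) ▸ h, hd⟩
    rw [h1, h2]
    omega
  constructor
  · intro h v
    exact (key v).1 (by
      have := h v
      refine Eq.trans (card_congr_iff fun f => Iff.rfl) (Eq.trans this ?_)
      exact card_congr_iff fun f => Iff.rfl)
  · intro h v
    exact (key v).2 (h v)

lemma self_mem_eulClass {G : MGraph V E} [Finite E] {ε : E → Bool} (h : G.TotallyCyclic ε) :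
    ε ∈ G.eulClass ε := by
  refine ⟨h, ?_⟩
  intro v
  rw [card_eq_zero_of_empty, card_eq_zero_of_empty] <;>
    · rintro f ⟨hf, -⟩; exact hf rfl

lemma mem_eulClass_iff {G : MGraph V E} [Finite E] {ε ε' : E → Bool} :
    ε' ∈ G.eulClass ε ↔ G.TotallyCyclic ε' ∧ ∀ v, G.indeg ε v = G.indeg ε' v := by
  unfold eulClass
  rw [Set.mem_setOf_eq, eulerianEquiv_iff]

lemma eulClass_eq_iff {G : MGraph V E} [Finite E] {ε₁ ε₂ : E → Bool}
    (h1 : G.TotallyCyclic ε₁) (h2 : G.TotallyCyclic ε₂) :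
    G.eulClass ε₁ = G.eulClass ε₂ ↔ G.indeg ε₁ = G.indeg ε₂ := by
  constructor
  · intro h
    have := h ▸ self_mem_eulClass h2
    exact funext fun v => (mem_eulClass_iff.1 this).2 v
  · intro h
    ext ε'
    rw [mem_eulClass_iff, mem_eulClass_iff, h]

/-- The indegree sequences of totally cyclic orientations. -/
def indegSet (G : MGraph V E) : Set (V → ℕ) :=
  {d | ∃ ε, G.TotallyCyclic ε ∧ G.indeg ε = d}

lemma numEulClasses_eq_card_indegSet (G : MGraph V E) [Finite E] :
    G.numEulClasses = Nat.card G.indegSet := by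
  rw [numEulClasses, Nat.card_eq_of_bijective
    (fun C => (⟨G.indeg C.2.choose, C.2.choose, C.2.choose_spec.1, rfl⟩ : G.indegSet))]
  constructor
  · rintro ⟨C₁, h₁⟩ ⟨C₂, h₂⟩ h
    have h' : G.indeg h₁.choose = G.indeg h₂.choose := congrArg Subtype.val h
    have := (eulClass_eq_iff h₁.choose_spec.1 h₂.choose_spec.1).2 h'
    exact Subtype.ext (h₁.choose_spec.2.trans (this.trans h₂.choose_spec.2.symm))
  · rintro ⟨d, ε, hε, rfl⟩
    refine ⟨⟨G.eulClass ε, ε, hε, rfl⟩, ?_⟩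
    set h := (⟨ε, hε, rfl⟩ : ∃ ε', G.TotallyCyclic ε' ∧ G.eulClass ε = G.eulClass ε')
    have : G.indeg h.choose = G.indeg ε := by
      exact ((eulClass_eq_iff hε h.choose_spec.1).1 h.choose_spec.2).symm
    exact Subtype.ext this

end MGraph
namespace MGraph

attribute [local instance] Classical.propDecidable

variable {V E : Type}

/-- A directed walk along a list of edges. -/
inductive Walk (G : MGraph V E) (ε : E → Bool) : V → V → List E → Prop
  | nil (u : V) : Walk G ε u u []
  | cons {u v : V} {f : E} {L : List E} (hf : G.tail ε f = u)
      (h : Walk G ε (G.head ε f) v L) : Walk G ε u v (f :: L)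

lemma Walk.append {G : MGraph V E} {ε : E → Bool} {u m v : V} {P Q : List E}
    (h1 : G.Walk ε u m P) (h2 : G.Walk ε m v Q) : G.Walk ε u v (P ++ Q) := by
  induction h1 with
  | nil => exact h2
  | cons hf _ ih => exact Walk.cons hf (ih h2)

lemma Walk.reaches {G : MGraph V E} {ε : E → Bool} {u v : V} {L : List E}
    (h : G.Walk ε u v L) : G.Reaches ε u v := by
  induction h with
  | nil => exact Relation.ReflTransGen.refl
  | cons hf _ ih => exact (Relation.ReflTransGen.single ⟨_, hf, rfl⟩).trans ih

lemma reaches_iff_walk {G : MGraph V E} {ε : E → Bool} {u v : V} :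
    G.Reaches ε u v ↔ ∃ L, G.Walk ε u v L := by
  constructor
  · intro h
    induction h with
    | refl => exact ⟨[], Walk.nil u⟩
    | tail _ h ih =>
      obtain ⟨L, hL⟩ := ih
      obtain ⟨f, hf1, hf2⟩ := h
      exact ⟨L ++ [f], hL.append (hf1 ▸ hf2 ▸ Walk.cons rfl (Walk.nil _))⟩
  · rintro ⟨L, hL⟩; exact hL.reaches

lemma avoiding_iff_walk {G : MGraph V E} {ε : E → Bool} {e : E} {u v : V} :
    G.ReachesAvoiding ε e u v ↔ ∃ L, G.Walk ε u v L ∧ e ∉ L := by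
  constructor
  · intro h
    induction h with
    | refl => exact ⟨[], Walk.nil u, by simp⟩
    | tail _ h ih =>
      obtain ⟨L, hL, he⟩ := ih
      obtain ⟨f, hfe, hf1, hf2⟩ := h
      refine ⟨L ++ [f], hL.append (hf1 ▸ hf2 ▸ Walk.cons rfl (Walk.nil _)), ?_⟩
      simp only [List.mem_append, List.mem_singleton]
      rintro (h | h)
      · exact he h
      · exact hfe h.symm
  · rintro ⟨L, hL, he⟩
    induction hL with
    | nil => exact Relation.ReflTransGen.refl
    | @cons u' v' f L' hf h ih =>
      have hfe : f ≠ e := fun h' => he (h' ▸ List.mem_cons_self)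
      refine (Relation.ReflTransGen.single ⟨f, hfe, hf, rfl⟩).trans
        (ih (fun h' => he (List.mem_cons_of_mem f h')))

lemma walk_decomp {G : MGraph V E} {ε : E → Bool} {u v : V} {P Q : List E}
    (h : G.Walk ε u v (P ++ Q)) : ∃ m, G.Walk ε u m P ∧ G.Walk ε m v Q := by
  induction P generalizing u with
  | nil => exact ⟨u, Walk.nil u, h⟩
  | cons f P ih =>
    cases h with
    | cons hf h =>
      obtain ⟨m, h1, h2⟩ := ih h
      exact ⟨m, Walk.cons hf h1, h2⟩

lemma walk_dedup {G : MGraph V E} {ε : E → Bool} {u v : V} {L : List E}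
    (h : G.Walk ε u v L) : ∃ L', G.Walk ε u v L' ∧ L'.Nodup ∧ ∀ f ∈ L', f ∈ L := by
  induction h with
  | @nil u => exact ⟨[], Walk.nil u, List.nodup_nil, by simp⟩
  | @cons u' v' f L hf h ih =>
    obtain ⟨L', hL', hnd, hsub⟩ := ih
    by_cases hfL : f ∈ L'
    · obtain ⟨s, t, rfl⟩ := List.append_of_mem hfL
      obtain ⟨m, h1, h2⟩ := walk_decomp hL'
      cases h2 with
      | cons hf2 h2 =>
        refine ⟨f :: t, Walk.cons hf h2, ?_, ?_⟩
        · exact (List.sublist_append_right s (f :: t)).nodup hnd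
        · intro g hg
          rcases List.mem_cons.1 hg with rfl | hg
          · exact List.mem_cons_self
          · exact List.mem_cons_of_mem _ (hsub g (by simp [hg]))
    · refine ⟨f :: L', Walk.cons hf hL', List.nodup_cons.2 ⟨hfL, hnd⟩, ?_⟩
      intro g hg
      rcases List.mem_cons.1 hg with rfl | hg
      · exact List.mem_cons_self
      · exact List.mem_cons_of_mem _ (hsub g hg)

lemma card_single {α : Type} [Finite α] {a : α} (q : Prop) :
    Nat.card {x : α // x = a ∧ q} = if q then 1 else 0 := by
  split_ifs with hq
  · haveI : Unique {x : α // x = a ∧ q} :=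
      ⟨⟨⟨a, rfl, hq⟩⟩, fun x => Subtype.ext x.2.1⟩
    exact Nat.card_unique
  · exact card_eq_zero_of_empty (fun x hx => hq hx.2)

lemma card_cons {α : Type} [Finite α] {a : α} {l : List α} (ha : a ∉ l) (p : α → Prop) :
    Nat.card {x // x ∈ a :: l ∧ p x}
      = (if p a then 1 else 0) + Nat.card {x // x ∈ l ∧ p x} := by
  rw [card_split (fun x => x ∈ a :: l ∧ p x) (fun x => x = a)]
  congr 1
  · rw [← card_single (a := a) (p a)]
    refine card_congr_iff (fun x => ?_)
    constructor
    · rintro ⟨⟨_, hp⟩, rfl⟩; exact ⟨rfl, hp⟩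
    · rintro ⟨rfl, hp⟩; exact ⟨⟨List.mem_cons_self, hp⟩, rfl⟩
  · refine card_congr_iff (fun x => ?_)
    constructor
    · rintro ⟨⟨hm, hp⟩, hne⟩
      rcases List.mem_cons.1 hm with rfl | hm
      · exact absurd rfl hne
      · exact ⟨hm, hp⟩
    · rintro ⟨hm, hp⟩
      exact ⟨⟨List.mem_cons_of_mem _ hm, hp⟩, fun h => ha (h ▸ hm)⟩

lemma walk_card {G : MGraph V E} [Finite E] {ε : E → Bool} {u v : V} {M : List E}
    (h : G.Walk ε u v M) (hnd : M.Nodup) (w : V) :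
    Nat.card {f // f ∈ M ∧ G.head ε f = w} + (if u = w then 1 else 0)
      = Nat.card {f // f ∈ M ∧ G.tail ε f = w} + (if v = w then 1 else 0) := by
  induction h with
  | nil =>
    rw [card_eq_zero_of_empty (fun f hf => List.not_mem_nil hf.1),
      card_eq_zero_of_empty (fun f hf => List.not_mem_nil hf.1)]
  | @cons u' v' f L hf h ih =>
    have hfL : f ∉ L := (List.nodup_cons.1 hnd).1
    have IH := ih (List.nodup_cons.1 hnd).2
    rw [card_cons hfL, card_cons hfL, hf]
    have h1 : (if G.head ε f = w then 1 else 0) = (if G.head ε f = w then 1 else 0) := rfl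
    by_cases hh : G.head ε f = w <;> by_cases hu : u' = w <;> simp [hh, hu] at IH ⊢ <;> omega

end MGraph
namespace MGraph

attribute [local instance] Classical.propDecidable

variable {V E : Type}

lemma tail_congr (G : MGraph V E) {ε₁ ε₂ : E → Bool} {f : E} (h : ε₁ f = ε₂ f) :
    G.tail ε₁ f = G.tail ε₂ f := by unfold tail; rw [h]

lemma walk_rev {G : MGraph V E} {ε ε' : E → Bool} {a b : V} {M : List E}
    (h : G.Walk ε a b M)
    (hflip : ∀ f ∈ M, G.head ε' f = G.tail ε f ∧ G.tail ε' f = G.head ε f) :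
    G.Reaches ε' b a := by
  induction h with
  | nil => exact Relation.ReflTransGen.refl
  | @cons u v f L hf h ih =>
    have h1 := hflip f (List.mem_cons_self)
    refine Relation.ReflTransGen.tail
      (ih (fun g hg => hflip g (List.mem_cons_of_mem _ hg))) ⟨f, h1.2, hf ▸ h1.1⟩

lemma reaches_transfer {G : MGraph V E} {ε ε' : E → Bool}
    (hall : ∀ f, G.Reaches ε' (G.tail ε f) (G.head ε f)) {u v : V}
    (h : G.Reaches ε u v) : G.Reaches ε' u v := by
  induction h with
  | refl => exact Relation.ReflTransGen.refl
  | tail _ h ih => obtain ⟨f, hf1, hf2⟩ := h; exact ih.trans (hf1 ▸ hf2 ▸ hall f)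

/-- Reversing the directed cycle made of `e` (oriented `snd → fst`) and a directed
path from `fst e` to `snd e` avoiding `e`. -/
lemma cycle_flip {G : MGraph V E} [Finite E] {ε : E → Bool} {e : E}
    (hTC : G.TotallyCyclic ε) (hε : ε e = false) :
    ∃ ε' : E → Bool, G.TotallyCyclic ε' ∧ ε' e = true ∧ G.indeg ε' = G.indeg ε := by
  have hx : G.head ε e = G.fst e := by simp [head, hε]
  have hy : G.tail ε e = G.snd e := by simp [tail, hε]
  have hav := avoiding_head_tail hTC e
  rw [hx, hy, avoiding_iff_walk] at hav
  obtain ⟨L₀, hL₀, heL₀⟩ := hav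
  obtain ⟨L, hL, hnd, hsub⟩ := walk_dedup hL₀
  have heL : e ∉ L := fun h => heL₀ (hsub e h)
  set C := e :: L with hC
  have hndC : C.Nodup := List.nodup_cons.2 ⟨heL, hnd⟩
  set ε' : E → Bool := fun f => if f ∈ C then !ε f else ε f with hε'
  have hmem : ∀ f ∈ C, ε f ≠ ε' f := by
    intro f hf
    simp only [hε', if_pos hf]
    cases ε f <;> simp
  have hflip : ∀ f ∈ C, G.head ε' f = G.tail ε f ∧ G.tail ε' f = G.head ε f :=
    fun f hf => ⟨G.head_flip (hmem f hf), G.tail_flip (hmem f hf)⟩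
  have hsame : ∀ f, f ∉ C → ε' f = ε f := by
    intro f hf; simp only [hε', if_neg hf]
  have he'e : ε' e = true := by
    simp only [hε', if_pos (show e ∈ C from List.mem_cons_self), hε]; rfl
  have hte : G.tail ε' e = G.fst e := by simp [tail, he'e]
  have hhe : G.head ε' e = G.snd e := by simp [head, he'e]
  have c1 : G.Reaches ε' (G.snd e) (G.fst e) :=
    walk_rev hL (fun f hf => hflip f (List.mem_cons_of_mem _ hf))
  have c2 : G.Reaches ε' (G.fst e) (G.snd e) :=
    Relation.ReflTransGen.single ⟨e, hte, hhe⟩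
  have cAll : ∀ f, G.Reaches ε' (G.tail ε f) (G.head ε f) := by
    intro f
    by_cases hf : f ∈ C
    · rcases List.mem_cons.1 hf with rfl | hfL
      · rw [hx, hy]; exact c1
      · obtain ⟨s, t, rfl⟩ := List.append_of_mem hfL
        obtain ⟨m, h1, h2⟩ := walk_decomp hL
        cases h2 with
        | cons hf2 h2 =>
          have r1 : G.Reaches ε' (G.tail ε f) (G.fst e) := by
            rw [hf2]
            exact walk_rev h1 (fun g hg =>
              hflip g (List.mem_cons_of_mem _ (by simp [hg])))
          have r2 : G.Reaches ε' (G.snd e) (G.head ε f) :=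
            walk_rev h2 (fun g hg =>
              hflip g (List.mem_cons_of_mem _ (by simp [hg])))
          exact (r1.trans c2).trans r2
    · exact Relation.ReflTransGen.single
        ⟨f, G.tail_congr (hsame f hf), G.head_congr (hsame f hf)⟩
  refine ⟨ε', ?_, he'e, ?_⟩
  · rw [totallyCyclic_iff]
    intro f
    by_cases hf : f ∈ C
    · rw [(hflip f hf).1, (hflip f hf).2]; exact cAll f
    · rw [G.head_congr (hsame f hf), G.tail_congr (hsame f hf)]
      exact reaches_transfer cAll ((G.totallyCyclic_iff ε).1 hTC f)
  · -- indegrees are preserved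
    have wnil : G.Walk ε (G.head ε e) (G.fst e) [] := by
      rw [hx]; exact Walk.nil _
    have we : G.Walk ε (G.snd e) (G.fst e) [e] := Walk.cons hy wnil
    have wM : G.Walk ε (G.fst e) (G.fst e) (L ++ [e]) := hL.append we
    have hndM : (L ++ [e]).Nodup :=
      (List.perm_append_singleton e L).nodup_iff.2 hndC
    have hmemM : ∀ f, f ∈ L ++ [e] ↔ f ∈ C := by
      intro f; simp [hC, or_comm]
    funext v
    have key : Nat.card {f // f ∈ C ∧ G.tail ε f = v}
        = Nat.card {f // f ∈ C ∧ G.head ε f = v} := by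
      have := walk_card wM hndM v
      have h1 : Nat.card {f // f ∈ L ++ [e] ∧ G.head ε f = v}
          = Nat.card {f // f ∈ C ∧ G.head ε f = v} :=
        card_congr_iff (fun f => by rw [hmemM])
      have h2 : Nat.card {f // f ∈ L ++ [e] ∧ G.tail ε f = v}
          = Nat.card {f // f ∈ C ∧ G.tail ε f = v} :=
        card_congr_iff (fun f => by rw [hmemM])
      omega
    have s1 : G.indeg ε' v = Nat.card {f // G.head ε' f = v ∧ f ∈ C}
        + Nat.card {f // G.head ε' f = v ∧ f ∉ C} := card_split _ _
    have s2 : G.indeg ε v = Nat.card {f // G.head ε f = v ∧ f ∈ C}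
        + Nat.card {f // G.head ε f = v ∧ f ∉ C} := card_split _ _
    rw [s1, s2]
    congr 1
    · rw [card_congr_iff (q := fun f => f ∈ C ∧ G.tail ε f = v) (fun f => ?_), key,
        card_congr_iff (q := fun f => G.head ε f = v ∧ f ∈ C) (fun f => ?_)]
      · exact ⟨fun h => ⟨h.2, h.1⟩, fun h => ⟨h.2, h.1⟩⟩
      · constructor
        · rintro ⟨hh, hm⟩; exact ⟨hm, (hflip f hm).1 ▸ hh⟩
        · rintro ⟨hm, ht⟩; exact ⟨(hflip f hm).1.trans ht, hm⟩
    · exact card_congr_iff (fun f =>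
        ⟨fun h => ⟨G.head_congr (hsame f h.2) ▸ h.1, h.2⟩,
         fun h => ⟨G.head_congr (hsame f h.2) ▸ h.1, h.2⟩⟩)

end MGraph
namespace MGraph

attribute [local instance] Classical.propDecidable

variable {V E : Type}

/-- restriction of an orientation to the edges of `G - e` -/
def restrict (ε : E → Bool) (e : E) : {f : E // f ≠ e} → Bool := fun f => ε f.1

/-- extension of an orientation of `G - e` to `G`, orienting `e` by `b` -/
noncomputable def extend (e : E) (ε' : {f : E // f ≠ e} → Bool) (b : Bool) : E → Bool :=
  fun f => if h : f = e then b else ε' ⟨f, h⟩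

lemma restrict_extend (e : E) (ε' : {f : E // f ≠ e} → Bool) (b : Bool) :
    restrict (extend e ε' b) e = ε' := by
  funext f; simp [restrict, extend, f.2]

lemma extend_apply_e (e : E) (ε' : {f : E // f ≠ e} → Bool) (b : Bool) :
    extend e ε' b e = b := by simp [extend]

lemma extend_eq_off {e : E} {ε ε₂ : E → Bool} (h : restrict ε e = restrict ε₂ e) :
    ∀ f, f ≠ e → ε f = ε₂ f := fun f hf => congrFun h ⟨f, hf⟩

lemma delete_head (G : MGraph V E) (ε : E → Bool) (e : E) (f : {f : E // f ≠ e}) :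
    (G.deleteEdge e).head (restrict ε e) f = G.head ε f.1 := rfl

lemma delete_tail (G : MGraph V E) (ε : E → Bool) (e : E) (f : {f : E // f ≠ e}) :
    (G.deleteEdge e).tail (restrict ε e) f = G.tail ε f.1 := rfl

lemma delete_reaches_iff {G : MGraph V E} {ε : E → Bool} {e : E} {u v : V} :
    (G.deleteEdge e).Reaches (restrict ε e) u v ↔ G.ReachesAvoiding ε e u v := by
  constructor
  · intro h
    induction h with
    | refl => exact Relation.ReflTransGen.refl
    | tail _ h ih =>
      obtain ⟨f, hf1, hf2⟩ := h
      exact ih.tail ⟨f.1, f.2, hf1, hf2⟩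
  · intro h
    induction h with
    | refl => exact Relation.ReflTransGen.refl
    | tail _ h ih =>
      obtain ⟨f, hfe, hf1, hf2⟩ := h
      exact ih.tail ⟨⟨f, hfe⟩, hf1, hf2⟩

lemma avoiding_congr {G : MGraph V E} {ε ε₂ : E → Bool} {e : E}
    (h : ∀ f, f ≠ e → ε f = ε₂ f) {u v : V}
    (hr : G.ReachesAvoiding ε e u v) : G.ReachesAvoiding ε₂ e u v := by
  induction hr with
  | refl => exact Relation.ReflTransGen.refl
  | tail _ hs ih =>
    obtain ⟨f, hfe, hf1, hf2⟩ := hs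
    exact ih.tail ⟨f, hfe, (G.tail_congr (h f hfe)).symm.trans hf1,
      (G.head_congr (h f hfe)).symm.trans hf2⟩

lemma delete_tc_iff {G : MGraph V E} {ε : E → Bool} {e : E} :
    (G.deleteEdge e).TotallyCyclic (restrict ε e)
      ↔ ∀ f, f ≠ e → G.ReachesAvoiding ε e (G.head ε f) (G.tail ε f) := by
  rw [totallyCyclic_iff]
  constructor
  · intro h f hf
    exact delete_reaches_iff.1 (h ⟨f, hf⟩)
  · intro h f
    exact delete_reaches_iff.2 (h f.1 f.2)

lemma indeg_delete {G : MGraph V E} (ε : E → Bool) (e : E) (v : V) :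
    (G.deleteEdge e).indeg (restrict ε e) v = Nat.card {f : E // f ≠ e ∧ G.head ε f = v} :=
  Nat.card_congr ⟨fun x => ⟨x.1.1, x.1.2, x.2⟩, fun x => ⟨⟨x.1, x.2.1⟩, x.2.2⟩,
    fun x => rfl, fun x => rfl⟩

lemma indeg_split_e {G : MGraph V E} [Finite E] (ε : E → Bool) (e : E) (v : V) :
    G.indeg ε v = Nat.card {f : E // f ≠ e ∧ G.head ε f = v}
      + (if G.head ε e = v then 1 else 0) := by
  have h1 : Nat.card {f : E // G.head ε f = v ∧ f = e}
      = (if G.head ε e = v then 1 else 0) := by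
    rw [card_congr_iff (q := fun f => f = e ∧ G.head ε e = v) (fun f => ?_)]
    · exact card_single _
    · constructor
      · rintro ⟨hh, rfl⟩; exact ⟨rfl, hh⟩
      · rintro ⟨rfl, hh⟩; exact ⟨hh, rfl⟩
  have h2 : Nat.card {f : E // G.head ε f = v ∧ ¬ f = e}
      = Nat.card {f : E // f ≠ e ∧ G.head ε f = v} :=
    card_congr_iff (fun f => and_comm)
  have h3 := card_split (fun f : E => G.head ε f = v) (fun f => f = e)
  rw [indeg, h3, h1, h2]
  omega

lemma conn_delete {G : MGraph V E} {e : E} {u v : V}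
    (h : G.connRel {f | f ≠ e} u v) : (G.deleteEdge e).connRel Set.univ u v := by
  induction h with
  | rel a b hab =>
    obtain ⟨f, hf, hor⟩ := hab
    exact Relation.EqvGen.rel a b ⟨⟨f, hf⟩, Set.mem_univ _, hor⟩
  | refl a => exact Relation.EqvGen.refl a
  | symm a b _ ih => exact Relation.EqvGen.symm a b ih
  | trans a b c _ _ ih1 ih2 => exact Relation.EqvGen.trans a b c ih1 ih2

/-- in a totally cyclic orientation, vertices connected in the underlying graph
reach each other -/
lemma tc_conn_reaches {W F : Type} {H : MGraph W F} {ε : F → Bool}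
    (hTC : H.TotallyCyclic ε) {u v : W} (h : H.connRel Set.univ u v) :
    H.Reaches ε u v ∧ H.Reaches ε v u := by
  have htc := (H.totallyCyclic_iff ε).1 hTC
  induction h with
  | rel a b hab =>
    obtain ⟨f, -, hor⟩ := hab
    have hmut : H.Reaches ε (H.fst f) (H.snd f) ∧ H.Reaches ε (H.snd f) (H.fst f) := by
      cases hb : ε f
      · have ht : H.tail ε f = H.snd f := by simp [tail, hb]
        have hh : H.head ε f = H.fst f := by simp [head, hb]
        exact ⟨ht ▸ hh ▸ htc f, ht ▸ hh ▸ Relation.ReflTransGen.single ⟨f, rfl, rfl⟩⟩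
      · have ht : H.tail ε f = H.fst f := by simp [tail, hb]
        have hh : H.head ε f = H.snd f := by simp [head, hb]
        exact ⟨ht ▸ hh ▸ Relation.ReflTransGen.single ⟨f, rfl, rfl⟩, ht ▸ hh ▸ htc f⟩
    rcases hor with ⟨rfl, rfl⟩ | ⟨rfl, rfl⟩
    · exact hmut
    · exact hmut.symm
  | refl a => exact ⟨Relation.ReflTransGen.refl, Relation.ReflTransGen.refl⟩
  | symm a b _ ih => exact ih.symm
  | trans a b c _ _ ih1 ih2 => exact ⟨ih1.1.trans ih2.1, ih2.2.trans ih1.2⟩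

/-- both extensions of a totally cyclic orientation of `G - e` are totally cyclic,
when `e` is not a bridge -/
lemma extension_of_delete_tc {G : MGraph V E} [Finite E] {e : E}
    (hb : G.connRel {f | f ≠ e} (G.fst e) (G.snd e))
    {ε' : {f : E // f ≠ e} → Bool} (hTC' : (G.deleteEdge e).TotallyCyclic ε') (b : Bool) :
    G.TotallyCyclic (extend e ε' b) ∧
      G.ReachesAvoiding (extend e ε' b) e (G.fst e) (G.snd e) ∧
      G.ReachesAvoiding (extend e ε' b) e (G.snd e) (G.fst e) := by
  set ε := extend e ε' b with hε
  have hres : restrict ε e = ε' := restrict_extend e ε' b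
  have hmut := tc_conn_reaches hTC' (conn_delete hb)
  have hxy : G.ReachesAvoiding ε e (G.fst e) (G.snd e) := by
    rw [← delete_reaches_iff (ε := ε), hres]; exact hmut.1
  have hyx : G.ReachesAvoiding ε e (G.snd e) (G.fst e) := by
    rw [← delete_reaches_iff (ε := ε), hres]; exact hmut.2
  refine ⟨(G.totallyCyclic_iff ε).2 fun f => ?_, hxy, hyx⟩
  by_cases hf : f = e
  · subst hf
    cases hB : ε f
    · have ht : G.tail ε f = G.snd f := by simp [tail, hB]
      have hh : G.head ε f = G.fst f := by simp [head, hB]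
      rw [ht, hh]
      exact reaches_of_avoiding hxy
    · have ht : G.tail ε f = G.fst f := by simp [tail, hB]
      have hh : G.head ε f = G.snd f := by simp [head, hB]
      rw [ht, hh]
      exact reaches_of_avoiding hyx
  · have := (delete_tc_iff (ε := ε) (e := e)).1 (by rw [hres]; exact hTC') f hf
    exact reaches_of_avoiding this

/-- if `e` (oriented with the walk) is deletable: restriction is totally cyclic -/
lemma delete_tc_of_flippable {G : MGraph V E} {ε : E → Bool} {e : E}
    (hTC : G.TotallyCyclic ε)
    (hA : G.ReachesAvoiding ε e (G.tail ε e) (G.head ε e)) :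
    (G.deleteEdge e).TotallyCyclic (restrict ε e) :=
  delete_tc_iff.2 fun f _ =>
    avoiding_of_reaches hA ((G.totallyCyclic_iff ε).1 hTC f)

end MGraph
namespace MGraph

attribute [local instance] Classical.propDecidable

variable {V E : Type}

/-- vertex of the contracted graph -/
def vmk (G : MGraph V E) (e : E) (v : V) :
    Quot (fun a b => a = G.fst e ∧ b = G.snd e) := Quot.mk _ v

lemma vmk_fst_snd (G : MGraph V E) (e : E) : G.vmk e (G.fst e) = G.vmk e (G.snd e) :=
  Quot.sound ⟨rfl, rfl⟩

lemma vmk_eq_iff {G : MGraph V E} {e : E} (hxy : G.fst e ≠ G.snd e) {u w : V} :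
    G.vmk e u = G.vmk e w ↔
      (u = w ∨ (u = G.fst e ∧ w = G.snd e) ∨ (u = G.snd e ∧ w = G.fst e)) := by
  constructor
  · intro h
    have hn : ∀ a b : V, (a = G.fst e ∧ b = G.snd e) →
        (if a = G.snd e then G.fst e else a) = (if b = G.snd e then G.fst e else b) := by
      rintro a b ⟨rfl, rfl⟩
      simp [hxy]
    have h2 : (if u = G.snd e then G.fst e else u)
        = (if w = G.snd e then G.fst e else w) :=
      congrArg (Quot.lift (fun v => if v = G.snd e then G.fst e else v) hn) h
    by_cases h3 : u = G.snd e
    · by_cases h4 : w = G.snd e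
      · exact Or.inl (h3.trans h4.symm)
      · rw [if_pos h3, if_neg h4] at h2
        exact Or.inr (Or.inr ⟨h3, h2.symm⟩)
    · by_cases h4 : w = G.snd e
      · rw [if_neg h3, if_pos h4] at h2
        exact Or.inr (Or.inl ⟨h2, h4⟩)
      · rw [if_neg h3, if_neg h4] at h2
        exact Or.inl h2
  · rintro (rfl | ⟨rfl, rfl⟩ | ⟨rfl, rfl⟩)
    · rfl
    · exact vmk_fst_snd G e
    · exact (vmk_fst_snd G e).symm

lemma contract_head (G : MGraph V E) (ε : E → Bool) (e : E) (f : {f : E // f ≠ e}) :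
    (G.contractEdge e).head (restrict ε e) f = G.vmk e (G.head ε f.1) := by
  show cond (ε f.1) _ _ = _
  unfold head vmk
  cases ε f.1 <;> rfl

lemma contract_tail (G : MGraph V E) (ε : E → Bool) (e : E) (f : {f : E // f ≠ e}) :
    (G.contractEdge e).tail (restrict ε e) f = G.vmk e (G.tail ε f.1) := by
  show cond (ε f.1) _ _ = _
  unfold tail vmk
  cases ε f.1 <;> rfl

lemma vmk_tail_head (G : MGraph V E) (ε : E → Bool) (e : E) :
    G.vmk e (G.tail ε e) = G.vmk e (G.head ε e) := by
  unfold tail head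
  cases ε e
  · exact (vmk_fst_snd G e).symm
  · exact vmk_fst_snd G e

lemma reaches_quot {G : MGraph V E} {ε : E → Bool} {e : E} {u v : V}
    (h : G.Reaches ε u v) :
    (G.contractEdge e).Reaches (restrict ε e) (G.vmk e u) (G.vmk e v) := by
  induction h with
  | refl => exact Relation.ReflTransGen.refl
  | tail _ hs ih =>
    obtain ⟨g, hf1, hf2⟩ := hs
    by_cases hg : g = e
    · subst hg
      have h3 := vmk_tail_head G ε g
      rw [hf1, hf2] at h3
      exact h3 ▸ ih
    · exact ih.tail ⟨⟨g, hg⟩, by rw [contract_tail, hf1], by rw [contract_head, hf2]⟩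

lemma avoiding_quot {G : MGraph V E} {ε : E → Bool} {e : E} {u v : V}
    (h : G.ReachesAvoiding ε e u v) :
    (G.contractEdge e).Reaches (restrict ε e) (G.vmk e u) (G.vmk e v) := by
  induction h with
  | refl => exact Relation.ReflTransGen.refl
  | tail _ hs ih =>
    obtain ⟨g, hg, hf1, hf2⟩ := hs
    exact ih.tail ⟨⟨g, hg⟩, by rw [contract_tail, hf1], by rw [contract_head, hf2]⟩

lemma contract_tc {G : MGraph V E} {ε : E → Bool} {e : E} (hTC : G.TotallyCyclic ε) :
    (G.contractEdge e).TotallyCyclic (restrict ε e) := by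
  rw [totallyCyclic_iff]
  intro f
  rw [contract_head, contract_tail]
  exact reaches_quot ((G.totallyCyclic_iff ε).1 hTC f.1)

lemma quot_reach_lift {G : MGraph V E} {ε : E → Bool} {e : E}
    (hbr : ∀ p q : V, G.vmk e p = G.vmk e q → G.Reaches ε p q)
    {c d} (h : (G.contractEdge e).Reaches (restrict ε e) c d) :
    ∀ u' v', G.vmk e u' = c → G.vmk e v' = d → G.Reaches ε u' v' := by
  induction h with
  | refl => exact fun u' v' h1 h2 => hbr _ _ (h1.trans h2.symm)
  | tail _ hs ih =>
    obtain ⟨f, hf1, hf2⟩ := hs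
    intro u' v' h1 h2
    have r1 := ih u' (G.tail ε f.1) h1 ((contract_tail G ε e f).symm.trans hf1)
    refine (r1.tail ⟨f.1, rfl, rfl⟩).trans (hbr _ _ ?_)
    exact ((contract_head G ε e f).symm.trans hf2).trans h2.symm

lemma quot_reach_from {G : MGraph V E} {ε : E → Bool} {e : E}
    (hxy : G.fst e ≠ G.snd e) {c}
    (h : (G.contractEdge e).Reaches (restrict ε e) (G.vmk e (G.fst e)) c) :
    ∀ v, G.vmk e v = c →
      G.ReachesAvoiding ε e (G.fst e) v ∨ G.ReachesAvoiding ε e (G.snd e) v := by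
  induction h with
  | refl =>
    intro v hv
    rcases (vmk_eq_iff hxy).1 hv with rfl | ⟨rfl, -⟩ | ⟨rfl, -⟩
    · exact Or.inl Relation.ReflTransGen.refl
    · exact Or.inl Relation.ReflTransGen.refl
    · exact Or.inr Relation.ReflTransGen.refl
  | tail _ hs ih =>
    obtain ⟨f, hf1, hf2⟩ := hs
    intro v hv
    have hmid := ih (G.tail ε f.1) ((contract_tail G ε e f).symm.trans hf1)
    have hstep : ∀ w, G.ReachesAvoiding ε e w (G.tail ε f.1) →
        G.ReachesAvoiding ε e w (G.head ε f.1) :=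
      fun w hw => hw.tail ⟨f.1, f.2, rfl, rfl⟩
    have hv2 : G.vmk e v = G.vmk e (G.head ε f.1) :=
      hv.trans ((contract_head G ε e f).symm.trans hf2).symm
    rcases (vmk_eq_iff hxy).1 hv2 with rfl | ⟨rfl, -⟩ | ⟨rfl, -⟩
    · exact hmid.imp (hstep _) (hstep _)
    · exact Or.inl Relation.ReflTransGen.refl
    · exact Or.inr Relation.ReflTransGen.refl

lemma quot_reach_to {G : MGraph V E} {ε : E → Bool} {e : E}
    (hxy : G.fst e ≠ G.snd e) {c}
    (h : (G.contractEdge e).Reaches (restrict ε e) c (G.vmk e (G.fst e))) :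
    ∀ v, G.vmk e v = c →
      G.ReachesAvoiding ε e v (G.fst e) ∨ G.ReachesAvoiding ε e v (G.snd e) := by
  induction h using Relation.ReflTransGen.head_induction_on with
  | refl =>
    intro v hv
    rcases (vmk_eq_iff hxy).1 hv with rfl | ⟨rfl, -⟩ | ⟨rfl, -⟩
    · exact Or.inl Relation.ReflTransGen.refl
    · exact Or.inl Relation.ReflTransGen.refl
    · exact Or.inr Relation.ReflTransGen.refl
  | head hs _ ih =>
    obtain ⟨f, hf1, hf2⟩ := hs
    intro v hv
    have hmid := ih (G.head ε f.1) ((contract_head G ε e f).symm.trans hf2)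
    have hv2 : G.vmk e v = G.vmk e (G.tail ε f.1) :=
      hv.trans ((contract_tail G ε e f).symm.trans hf1).symm
    have hstep : G.ReachesAvoiding ε e (G.tail ε f.1) (G.head ε f.1) :=
      Relation.ReflTransGen.single ⟨f.1, f.2, rfl, rfl⟩
    rcases (vmk_eq_iff hxy).1 hv2 with rfl | ⟨rfl, -⟩ | ⟨rfl, -⟩
    · exact hmid.imp hstep.trans hstep.trans
    · exact Or.inl Relation.ReflTransGen.refl
    · exact Or.inr Relation.ReflTransGen.refl

lemma avoiding_conn {G : MGraph V E} {ε : E → Bool} {e : E} {u v : V}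
    (h : G.ReachesAvoiding ε e u v) : G.connRel {f | f ≠ e} u v := by
  induction h with
  | refl => exact Relation.EqvGen.refl u
  | @tail b c _ hs ih =>
    obtain ⟨f, hfe, hf1, hf2⟩ := hs
    refine Relation.EqvGen.trans _ _ _ ih (Relation.EqvGen.rel _ _ ⟨f, hfe, ?_⟩)
    unfold tail at hf1
    unfold head at hf2
    cases hε : ε f
    · rw [hε] at hf1 hf2
      exact Or.inr ⟨hf2, hf1⟩
    · rw [hε] at hf1 hf2
      exact Or.inl ⟨hf1, hf2⟩

lemma conn_quot {G : MGraph V E} {e : E} {u v : V}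
    (h : G.connRel {f | f ≠ e} u v) :
    (G.contractEdge e).connRel Set.univ (G.vmk e u) (G.vmk e v) := by
  induction h with
  | rel a b hab =>
    obtain ⟨f, hf, hor⟩ := hab
    refine Relation.EqvGen.rel _ _ ⟨⟨f, hf⟩, Set.mem_univ _, ?_⟩
    rcases hor with ⟨rfl, rfl⟩ | ⟨rfl, rfl⟩
    · exact Or.inl ⟨rfl, rfl⟩
    · exact Or.inr ⟨rfl, rfl⟩
  | refl a => exact Relation.EqvGen.refl _
  | symm a b _ ih => exact Relation.EqvGen.symm _ _ ih
  | trans a b c _ _ ih1 ih2 => exact Relation.EqvGen.trans _ _ _ ih1 ih2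

/-- A totally cyclic orientation of `G/e` extends to a totally cyclic orientation
of `G`, when `e` is not a bridge. -/
lemma exists_tc_extension {G : MGraph V E} {e : E}
    (hxy : G.fst e ≠ G.snd e)
    (hb : G.connRel {f | f ≠ e} (G.fst e) (G.snd e))
    {ε' : {f : E // f ≠ e} → Bool} (hTC' : (G.contractEdge e).TotallyCyclic ε') :
    ∃ ε : E → Bool, restrict ε e = ε' ∧ G.TotallyCyclic ε := by
  set εt := extend e ε' true with hεt
  have hrt : restrict εt e = ε' := restrict_extend e ε' true
  have hTCt : (G.contractEdge e).TotallyCyclic (restrict εt e) := by rw [hrt]; exact hTC'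
  by_cases hA : G.ReachesAvoiding εt e (G.fst e) (G.snd e)
  · -- orient e from snd to fst
    set ε := extend e ε' false with hε
    have hre : restrict ε e = ε' := restrict_extend e ε' false
    have hoff : ∀ f, f ≠ e → εt f = ε f := extend_eq_off (hrt.trans hre.symm)
    have hA' : G.ReachesAvoiding ε e (G.fst e) (G.snd e) := avoiding_congr hoff hA
    have hεe : ε e = false := extend_apply_e e ε' false
    have hth : G.tail ε e = G.snd e := by unfold tail; rw [hεe]; rfl
    have hhd : G.head ε e = G.fst e := by unfold head; rw [hεe]; rfl
    have hTCε : (G.contractEdge e).TotallyCyclic (restrict ε e) := by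
      rw [hre]; exact hTC'
    have hbr : ∀ p q : V, G.vmk e p = G.vmk e q → G.Reaches ε p q := by
      intro p q h
      rcases (vmk_eq_iff hxy).1 h with rfl | ⟨rfl, rfl⟩ | ⟨rfl, rfl⟩
      · exact Relation.ReflTransGen.refl
      · exact reaches_of_avoiding hA'
      · exact Relation.ReflTransGen.single ⟨e, hth, hhd⟩
    refine ⟨ε, hre, (G.totallyCyclic_iff ε).2 fun f => ?_⟩
    by_cases hf : f = e
    · subst hf; rw [hth, hhd]; exact reaches_of_avoiding hA'
    · have hq := (totallyCyclic_iff _ _).1 hTCε ⟨f, hf⟩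
      rw [contract_head, contract_tail] at hq
      exact quot_reach_lift hbr hq _ _ rfl rfl
  · by_cases hB : G.ReachesAvoiding εt e (G.snd e) (G.fst e)
    · -- orient e from fst to snd
      have hεe : εt e = true := extend_apply_e e ε' true
      have hth : G.tail εt e = G.fst e := by unfold tail; rw [hεe]; rfl
      have hhd : G.head εt e = G.snd e := by unfold head; rw [hεe]; rfl
      have hbr : ∀ p q : V, G.vmk e p = G.vmk e q → G.Reaches εt p q := by
        intro p q h
        rcases (vmk_eq_iff hxy).1 h with rfl | ⟨rfl, rfl⟩ | ⟨rfl, rfl⟩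
        · exact Relation.ReflTransGen.refl
        · exact Relation.ReflTransGen.single ⟨e, hth, hhd⟩
        · exact reaches_of_avoiding hB
      refine ⟨εt, hrt, (G.totallyCyclic_iff εt).2 fun f => ?_⟩
      by_cases hf : f = e
      · subst hf; rw [hth, hhd]; exact reaches_of_avoiding hB
      · have hq := (totallyCyclic_iff _ _).1 hTCt ⟨f, hf⟩
        rw [contract_head, contract_tail] at hq
        exact quot_reach_lift hbr hq _ _ rfl rfl
    · -- impossible: e would be a bridge
      exfalso
      set Sx : V → Prop := fun v => G.ReachesAvoiding εt e (G.fst e) v with hSx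
      set Sy : V → Prop := fun v => G.ReachesAvoiding εt e (G.snd e) v with hSy
      have hclx : ∀ f, f ≠ e → Sx (G.tail εt f) → Sx (G.head εt f) :=
        fun f hf h => h.tail ⟨f, hf, rfl, rfl⟩
      have hcly : ∀ f, f ≠ e → Sy (G.tail εt f) → Sy (G.head εt f) :=
        fun f hf h => h.tail ⟨f, hf, rfl, rfl⟩
      have htails : ∀ f, f ≠ e → (Sx (G.head εt f) ∨ Sy (G.head εt f)) →
          (Sx (G.tail εt f) ∨ Sy (G.tail εt f)) := by
        intro f hf hh
        have hq1 : (G.contractEdge e).Reaches (restrict εt e)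
            (G.vmk e (G.fst e)) (G.vmk e (G.head εt f)) := by
          rcases hh with h | h
          · exact avoiding_quot h
          · exact (vmk_fst_snd G e) ▸ avoiding_quot h
        have hq2 := (totallyCyclic_iff _ _).1 hTCt ⟨f, hf⟩
        rw [contract_head, contract_tail] at hq2
        exact quot_reach_from hxy (hq1.trans hq2) _ rfl
      have hback : ∀ v, (Sx v ∨ Sy v) → (G.ReachesAvoiding εt e v (G.fst e) ∨
          G.ReachesAvoiding εt e v (G.snd e)) := by
        intro v hv
        have hconn : G.connRel {f | f ≠ e} (G.fst e) v := by
          rcases hv with h | h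
          · exact avoiding_conn h
          · exact Relation.EqvGen.trans _ _ _ hb (avoiding_conn h)
        have hq := (tc_conn_reaches hTCt (conn_quot hconn)).2
        exact quot_reach_to hxy hq v rfl
      have hdisj : ∀ v, Sx v → Sy v → False := by
        intro v h1 h2
        rcases hback v (Or.inl h1) with h | h
        · exact hB (h2.trans h)
        · exact hA (h1.trans h)
      have hcross : ∀ f, f ≠ e → (Sx (G.tail εt f) ↔ Sx (G.head εt f)) := by
        intro f hf
        refine ⟨hclx f hf, fun hh => ?_⟩
        rcases htails f hf (Or.inl hh) with h | h
        · exact h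
        · exact absurd (hcly f hf h) (fun h' => hdisj _ hh h')
      -- invariance of Sx along undirected connectivity avoiding e
      have hinv : ∀ u v, G.connRel {f | f ≠ e} u v → (Sx u ↔ Sx v) := by
        intro u v h
        induction h with
        | rel a b hab =>
          obtain ⟨f, hf, hor⟩ := hab
          have := hcross f hf
          unfold tail head at this
          cases hε : εt f
          · rw [hε] at this
            rcases hor with ⟨rfl, rfl⟩ | ⟨rfl, rfl⟩
            · exact this.symm
            · exact this
          · rw [hε] at this
            rcases hor with ⟨rfl, rfl⟩ | ⟨rfl, rfl⟩
            · exact this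
            · exact this.symm
        | refl a => exact Iff.rfl
        | symm a b _ ih => exact ih.symm
        | trans a b c _ _ ih1 ih2 => exact ih1.trans ih2
      exact hA ((hinv _ _ hb).1 Relation.ReflTransGen.refl)

end MGraph
namespace MGraph

attribute [local instance] Classical.propDecidable

variable {V E : Type}

lemma card_zero_elim {α : Type} [Finite α] {p : α → Prop}
    (h : Nat.card {a // p a} = 0) (a : α) : ¬ p a := by
  intro hp
  have : Nonempty {a // p a} := ⟨⟨a, hp⟩⟩
  exact (Nat.card_pos (α := {a // p a})).ne' h

lemma card_head_sum {G : MGraph V E} [Finite E] (ε : E → Bool) (T : Finset V) :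
    Nat.card {f // G.head ε f ∈ T} = ∑ v ∈ T, G.indeg ε v := by
  induction T using Finset.induction_on with
  | empty =>
    rw [card_eq_zero_of_empty (fun f hf => by simp at hf)]
    simp
  | @insert a T ha ih =>
    rw [Finset.sum_insert ha,
      card_split (fun f => G.head ε f ∈ insert a T) (fun f => G.head ε f = a)]
    congr 1
    · rw [indeg]
      refine card_congr_iff (fun f => ⟨fun h => h.2, fun h => ⟨?_, h⟩⟩)
      rw [h]; exact Finset.mem_insert_self a T
    · rw [← ih]
      refine card_congr_iff (fun f => ⟨fun h => ?_, fun h => ⟨?_, ?_⟩⟩)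
      · rcases Finset.mem_insert.1 h.1 with h' | h'
        · exact absurd h' h.2
        · exact h'
      · exact Finset.mem_insert_of_mem h
      · intro h'; exact ha (h' ▸ h)

/-- The key counting argument: if `ε` orients `e` forward, `ε₂` is totally cyclic,
the indegrees agree off the endpoints of `e` and `ε` has strictly larger indegree
at `snd e`, then the tail of `e` reaches its head avoiding `e`. -/
lemma crux_true {G : MGraph V E} [Finite V] [Finite E] {e : E} {ε ε₂ : E → Bool}
    (hTC₂ : G.TotallyCyclic ε₂) (he : ε e = true)
    (hoff : ∀ v, v ≠ G.fst e → v ≠ G.snd e → G.indeg ε v = G.indeg ε₂ v)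
    (hsum : G.indeg ε (G.fst e) + G.indeg ε (G.snd e)
      = G.indeg ε₂ (G.fst e) + G.indeg ε₂ (G.snd e))
    (hgt : G.indeg ε₂ (G.snd e) < G.indeg ε (G.snd e)) :
    G.ReachesAvoiding ε e (G.fst e) (G.snd e) := by
  by_contra hA
  have hhe : G.head ε e = G.snd e := by unfold head; rw [he]; rfl
  have hte : G.tail ε e = G.fst e := by unfold tail; rw [he]; rfl
  set S : Set V := {v | G.ReachesAvoiding ε e (G.fst e) v} with hS
  have hxS : G.fst e ∈ S := Relation.ReflTransGen.refl
  have hyS : G.snd e ∉ S := hA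
  have hSclosed : ∀ f, f ≠ e → G.tail ε f ∈ S → G.head ε f ∈ S :=
    fun f hf h => Relation.ReflTransGen.tail h ⟨f, hf, rfl, rfl⟩
  have hfin : S.Finite := Set.toFinite S
  set Sf := hfin.toFinset with hSf
  have hmemSf : ∀ v, v ∈ Sf ↔ v ∈ S := fun v => Set.Finite.mem_toFinset hfin
  have hxSf : G.fst e ∈ Sf := (hmemSf _).2 hxS
  -- sum over S of the two indegree functions
  have hNsplit : ∑ v ∈ Sf, G.indeg ε v + G.indeg ε₂ (G.fst e)
      = ∑ v ∈ Sf, G.indeg ε₂ v + G.indeg ε (G.fst e) := by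
    rw [← Finset.insert_erase hxSf, Finset.sum_insert (Finset.notMem_erase _ _),
      Finset.sum_insert (Finset.notMem_erase _ _)]
    have : ∑ v ∈ Sf.erase (G.fst e), G.indeg ε v
        = ∑ v ∈ Sf.erase (G.fst e), G.indeg ε₂ v := by
      refine Finset.sum_congr rfl (fun v hv => ?_)
      refine hoff v (Finset.ne_of_mem_erase hv) (fun h => ?_)
      exact hyS (h ▸ (hmemSf v).1 (Finset.mem_of_mem_erase hv))
    omega
  have hNA : Nat.card {f // G.head ε f ∈ S} = ∑ v ∈ Sf, G.indeg ε v := by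
    rw [← card_head_sum]
    exact card_congr_iff (fun f => (hmemSf _).symm)
  have hNA₂ : Nat.card {f // G.head ε₂ f ∈ S} = ∑ v ∈ Sf, G.indeg ε₂ v := by
    rw [← card_head_sum]
    exact card_congr_iff (fun f => (hmemSf _).symm)
  -- split by the difference set
  set Dp : E → Prop := fun f => ε f ≠ ε₂ f with hDp
  have s1 : Nat.card {f // G.head ε f ∈ S}
      = Nat.card {f // G.head ε f ∈ S ∧ Dp f}
        + Nat.card {f // G.head ε f ∈ S ∧ ¬ Dp f} := card_split _ _
  have s2 : Nat.card {f // G.head ε₂ f ∈ S}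
      = Nat.card {f // G.head ε₂ f ∈ S ∧ Dp f}
        + Nat.card {f // G.head ε₂ f ∈ S ∧ ¬ Dp f} := card_split _ _
  have c1 : Nat.card {f // G.head ε₂ f ∈ S ∧ ¬ Dp f}
      = Nat.card {f // G.head ε f ∈ S ∧ ¬ Dp f} := by
    refine card_congr_iff (fun f => ?_)
    constructor
    · rintro ⟨h1, h2⟩; exact ⟨(G.head_congr (not_not.1 h2)) ▸ h1, h2⟩
    · rintro ⟨h1, h2⟩; exact ⟨(G.head_congr (not_not.1 h2)) ▸ h1, h2⟩
  have c2 : Nat.card {f // G.head ε₂ f ∈ S ∧ Dp f}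
      = Nat.card {f // G.tail ε f ∈ S ∧ Dp f} := by
    refine card_congr_iff (fun f => ?_)
    constructor
    · rintro ⟨h1, h2⟩; exact ⟨(G.head_flip h2) ▸ h1, h2⟩
    · rintro ⟨h1, h2⟩; exact ⟨(G.head_flip h2).symm ▸ h1, h2⟩
  have s3 : Nat.card {f // G.head ε f ∈ S ∧ Dp f}
      = Nat.card {f // (G.head ε f ∈ S ∧ Dp f) ∧ G.tail ε f ∈ S}
        + Nat.card {f // (G.head ε f ∈ S ∧ Dp f) ∧ ¬ G.tail ε f ∈ S} := card_split _ _
  have s4 : Nat.card {f // G.tail ε f ∈ S ∧ Dp f}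
      = Nat.card {f // (G.tail ε f ∈ S ∧ Dp f) ∧ G.head ε f ∈ S}
        + Nat.card {f // (G.tail ε f ∈ S ∧ Dp f) ∧ ¬ G.head ε f ∈ S} := card_split _ _
  have c3 : Nat.card {f // (G.head ε f ∈ S ∧ Dp f) ∧ G.tail ε f ∈ S}
      = Nat.card {f // (G.tail ε f ∈ S ∧ Dp f) ∧ G.head ε f ∈ S} :=
    card_congr_iff (fun f => ⟨fun h => ⟨⟨h.2, h.1.2⟩, h.1.1⟩, fun h => ⟨⟨h.2, h.1.2⟩, h.1.1⟩⟩)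
  -- the leaving set is contained in {e}
  have hP3 : Nat.card {f // (G.tail ε f ∈ S ∧ Dp f) ∧ ¬ G.head ε f ∈ S}
      = if (G.tail ε e ∈ S ∧ Dp e) ∧ ¬ G.head ε e ∈ S then 1 else 0 := by
    have hiff : ∀ f, ((G.tail ε f ∈ S ∧ Dp f) ∧ ¬ G.head ε f ∈ S)
        ↔ (f = e ∧ ((G.tail ε e ∈ S ∧ Dp e) ∧ ¬ G.head ε e ∈ S)) := by
      intro f
      constructor
      · rintro ⟨⟨h1, h2⟩, h3⟩
        have hfe : f = e := by
          by_contra hne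
          exact h3 (hSclosed f hne h1)
        subst hfe
        exact ⟨rfl, ⟨h1, h2⟩, h3⟩
      · rintro ⟨rfl, h⟩; exact h
    have h4 := (card_congr_iff hiff).trans
      (card_single (a := e) ((G.tail ε e ∈ S ∧ Dp e) ∧ ¬ G.head ε e ∈ S))
    convert h4 using 2
  -- put everything together
  have key : Nat.card {f // (G.head ε f ∈ S ∧ Dp f) ∧ ¬ G.tail ε f ∈ S}
        + G.indeg ε₂ (G.fst e)
      = (if (G.tail ε e ∈ S ∧ Dp e) ∧ ¬ G.head ε e ∈ S then 1 else 0)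
        + G.indeg ε (G.fst e) := by omega
  have hgtx : G.indeg ε (G.fst e) < G.indeg ε₂ (G.fst e) := by omega
  have hite : ((G.tail ε e ∈ S ∧ Dp e) ∧ ¬ G.head ε e ∈ S) := by
    by_contra hcon
    rw [if_neg hcon] at key
    omega
  have hP2 : Nat.card {f // (G.head ε f ∈ S ∧ Dp f) ∧ ¬ G.tail ε f ∈ S} = 0 := by
    rw [if_pos hite] at key
    omega
  have hε₂e : ε₂ e = false := by
    have hD2 : ε e ≠ ε₂ e := hite.1.2
    rw [he] at hD2
    cases h : ε₂ e
    · rfl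
    · rw [h] at hD2; exact absurd rfl hD2
  -- S is closed under ε₂-steps
  have hS₂closed : ∀ f, G.tail ε₂ f ∈ S → G.head ε₂ f ∈ S := by
    intro f hf
    by_cases hD : Dp f
    · rw [G.tail_flip hD] at hf
      rw [G.head_flip hD]
      by_contra hcon
      exact card_zero_elim hP2 f ⟨⟨hf, hD⟩, hcon⟩
    · have hfe : f ≠ e := by
        intro hfe
        apply hD
        show ε f ≠ ε₂ f
        rw [hfe, he, hε₂e]
        simp
      have hfeq : ε f = ε₂ f := not_not.1 hD
      rw [← G.tail_congr hfeq] at hf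
      rw [← G.head_congr hfeq]
      exact hSclosed f hfe hf
  -- contradiction with total cyclicity of ε₂
  have hh2 : G.head ε₂ e = G.fst e := by unfold head; rw [hε₂e]; rfl
  have ht2 : G.tail ε₂ e = G.snd e := by unfold tail; rw [hε₂e]; rfl
  have := reaches_closed hS₂closed ((G.totallyCyclic_iff ε₂).1 hTC₂ e) (hh2 ▸ hxS)
  exact hyS (ht2 ▸ this)

end MGraph
namespace MGraph

attribute [local instance] Classical.propDecidable

variable {V E : Type}

/-- add one to the indegree at `snd e` -/
noncomputable def addy (G : MGraph V E) (e : E) (d : V → ℕ) : V → ℕ :=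
  fun v => d v + (if G.snd e = v then 1 else 0)

/-- add one to the indegree at `fst e` -/
noncomputable def addx (G : MGraph V E) (e : E) (d : V → ℕ) : V → ℕ :=
  fun v => d v + (if G.fst e = v then 1 else 0)

/-- projection of an indegree sequence to the contracted graph -/
noncomputable def projq (G : MGraph V E) (e : E) (d : V → ℕ) :
    Quot (fun a b => a = G.fst e ∧ b = G.snd e) → ℕ :=
  Quot.lift
    (fun v => if v = G.fst e ∨ v = G.snd e then d (G.fst e) + d (G.snd e) - 1 else d v)
    (by rintro a b ⟨rfl, rfl⟩; simp)

lemma addy_inj (G : MGraph V E) (e : E) {d d' : V → ℕ}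
    (h : addy G e d = addy G e d') : d = d' := by
  funext v
  have := congrFun h v
  simp only [addy] at this
  omega

lemma head_e_or (G : MGraph V E) (ε : E → Bool) (e : E) :
    G.head ε e = G.fst e ∨ G.head ε e = G.snd e := by
  unfold head; cases ε e
  · exact Or.inl rfl
  · exact Or.inr rfl

lemma indeg_e_pos {G : MGraph V E} [Finite E] (ε : E → Bool) (e : E) :
    1 ≤ G.indeg ε (G.fst e) + G.indeg ε (G.snd e) := by
  have h : 0 < Nat.card {f // G.head ε f = G.head ε e} :=
    @Nat.card_pos _ ⟨⟨e, rfl⟩⟩ _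
  rcases head_e_or G ε e with hh | hh <;> rw [hh] at h <;>
    · unfold indeg; omega

lemma indeg_eq_addy {G : MGraph V E} [Finite E] {ε : E → Bool} {e : E} (he : ε e = true) :
    G.indeg ε = addy G e ((G.deleteEdge e).indeg (restrict ε e)) := by
  funext v
  have hh : G.head ε e = G.snd e := by unfold head; rw [he]; rfl
  show G.indeg ε v = (G.deleteEdge e).indeg (restrict ε e) v + _
  rw [indeg_split_e ε e v, indeg_delete, hh]

lemma indeg_eq_addx {G : MGraph V E} [Finite E] {ε : E → Bool} {e : E} (he : ε e = false) :
    G.indeg ε = addx G e ((G.deleteEdge e).indeg (restrict ε e)) := by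
  funext v
  have hh : G.head ε e = G.fst e := by unfold head; rw [he]; rfl
  show G.indeg ε v = (G.deleteEdge e).indeg (restrict ε e) v + _
  rw [indeg_split_e ε e v, indeg_delete, hh]

lemma projq_addy_addx (G : MGraph V E) (e : E) (hxy : G.fst e ≠ G.snd e) (d : V → ℕ) :
    projq G e (addy G e d) = projq G e (addx G e d) := by
  funext c
  induction c using Quot.ind with | _ v =>
  show (if _ then _ else _) = (if _ then _ else _)
  by_cases hv : v = G.fst e ∨ v = G.snd e
  · rw [if_pos hv, if_pos hv]
    simp only [addy, addx, if_pos rfl, if_neg hxy, if_neg (Ne.symm hxy)]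
    omega
  · rw [if_neg hv, if_neg hv]
    push_neg at hv
    simp only [addy, addx, if_neg (fun h : G.snd e = v => hv.2 h.symm),
      if_neg (fun h : G.fst e = v => hv.1 h.symm)]

lemma indeg_contract {G : MGraph V E} {e : E} (ε : E → Bool) (v : V) :
    (G.contractEdge e).indeg (restrict ε e) (G.vmk e v)
      = Nat.card {f : E // f ≠ e ∧ G.vmk e (G.head ε f) = G.vmk e v} := by
  rw [indeg]
  refine Nat.card_congr
    ⟨fun x => ⟨x.1.1, x.1.2, ?_⟩, fun x => ⟨⟨x.1, x.2.1⟩, ?_⟩, ?_, ?_⟩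
  · rw [← contract_head G ε e x.1]; exact x.2
  · rw [contract_head]; exact x.2.2
  · intro x; exact Subtype.ext (Subtype.ext rfl)
  · intro x; exact Subtype.ext rfl

lemma projq_indeg {G : MGraph V E} [Finite E] {e : E} (hxy : G.fst e ≠ G.snd e)
    (ε : E → Bool) :
    projq G e (G.indeg ε) = (G.contractEdge e).indeg (restrict ε e) := by
  funext c
  induction c using Quot.ind with | _ v =>
  have hrhs : (G.contractEdge e).indeg (restrict ε e) (Quot.mk _ v)
      = Nat.card {f : E // f ≠ e ∧ G.vmk e (G.head ε f) = G.vmk e v} :=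
    indeg_contract ε v
  by_cases hv : v = G.fst e ∨ v = G.snd e
  · have hvmk : G.vmk e v = G.vmk e (G.fst e) := by
      rcases hv with rfl | rfl
      · rfl
      · exact (vmk_fst_snd G e).symm
    have hiff : ∀ f : E, (f ≠ e ∧ G.vmk e (G.head ε f) = G.vmk e v)
        ↔ (f ≠ e ∧ (G.head ε f = G.fst e ∨ G.head ε f = G.snd e)) := by
      intro f
      rw [hvmk, vmk_eq_iff hxy]
      constructor
      · rintro ⟨hf, h | ⟨h1, -⟩ | ⟨h1, -⟩⟩
        · exact ⟨hf, Or.inl h⟩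
        · exact ⟨hf, Or.inl h1⟩
        · exact ⟨hf, Or.inr h1⟩
      · rintro ⟨hf, h | h⟩
        · exact ⟨hf, Or.inl h⟩
        · exact ⟨hf, Or.inr (Or.inr ⟨h, rfl⟩)⟩
    rw [hrhs, card_congr_iff hiff]
    -- count edges with head in {fst e, snd e}
    have hsplit1 : Nat.card {f : E // G.head ε f = G.fst e ∨ G.head ε f = G.snd e}
        = Nat.card {f : E // (G.head ε f = G.fst e ∨ G.head ε f = G.snd e) ∧ f = e}
          + Nat.card {f : E // (G.head ε f = G.fst e ∨ G.head ε f = G.snd e) ∧ ¬ f = e} :=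
      card_split _ _
    have h1 : Nat.card {f : E // (G.head ε f = G.fst e ∨ G.head ε f = G.snd e) ∧ f = e}
        = 1 := by
      have hiff2 : ∀ f : E, ((G.head ε f = G.fst e ∨ G.head ε f = G.snd e) ∧ f = e)
          ↔ (f = e ∧ True) := by
        intro f
        constructor
        · rintro ⟨-, rfl⟩; exact ⟨rfl, trivial⟩
        · rintro ⟨rfl, -⟩; exact ⟨head_e_or G ε f, rfl⟩
      rw [card_congr_iff hiff2, card_single]
      simp
    have h2 : Nat.card {f : E // (G.head ε f = G.fst e ∨ G.head ε f = G.snd e) ∧ ¬ f = e}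
        = Nat.card {f : E // f ≠ e ∧ (G.head ε f = G.fst e ∨ G.head ε f = G.snd e)} :=
      card_congr_iff (fun f => and_comm)
    have hsplit2 : Nat.card {f : E // G.head ε f = G.fst e ∨ G.head ε f = G.snd e}
        = Nat.card {f : E // (G.head ε f = G.fst e ∨ G.head ε f = G.snd e)
              ∧ G.head ε f = G.fst e}
          + Nat.card {f : E // (G.head ε f = G.fst e ∨ G.head ε f = G.snd e)
              ∧ ¬ G.head ε f = G.fst e} := card_split _ _
    have h3 : Nat.card {f : E // (G.head ε f = G.fst e ∨ G.head ε f = G.snd e)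
          ∧ G.head ε f = G.fst e} = G.indeg ε (G.fst e) := by
      rw [indeg]
      exact card_congr_iff (fun f => ⟨fun h => h.2, fun h => ⟨Or.inl h, h⟩⟩)
    have h4 : Nat.card {f : E // (G.head ε f = G.fst e ∨ G.head ε f = G.snd e)
          ∧ ¬ G.head ε f = G.fst e} = G.indeg ε (G.snd e) := by
      rw [indeg]
      refine card_congr_iff (fun f => ⟨fun h => ?_, fun h => ⟨Or.inr h, fun h' => ?_⟩⟩)
      · rcases h.1 with h' | h'
        · exact absurd h' h.2
        · exact h'
      · exact hxy (h'.symm.trans h)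
    show (if v = G.fst e ∨ v = G.snd e then
        G.indeg ε (G.fst e) + G.indeg ε (G.snd e) - 1 else G.indeg ε v) = _
    rw [if_pos hv]
    omega
  · have hiff : ∀ f : E, (f ≠ e ∧ G.vmk e (G.head ε f) = G.vmk e v)
        ↔ G.head ε f = v := by
      intro f
      push_neg at hv
      constructor
      · rintro ⟨hf, hq⟩
        rcases (vmk_eq_iff hxy).1 hq with h | ⟨-, h⟩ | ⟨-, h⟩
        · exact h
        · exact absurd h hv.2
        · exact absurd h hv.1
      · intro hh
        refine ⟨fun hfe => ?_, by rw [hh]⟩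
        subst hfe
        rcases head_e_or G ε f with h | h
        · exact hv.1 (hh.symm.trans h)
        · exact hv.2 (hh.symm.trans h)
    rw [hrhs, card_congr_iff hiff]
    show (if v = G.fst e ∨ v = G.snd e then _ else G.indeg ε v) = _
    rw [if_neg hv, indeg]

/-- the central lemma: of two totally cyclic indegree sequences with the same
projection, the one with larger indegree at `snd e` comes from `G - e`. -/
lemma crux_del {G : MGraph V E} [Finite V] [Finite E] {e : E}
    {ε₁ ε₂ : E → Bool} (h1 : G.TotallyCyclic ε₁) (h2 : G.TotallyCyclic ε₂)
    (hoff : ∀ v, v ≠ G.fst e → v ≠ G.snd e → G.indeg ε₁ v = G.indeg ε₂ v)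
    (hsum : G.indeg ε₁ (G.fst e) + G.indeg ε₁ (G.snd e)
      = G.indeg ε₂ (G.fst e) + G.indeg ε₂ (G.snd e))
    (hgt : G.indeg ε₂ (G.snd e) < G.indeg ε₁ (G.snd e)) :
    ∃ ε' : {f : E // f ≠ e} → Bool, (G.deleteEdge e).TotallyCyclic ε'
      ∧ addy G e ((G.deleteEdge e).indeg ε') = G.indeg ε₁ := by
  obtain ⟨ε, hTC, heT, hieq⟩ :
      ∃ ε, G.TotallyCyclic ε ∧ ε e = true ∧ G.indeg ε = G.indeg ε₁ := by
    cases hb : ε₁ e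
    · obtain ⟨ε3, h3, he3, hi3⟩ := cycle_flip h1 hb
      exact ⟨ε3, h3, he3, hi3⟩
    · exact ⟨ε₁, h1, hb, rfl⟩
  have hA := crux_true h2 heT
    (fun v hx hy => (congrFun hieq v).symm ▸ hoff v hx hy)
    (by rw [congrFun hieq, congrFun hieq]; exact hsum)
    (by rw [congrFun hieq]; exact hgt)
  have hte : G.tail ε e = G.fst e := by unfold tail; rw [heT]; rfl
  have hhe : G.head ε e = G.snd e := by unfold head; rw [heT]; rfl
  have hflip : G.ReachesAvoiding ε e (G.tail ε e) (G.head ε e) := by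
    rw [hte, hhe]; exact hA
  exact ⟨restrict ε e, delete_tc_of_flippable hTC hflip,
    by rw [← indeg_eq_addy heT, hieq]⟩

end MGraph

namespace MGraph

attribute [local instance] Classical.propDecidable

variable {V E : Type}

lemma projq_mk (G : MGraph V E) (e : E) (d : V → ℕ) (v : V) :
    projq G e d (Quot.mk _ v)
      = if v = G.fst e ∨ v = G.snd e then d (G.fst e) + d (G.snd e) - 1 else d v := rfl

end MGraph



/-- Deletion-contraction for the number of Eulerian equivalence classes
of totally cyclic orientations, when `e` is neither a bridge nor a loop. -/
theorem stmt8 {V E : Type} [Fintype V] [Fintype E] (G : MGraph V E) (e : E)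
    (hb : ¬ G.IsBridge e) (hl : ¬ G.IsLoop e) :
    G.numEulClasses = (G.deleteEdge e).numEulClasses + (G.contractEdge e).numEulClasses := by
  classical
  have hxy : G.fst e ≠ G.snd e := hl
  have hbc : G.connRel {f | f ≠ e} (G.fst e) (G.snd e) := not_not.1 hb
  rw [G.numEulClasses_eq_card_indegSet, (G.deleteEdge e).numEulClasses_eq_card_indegSet,
    (G.contractEdge e).numEulClasses_eq_card_indegSet]
  have hDmfin : ((G.deleteEdge e).indegSet).Finite := by
    apply Set.Finite.subset (Set.finite_range (G.deleteEdge e).indeg)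
    rintro d ⟨ε', -, rfl⟩
    exact ⟨ε', rfl⟩
  have hDQfin : ((G.contractEdge e).indegSet).Finite := by
    apply Set.Finite.subset (Set.finite_range (G.contractEdge e).indeg)
    rintro d ⟨ε', -, rfl⟩
    exact ⟨ε', rfl⟩
  haveI := hDmfin.to_subtype
  haveI := hDQfin.to_subtype
  rw [← Nat.card_sum]
  set Del : Set (V → ℕ) := MGraph.addy G e '' (G.deleteEdge e).indegSet with hDelDef
  have memQ : ∀ d : V → ℕ, d ∈ G.indegSet →
      MGraph.projq G e d ∈ (G.contractEdge e).indegSet := by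
    rintro d ⟨ε, hTC, rfl⟩
    exact ⟨MGraph.restrict ε e, MGraph.contract_tc hTC, (MGraph.projq_indeg hxy ε).symm⟩
  set Ψ : ↥G.indegSet → ↥(G.deleteEdge e).indegSet ⊕ ↥(G.contractEdge e).indegSet :=
    fun d => if h : d.1 ∈ Del then Sum.inl ⟨h.choose, h.choose_spec.1⟩
      else Sum.inr ⟨MGraph.projq G e d.1, memQ d.1 d.2⟩ with hΨ
  refine Nat.card_eq_of_bijective Ψ ⟨?_, ?_⟩
  · -- injectivity
    intro a b hab
    simp only [hΨ] at hab
    by_cases ha : a.1 ∈ Del <;> by_cases hb2 : b.1 ∈ Del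
    · rw [dif_pos ha, dif_pos hb2] at hab
      have h1 : ha.choose = hb2.choose := by
        have := Sum.inl.inj hab
        exact congrArg Subtype.val this
      refine Subtype.ext ?_
      rw [← ha.choose_spec.2, ← hb2.choose_spec.2, h1]
    · rw [dif_pos ha, dif_neg hb2] at hab
      exact absurd hab (by simp)
    · rw [dif_neg ha, dif_pos hb2] at hab
      exact absurd hab (by simp)
    · rw [dif_neg ha, dif_neg hb2] at hab
      have hproj : MGraph.projq G e a.1 = MGraph.projq G e b.1 :=
        congrArg Subtype.val (Sum.inr.inj hab)
      obtain ⟨ε₁, hT1, hi1⟩ := id a.2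
      obtain ⟨ε₂, hT2, hi2⟩ := id b.2
      have hoff : ∀ v, v ≠ G.fst e → v ≠ G.snd e → a.1 v = b.1 v := by
        intro v h1 h2
        have := congrFun hproj (Quot.mk _ v)
        rw [MGraph.projq_mk, MGraph.projq_mk, if_neg (by tauto), if_neg (by tauto)] at this
        exact this
      have hpos1 : 1 ≤ a.1 (G.fst e) + a.1 (G.snd e) := by
        rw [← hi1]; exact MGraph.indeg_e_pos ε₁ e
      have hpos2 : 1 ≤ b.1 (G.fst e) + b.1 (G.snd e) := by
        rw [← hi2]; exact MGraph.indeg_e_pos ε₂ e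
      have hsum : a.1 (G.fst e) + a.1 (G.snd e) = b.1 (G.fst e) + b.1 (G.snd e) := by
        have := congrFun hproj (Quot.mk _ (G.fst e))
        rw [MGraph.projq_mk, MGraph.projq_mk, if_pos (Or.inl rfl), if_pos (Or.inl rfl)] at this
        omega
      by_contra hne
      have hyne : a.1 (G.snd e) ≠ b.1 (G.snd e) := by
        intro hy
        apply hne
        refine Subtype.ext (funext fun v => ?_)
        by_cases h1 : v = G.fst e
        · subst h1; omega
        · by_cases h2 : v = G.snd e
          · subst h2; exact hy
          · exact hoff v h1 h2
      rcases Nat.lt_or_ge (a.1 (G.snd e)) (b.1 (G.snd e)) with hlt | hge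
      · -- b has the larger snd-indegree: b ∈ Del
        obtain ⟨ε', hTC', heq⟩ := MGraph.crux_del hT2 hT1
          (fun v h1 h2 => by rw [hi1, hi2]; exact (hoff v h1 h2).symm)
          (by rw [hi1, hi2]; exact hsum.symm)
          (by rw [hi1, hi2]; exact hlt)
        exact hb2 ⟨(G.deleteEdge e).indeg ε', ⟨ε', hTC', rfl⟩, heq.trans hi2⟩
      · have hlt2 : b.1 (G.snd e) < a.1 (G.snd e) := by omega
        obtain ⟨ε', hTC', heq⟩ := MGraph.crux_del hT1 hT2
          (fun v h1 h2 => by rw [hi1, hi2]; exact hoff v h1 h2)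
          (by rw [hi1, hi2]; exact hsum)
          (by rw [hi1, hi2]; exact hlt2)
        exact ha ⟨(G.deleteEdge e).indeg ε', ⟨ε', hTC', rfl⟩, heq.trans hi1⟩
  · -- surjectivity
    rintro (⟨d', hd'⟩ | ⟨dq, hdq⟩)
    · obtain ⟨ε', hT', hi'⟩ := id hd'
      have hTt := MGraph.extension_of_delete_tc hbc hT' true
      have hieq : G.indeg (MGraph.extend e ε' true) = MGraph.addy G e d' := by
        rw [MGraph.indeg_eq_addy (MGraph.extend_apply_e e ε' true), MGraph.restrict_extend, hi']
      have hmem : MGraph.addy G e d' ∈ G.indegSet := ⟨MGraph.extend e ε' true, hTt.1, hieq⟩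
      have hInDel : MGraph.addy G e d' ∈ Del := ⟨d', hd', rfl⟩
      refine ⟨⟨MGraph.addy G e d', hmem⟩, ?_⟩
      simp only [hΨ]
      rw [dif_pos hInDel]
      have h1 : hInDel.choose = d' :=
        MGraph.addy_inj G e hInDel.choose_spec.2
      congr 1
      exact Subtype.ext h1
    · obtain ⟨ε', hT', hi'⟩ := id hdq
      obtain ⟨ε, hres, hTC⟩ := MGraph.exists_tc_extension hxy hbc hT'
      set T : Set ℕ :=
        {n | ∃ d, d ∈ G.indegSet ∧ MGraph.projq G e d = dq ∧ d (G.snd e) = n} with hTdef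
      have hTne : T.Nonempty :=
        ⟨G.indeg ε (G.snd e), G.indeg ε, ⟨ε, hTC, rfl⟩,
          by rw [MGraph.projq_indeg hxy, hres, hi'], rfl⟩
      obtain ⟨d₀, hd₀m, hd₀p, hd₀y⟩ := Nat.sInf_mem hTne
      have hd₀Del : d₀ ∉ Del := by
        rintro ⟨d', hd'm, heq⟩
        obtain ⟨ε'', hT'', hi''⟩ := id hd'm
        have hTf := MGraph.extension_of_delete_tc hbc hT'' false
        have hif : G.indeg (MGraph.extend e ε'' false) = MGraph.addx G e d' := by
          rw [MGraph.indeg_eq_addx (MGraph.extend_apply_e e ε'' false),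
            MGraph.restrict_extend, hi'']
        have hmem1 : MGraph.addx G e d' ∈ G.indegSet := ⟨_, hTf.1, hif⟩
        have hproj1 : MGraph.projq G e (MGraph.addx G e d') = dq := by
          rw [← MGraph.projq_addy_addx G e hxy, heq, hd₀p]
        have hxval : MGraph.addx G e d' (G.snd e) = d' (G.snd e) := by
          simp [MGraph.addx, hxy]
        have hyval : d₀ (G.snd e) = d' (G.snd e) + 1 := by
          rw [← heq]; simp [MGraph.addy]
        have hlt : MGraph.addx G e d' (G.snd e) < sInf T := by
          rw [hxval, ← hd₀y, hyval]; omega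
        exact Nat.notMem_of_lt_sInf hlt ⟨MGraph.addx G e d', hmem1, hproj1, rfl⟩
      refine ⟨⟨d₀, hd₀m⟩, ?_⟩
      simp only [hΨ]
      rw [dif_neg hd₀Del]
      exact congrArg Sum.inr (Subtype.ext hd₀p)
end

section
/- Fix a normal orientation ε of G and a total order on the edges. Every Eulerian equivalence class of totally cyclic orientations of G contains exactly one reduced orientation. -/
/-!  Multigraphs with labelled edges: an edge `e` has endpoints `fst e`, `snd e`.
An orientation is `ε : E → Bool`, where `ε e = true` means `e` is directed
from `fst e` (tail) to `snd e` (head), and `false` means the reverse. -/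

structure OGraph (V E : Type) where
  fst : E → V
  snd : E → V

namespace OGraph

variable {V E : Type}

/-- Head (target) of edge `e` under orientation `ε`. -/
def head (G : OGraph V E) (ε : E → Bool) (e : E) : V := cond (ε e) (G.snd e) (G.fst e)

/-- Tail (source) of edge `e` under orientation `ε`. -/
def tail (G : OGraph V E) (ε : E → Bool) (e : E) : V := cond (ε e) (G.fst e) (G.snd e)

/-- Directed reachability under `ε`. -/
def Reaches (G : OGraph V E) (ε : E → Bool) (u v : V) : Prop :=
  Relation.ReflTransGen (fun a b => ∃ e, G.tail ε e = a ∧ G.head ε e = b) u v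

/-- Directed reachability avoiding the edge `e₀` (i.e. in `G - e₀`). -/
def ReachesAvoiding (G : OGraph V E) (ε : E → Bool) (e₀ : E) (u v : V) : Prop :=
  Relation.ReflTransGen (fun a b => ∃ e, e ≠ e₀ ∧ G.tail ε e = a ∧ G.head ε e = b) u v

/-- `ε` has a directed cut: a set `S` of vertices with at least one edge leaving `S`
and no edge entering `S`. -/
def HasDirCut (G : OGraph V E) (ε : E → Bool) : Prop :=
  ∃ S : Set V, (∃ e, G.tail ε e ∈ S ∧ G.head ε e ∉ S) ∧
    ∀ e, G.head ε e ∈ S → G.tail ε e ∈ S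

/-- A totally cyclic orientation: one without directed cuts. -/
def TotallyCyclic (G : OGraph V E) (ε : E → Bool) : Prop := ¬ G.HasDirCut ε

/-- An acyclic orientation: no directed cycle, i.e. no edge whose head reaches its tail. -/
def Acyclic (G : OGraph V E) (ε : E → Bool) : Prop :=
  ∀ e, ¬ G.Reaches ε (G.head ε e) (G.tail ε e)

/-- The set of edges `D` induces a directed Eulerian subgraph w.r.t. `ε`:
in-degree equals out-degree at each vertex. -/
def IsEulerianSet (G : OGraph V E) (ε : E → Bool) (D : Set E) : Prop :=
  ∀ v, Nat.card {e : E // e ∈ D ∧ G.head ε e = v} =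
       Nat.card {e : E // e ∈ D ∧ G.tail ε e = v}

/-- The set of edges on which two orientations differ. -/
def diffSet (ε₁ ε₂ : E → Bool) : Set E := {e | ε₁ e ≠ ε₂ e}

/-- Eulerian equivalence of orientations. -/
def EulerianEquiv (G : OGraph V E) (ε₁ ε₂ : E → Bool) : Prop :=
  G.IsEulerianSet ε₁ (diffSet ε₁ ε₂)

/-- The edges crossing between `S` and its complement. -/
def cutEdges (G : OGraph V E) (S : Set V) : Set E :=
  {e | (G.fst e ∈ S ∧ G.snd e ∉ S) ∨ (G.fst e ∉ S ∧ G.snd e ∈ S)}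

/-- A bond: a minimal nonempty edge cut. -/
def IsBond (G : OGraph V E) (D : Set E) : Prop :=
  (∃ S, D = G.cutEdges S) ∧ D.Nonempty ∧
    ∀ D', (∃ S, D' = G.cutEdges S) → D'.Nonempty → D' ⊆ D → D' = D

/-- A directed bond w.r.t. `ε`: a bond all of whose edges go from `S` to its complement. -/
def IsDirectedBond (G : OGraph V E) (ε : E → Bool) (D : Set E) : Prop :=
  G.IsBond D ∧ ∃ S, D = G.cutEdges S ∧ ∀ e ∈ D, G.tail ε e ∈ S

/-- A directed cut: a disjoint union of directed bonds. -/
def IsDirectedCut (G : OGraph V E) (ε : E → Bool) (D : Set E) : Prop :=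
  ∃ (n : ℕ) (B : Fin n → Set E), (∀ i, G.IsDirectedBond ε (B i)) ∧
    (Pairwise fun i j => Disjoint (B i) (B j)) ∧ D = ⋃ i, B i

/-- Cut equivalence of orientations. -/
def CutEquiv (G : OGraph V E) (ε₁ ε₂ : E → Bool) : Prop :=
  G.IsDirectedCut ε₁ (diffSet ε₁ ε₂) ∨ G.IsDirectedCut ε₂ (diffSet ε₁ ε₂)

/-- Eulerian-cut equivalence of orientations: the differing edges split into an
edge-disjoint union of a directed Eulerian subgraph and a directed cut. -/
def EulCutEquiv (G : OGraph V E) (ε₁ ε₂ : E → Bool) : Prop :=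
  (∃ D₁ D₂ : Set E, Disjoint D₁ D₂ ∧ diffSet ε₁ ε₂ = D₁ ∪ D₂ ∧
      G.IsEulerianSet ε₁ D₁ ∧ G.IsDirectedCut ε₁ D₂) ∨
  (∃ D₁ D₂ : Set E, Disjoint D₁ D₂ ∧ diffSet ε₁ ε₂ = D₁ ∪ D₂ ∧
      G.IsEulerianSet ε₂ D₁ ∧ G.IsDirectedCut ε₂ D₂)

/-- Undirected connectivity via the edges of `A` (spanning subgraph `(V, A)`). -/
def connRel (G : OGraph V E) (A : Set E) : V → V → Prop :=
  Relation.EqvGen (fun u v => ∃ e ∈ A, (G.fst e = u ∧ G.snd e = v) ∨ (G.fst e = v ∧ G.snd e = u))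

/-- Number of connected components of the spanning subgraph `(V, A)`. -/
noncomputable def ncomp (G : OGraph V E) (A : Set E) : ℕ :=
  Nat.card (Quot (G.connRel A))

def Connected (G : OGraph V E) : Prop := ∀ u v : V, G.connRel Set.univ u v

/-- Rank of an edge set: `|V| - c(A)`. -/
noncomputable def rank (G : OGraph V E) [Fintype V] (A : Set E) : ℕ :=
  Fintype.card V - G.ncomp A

/-- The Tutte polynomial (Whitney rank expansion), evaluated at `(x, y)`. -/
noncomputable def tutte (G : OGraph V E) [Fintype V] [Fintype E] (x y : ℤ) : ℤ :=
  ∑ A : Finset E, (x - 1) ^ (G.rank (Set.univ : Set E) - G.rank (A : Set E)) *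
    (y - 1) ^ (A.card - G.rank (A : Set E))

/-- The Eulerian equivalence class (within totally cyclic orientations) of `ε`. -/
def eulClass (G : OGraph V E) (ε : E → Bool) : Set (E → Bool) :=
  {ε' | G.TotallyCyclic ε' ∧ G.EulerianEquiv ε ε'}

/-- The number of Eulerian equivalence classes of totally cyclic orientations. -/
noncomputable def numEulClasses (G : OGraph V E) : ℕ :=
  Nat.card {C : Set (E → Bool) // ∃ ε, G.TotallyCyclic ε ∧ C = G.eulClass ε}

/-- The cut equivalence class (within acyclic orientations) of `ε`. -/
def cutClass (G : OGraph V E) (ε : E → Bool) : Set (E → Bool) :=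
  {ε' | G.Acyclic ε' ∧ G.CutEquiv ε ε'}

/-- The number of cut equivalence classes of acyclic orientations. -/
noncomputable def numCutClasses (G : OGraph V E) : ℕ :=
  Nat.card {C : Set (E → Bool) // ∃ ε, G.Acyclic ε ∧ C = G.cutClass ε}

/-- Deletion of the edge `e`. -/
def deleteEdge (G : OGraph V E) (e : E) : OGraph V {f : E // f ≠ e} :=
  ⟨fun f => G.fst f.val, fun f => G.snd f.val⟩

/-- Contraction of the edge `e`: identify its two endpoints and remove `e`. -/
def contractEdge (G : OGraph V E) (e : E) :
    OGraph (Quot fun a b => a = G.fst e ∧ b = G.snd e) {f : E // f ≠ e} :=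
  ⟨fun f => Quot.mk _ (G.fst f.val), fun f => Quot.mk _ (G.snd f.val)⟩

/-- `e` is a bridge: its endpoints are disconnected in `G - e`. -/
def IsBridge (G : OGraph V E) (e : E) : Prop :=
  ¬ G.connRel {f | f ≠ e} (G.fst e) (G.snd e)

def IsLoop (G : OGraph V E) (e : E) : Prop := G.fst e = G.snd e

/-- A directed edge `e` is cycle flippable w.r.t. `ε` if there are directed paths
both from its tail to its head and from its head to its tail in `G - e`. -/
def CycleFlippable (G : OGraph V E) (ε : E → Bool) (e : E) : Prop :=
  G.ReachesAvoiding ε e (G.tail ε e) (G.head ε e) ∧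
  G.ReachesAvoiding ε e (G.head ε e) (G.tail ε e)

/-- A directed cycle: a nonempty list of distinct edges, consecutively joined
head-to-tail, closing up. -/
def IsDirectedCycle (G : OGraph V E) (ε : E → Bool) (C : List E) : Prop :=
  C ≠ [] ∧ C.Nodup ∧ C.Chain' (fun a b => G.head ε a = G.tail ε b) ∧
    ∀ h : C ≠ [], G.head ε (C.getLast h) = G.tail ε (C.head h)

/-- `ε` is reduced w.r.t. the normal orientation `εN` and the edge order: for each
edge `e`, either `ε` agrees with `εN` on `e`, or no directed cycle through `e`
has all its other edges smaller than `e`. -/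
def Reduced (G : OGraph V E) [LinearOrder E] (εN ε : E → Bool) : Prop :=
  ∀ e, ε e = εN e ∨
    ¬ ∃ C : List E, G.IsDirectedCycle ε C ∧ e ∈ C ∧ ∀ f ∈ C, f ≠ e → f < e

/-- `T` is (the edge set of) a spanning tree of `G`. -/
def IsSpanningTree (G : OGraph V E) [Fintype V] (T : Finset E) : Prop :=
  (∀ u v : V, G.connRel (↑T) u v) ∧ T.card + 1 = Fintype.card V

/-- `e ∈ T` is internally active: it is the smallest edge of the fundamental cut it defines. -/
def InternallyActive (G : OGraph V E) [Fintype V] [LinearOrder E] [DecidableEq E]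
    (T : Finset E) (e : E) : Prop :=
  e ∈ T ∧ ∀ f, G.IsSpanningTree (insert f (T.erase e)) → e ≤ f

/-- `e ∉ T` is externally active: it is the smallest edge of the fundamental cycle of `T + e`. -/
def ExternallyActive (G : OGraph V E) [Fintype V] [LinearOrder E] [DecidableEq E]
    (T : Finset E) (e : E) : Prop :=
  e ∉ T ∧ ∀ f ∈ T, G.IsSpanningTree (insert e (T.erase f)) → e ≤ f

/-- `v` is a source of `(G, ε)`. -/
def IsSource (G : OGraph V E) (ε : E → Bool) (v : V) : Prop :=
  ∀ e, G.head ε e ≠ v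

end OGraph

section Aux
open Finset
attribute [local instance] Classical.propDecidable

namespace OGraph
variable {V E : Type}

noncomputable def cdeg (G : OGraph V E) (α : E → Bool) (e : E) (v : V) : ℤ :=
  (if G.head α e = v then 1 else 0) - (if G.tail α e = v then 1 else 0)

noncomputable def ddeg (G : OGraph V E) (α : E → Bool) (A : Finset E) (v : V) : ℤ :=
  ∑ e ∈ A, G.cdeg α e v

variable {G : OGraph V E}

lemma head_flip {α β : E → Bool} {e : E} (h : α e ≠ β e) :
    G.head β e = G.tail α e ∧ G.tail β e = G.head α e := by
  cases hα : α e <;> cases hβ : β e <;> simp_all [OGraph.head, OGraph.tail]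

lemma head_congr {α β : E → Bool} {e : E} (h : α e = β e) :
    G.head β e = G.head α e ∧ G.tail β e = G.tail α e := by
  simp [OGraph.head, OGraph.tail, h]

lemma cdeg_flip {α β : E → Bool} {e : E} (h : α e ≠ β e) (v : V) :
    G.cdeg β e v = - G.cdeg α e v := by
  obtain ⟨h1, h2⟩ := head_flip (G := G) h
  simp only [OGraph.cdeg, h1, h2]; ring

lemma cdeg_congr {α β : E → Bool} {e : E} (h : α e = β e) (v : V) :
    G.cdeg β e v = G.cdeg α e v := by
  obtain ⟨h1, h2⟩ := head_congr (G := G) h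
  simp only [OGraph.cdeg, h1, h2]

noncomputable def Df [Fintype E] (α β : E → Bool) : Finset E :=
  univ.filter (fun e => α e ≠ β e)

variable [Fintype E]

lemma mem_Df {α β : E → Bool} {e : E} : e ∈ Df α β ↔ α e ≠ β e := by
  simp [Df]

lemma Df_comm (α β : E → Bool) : Df α β = Df β α := by
  ext e; simp [Df, ne_comm]

lemma ddeg_flip (α β : E → Bool) (A : Finset E) (v : V) :
    G.ddeg β A v = G.ddeg α A v - 2 * G.ddeg α (A.filter fun e => α e ≠ β e) v := by
  unfold OGraph.ddeg
  rw [Finset.sum_filter, Finset.mul_sum, ← Finset.sum_sub_distrib]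
  refine Finset.sum_congr rfl fun e _ => ?_
  by_cases h : α e = β e
  · rw [cdeg_congr h]; simp [h]
  · rw [cdeg_flip h]; simp [h]; ring

lemma card_eq_filter (A : Finset E) (P : E → Prop) :
    Nat.card {e : E // e ∈ (A : Set E) ∧ P e} = (A.filter P).card := by
  rw [Nat.card_eq_fintype_card, Fintype.card_subtype]
  congr 1; ext e; simp

lemma ddeg_eq_sub (α : E → Bool) (A : Finset E) (v : V) :
    G.ddeg α A v = ((A.filter fun e => G.head α e = v).card : ℤ)
      - ((A.filter fun e => G.tail α e = v).card : ℤ) := by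
  unfold OGraph.ddeg OGraph.cdeg
  rw [Finset.sum_sub_distrib, Finset.sum_boole, Finset.sum_boole]

lemma isEulerianSet_iff (α : E → Bool) (A : Finset E) :
    G.IsEulerianSet α (A : Set E) ↔ ∀ v, G.ddeg α A v = 0 := by
  unfold OGraph.IsEulerianSet
  refine forall_congr' fun v => ?_
  rw [card_eq_filter, card_eq_filter, ddeg_eq_sub, sub_eq_zero, Nat.cast_inj]

lemma diffSet_eq (α β : E → Bool) : OGraph.diffSet α β = (Df α β : Set E) := by
  ext e; simp [OGraph.diffSet, Df]

lemma eulEquiv_iff (α β : E → Bool) :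
    G.EulerianEquiv α β ↔ ∀ v, G.ddeg α (Df α β) v = 0 := by
  unfold OGraph.EulerianEquiv
  rw [diffSet_eq, isEulerianSet_iff]

lemma R_refl (α : E → Bool) : ∀ v, G.ddeg α (Df α α) v = 0 := by
  intro v; simp [OGraph.ddeg, Df]

lemma R_symm {α β : E → Bool} (h : ∀ v, G.ddeg α (Df α β) v = 0) :
    ∀ v, G.ddeg β (Df β α) v = 0 := by
  intro v
  rw [Df_comm, ddeg_flip α β]
  have h2 : (Df α β).filter (fun e => α e ≠ β e) = Df α β := by
    simp [Df, Finset.filter_filter]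
  rw [h2, h v]; ring

lemma R_trans {ε ε' ε'' : E → Bool} (h1 : ∀ v, G.ddeg ε (Df ε ε') v = 0)
    (h2 : ∀ v, G.ddeg ε (Df ε ε'') v = 0) :
    ∀ v, G.ddeg ε' (Df ε' ε'') v = 0 := by
  intro v
  have hD : Df ε' ε'' = (Df ε ε' \ Df ε ε'') ∪ (Df ε ε'' \ Df ε ε') := by
    ext e
    simp only [Df, mem_union, mem_sdiff, mem_filter, mem_univ, true_and]
    cases hε : ε e <;> cases hε' : ε' e <;> cases hε'' : ε'' e <;> simp
  have hfil : (Df ε' ε'').filter (fun e => ε e ≠ ε' e) = Df ε ε' \ Df ε ε'' := by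
    ext e
    simp only [Df, mem_filter, mem_sdiff, mem_univ, true_and]
    cases hε : ε e <;> cases hε' : ε' e <;> cases hε'' : ε'' e <;> simp
  have hdisj : Disjoint (Df ε ε' \ Df ε ε'') (Df ε ε'' \ Df ε ε') :=
    disjoint_sdiff_sdiff
  have hsum : G.ddeg ε (Df ε' ε'') v
      = G.ddeg ε (Df ε ε' \ Df ε ε'') v + G.ddeg ε (Df ε ε'' \ Df ε ε') v := by
    rw [hD]; exact Finset.sum_union hdisj
  have e1 : G.ddeg ε (Df ε ε' ∩ Df ε ε'') v + G.ddeg ε (Df ε ε' \ Df ε ε'') v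
      = G.ddeg ε (Df ε ε') v := Finset.sum_inter_add_sum_sdiff _ _ _
  have e2 : G.ddeg ε (Df ε ε'' ∩ Df ε ε') v + G.ddeg ε (Df ε ε'' \ Df ε ε') v
      = G.ddeg ε (Df ε ε'') v := Finset.sum_inter_add_sum_sdiff _ _ _
  have e3 : Df ε ε' ∩ Df ε ε'' = Df ε ε'' ∩ Df ε ε' := Finset.inter_comm _ _
  rw [ddeg_flip ε ε', hfil, hsum]
  rw [e3] at e1
  rw [h1 v] at e1
  rw [h2 v] at e2
  linarith

end OGraph
end Aux

section Aux2
open Finset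
attribute [local instance] Classical.propDecidable
namespace OGraph
variable {V E : Type} {G : OGraph V E}

lemma map_sub_sum (f g : E → ℤ) : ∀ l : List E,
    (l.map fun e => f e - g e).sum = (l.map f).sum - (l.map g).sum := by
  intro l; induction l with
  | nil => simp
  | cons a l ih => simp [ih]; ring

lemma ddeg_cycle [Fintype E] {α : E → Bool} {C : List E}
    (h : G.IsDirectedCycle α C) (v : V) : G.ddeg α C.toFinset v = 0 := by
  obtain ⟨hne, hnd, hch, hcl⟩ := h
  have hs : G.ddeg α C.toFinset v = (C.map fun e => G.cdeg α e v).sum := by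
    rw [OGraph.ddeg, List.sum_toFinset _ hnd]
  have hrot : C.map (G.head α) = (C.map (G.tail α)).rotate 1 := by
    apply List.ext_getElem
    · simp
    · intro i h1 h2
      rw [List.length_map] at h1
      rw [List.length_rotate, List.length_map] at h2
      rw [List.getElem_rotate]
      simp only [List.getElem_map, List.length_map]
      rcases Nat.lt_or_ge (i + 1) C.length with hlt | hge
      · have hmod : (i + 1) % C.length = i + 1 := Nat.mod_eq_of_lt hlt
        simp only [hmod]
        have := List.isChain_iff_getElem.mp hch i (by omega)
        simpa [List.get_eq_getElem] using this
      · have hlen : 0 < C.length := by omega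
        have hi : i = C.length - 1 := by omega
        have hmod : (i + 1) % C.length = 0 := by
          have h' : i + 1 = C.length := by omega
          simp [h']
        simp only [hmod]
        have := hcl hne
        rw [List.getLast_eq_getElem, List.head_eq_getElem_zero hne] at this
        subst hi
        exact this
  have hperm : (C.map (G.head α)).Perm (C.map (G.tail α)) := by
    rw [hrot]; exact List.rotate_perm _ 1
  have hsum2 : (C.map fun e => G.cdeg α e v).sum
      = ((C.map (G.head α)).map fun x => if x = v then (1:ℤ) else 0).sum
        - ((C.map (G.tail α)).map fun x => if x = v then (1:ℤ) else 0).sum := by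
    rw [List.map_map, List.map_map, ← map_sub_sum]
    rfl
  rw [hs, hsum2, (hperm.map (fun x => if x = v then (1:ℤ) else 0)).sum_eq]
  ring

lemma exists_trail {α : E → Bool} :
    ∀ (n : ℕ) (A : Finset E) (u t : V), A.card ≤ n →
    (∀ v, G.ddeg α A v = (if t = v then 1 else 0) - (if u = v then 1 else 0)) →
    ∃ L : List E, L.Nodup ∧ (∀ f ∈ L, f ∈ A) ∧
      L.Chain' (fun a b => G.head α a = G.tail α b) ∧
      ((L = [] ∧ u = t) ∨ ∃ h : L ≠ [],
        G.tail α (L.head h) = u ∧ G.head α (L.getLast h) = t) := by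
  intro n
  induction n with
  | zero =>
    intro A u t hc hδ
    by_cases hut : u = t
    · exact ⟨[], by simp, by simp, List.isChain_nil, Or.inl ⟨rfl, hut⟩⟩
    · exfalso
      have hA : A = ∅ := Finset.card_eq_zero.mp (Nat.le_zero.mp hc)
      have := hδ u
      rw [hA] at this
      simp [OGraph.ddeg] at this
      rw [if_neg (fun h => hut h.symm)] at this
      simp at this
  | succ n ih =>
    intro A u t hc hδ
    by_cases hut : u = t
    · exact ⟨[], by simp, by simp, List.isChain_nil, Or.inl ⟨rfl, hut⟩⟩
    · have hu : G.ddeg α A u = -1 := by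
        rw [hδ u]
        rw [if_neg (fun h => hut h.symm)]
        simp
      have hex : ∃ f ∈ A, G.cdeg α f u < 0 := by
        by_contra hno
        push_neg at hno
        have := Finset.sum_nonneg hno
        rw [← OGraph.ddeg, hu] at this
        omega
      obtain ⟨f, hfA, hfneg⟩ := hex
      have hft : G.tail α f = u ∧ G.head α f ≠ u := by
        unfold OGraph.cdeg at hfneg
        split_ifs at hfneg <;> simp_all <;> omega
      have hkey : ∀ v, G.cdeg α f v + G.ddeg α (A.erase f) v = G.ddeg α A v := by
        intro v; unfold OGraph.ddeg; exact Finset.add_sum_erase A (fun e => G.cdeg α e v) hfA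
      have hδ' : ∀ v, G.ddeg α (A.erase f) v
          = (if t = v then 1 else 0) - (if G.head α f = v then 1 else 0) := by
        intro v
        have h1 := hkey v
        rw [hδ v] at h1
        unfold OGraph.cdeg at h1
        rw [hft.1] at h1
        linarith
      obtain ⟨L', hnd', hsub', hch', hspec'⟩ :=
        ih (A.erase f) (G.head α f) t
          (by have := Finset.card_erase_of_mem hfA; omega) hδ'
      have hfL' : f ∉ L' := fun hmem => (Finset.mem_erase.mp (hsub' f hmem)).1 rfl
      refine ⟨f :: L', List.nodup_cons.mpr ⟨hfL', hnd'⟩, ?_, ?_, ?_⟩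
      · intro g hg
        rcases List.mem_cons.mp hg with h | h
        · exact h ▸ hfA
        · exact Finset.mem_of_mem_erase (hsub' g h)
      · rcases hspec' with ⟨hL', _⟩ | ⟨hL', hh, _⟩
        · subst hL'; exact List.isChain_singleton _
        · refine List.isChain_cons.mpr ⟨?_, hch'⟩
          intro b hb
          rw [List.head?_eq_head hL'] at hb
          cases hb
          exact hh.symm
      · refine Or.inr ⟨by simp, ?_, ?_⟩
        · simpa using hft.1
        · rcases hspec' with ⟨hL', hu't⟩ | ⟨hL', _, hlast⟩
          · subst hL'; simpa using hu't
          · rw [List.getLast_cons hL']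
            exact hlast

lemma exists_cycle_through [Fintype E] {α : E → Bool} {D : Finset E}
    (hD : ∀ v, G.ddeg α D v = 0) {e : E} (he : e ∈ D) :
    ∃ C : List E, G.IsDirectedCycle α C ∧ e ∈ C ∧ ∀ f ∈ C, f ∈ D := by
  have hcond : ∀ v, G.ddeg α (D.erase e) v
      = (if G.tail α e = v then 1 else 0) - (if G.head α e = v then 1 else 0) := by
    intro v
    have hkey : G.cdeg α e v + G.ddeg α (D.erase e) v = G.ddeg α D v := by
      unfold OGraph.ddeg; exact Finset.add_sum_erase D (fun e => G.cdeg α e v) he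
    rw [hD v] at hkey
    unfold OGraph.cdeg at hkey
    linarith
  obtain ⟨L, hnd, hsub, hch, hspec⟩ :=
    exists_trail (D.erase e).card (D.erase e) (G.head α e) (G.tail α e) le_rfl hcond
  have heL : e ∉ L := fun hmem => (Finset.mem_erase.mp (hsub e hmem)).1 rfl
  refine ⟨e :: L, ⟨by simp, List.nodup_cons.mpr ⟨heL, hnd⟩, ?_, ?_⟩, by simp, ?_⟩
  · rcases hspec with ⟨hL, _⟩ | ⟨hL, hh, _⟩
    · subst hL; exact List.isChain_singleton _
    · refine List.isChain_cons.mpr ⟨?_, hch⟩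
      intro b hb
      rw [List.head?_eq_head hL] at hb
      cases hb
      exact hh.symm
  · intro h
    rcases hspec with ⟨hL, hut⟩ | ⟨hL, _, hlast⟩
    · subst hL; simpa using hut
    · rw [List.getLast_cons hL]
      simp only [List.head_cons]
      exact hlast
  · intro g hg
    rcases List.mem_cons.mp hg with h | h
    · exact h ▸ he
    · exact Finset.mem_of_mem_erase (hsub g h)

end OGraph
end Aux2

section Aux3
open Finset
attribute [local instance] Classical.propDecidable
namespace OGraph
variable {V E : Type} [Fintype V] [Fintype E] {G : OGraph V E}

lemma tc_congr {ε' ε'' : E → Bool} (h : ∀ v, G.ddeg ε' (Df ε' ε'') v = 0)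
    (htc : G.TotallyCyclic ε') : G.TotallyCyclic ε'' := by
  rintro ⟨S, ⟨e₀, he₀S, he₀nS⟩, hcut⟩
  set D := Df ε' ε'' with hDdef
  have hD0 : ∀ v, G.ddeg ε'' D v = 0 := by
    intro v
    rw [ddeg_flip ε' ε'']
    have hfil : D.filter (fun e => ε' e ≠ ε'' e) = D := by
      simp [hDdef, Df, Finset.filter_filter]
    rw [hfil, h v]; ring
  set Sf : Finset V := univ.filter (· ∈ S) with hSf
  have hmemSf : ∀ x : V, x ∈ Sf ↔ x ∈ S := by intro x; simp [hSf]
  have h1 : ∑ e ∈ D, ((if G.head ε'' e ∈ S then (1:ℤ) else 0)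
      - (if G.tail ε'' e ∈ S then 1 else 0)) = 0 := by
    have hh : ∑ v ∈ Sf, ∑ e ∈ D, G.cdeg ε'' e v = 0 :=
      Finset.sum_eq_zero fun v _ => hD0 v
    rw [Finset.sum_comm] at hh
    have hterm : ∀ e ∈ D, ∑ v ∈ Sf, G.cdeg ε'' e v
        = (if G.head ε'' e ∈ S then (1:ℤ) else 0) - (if G.tail ε'' e ∈ S then 1 else 0) := by
      intro e _
      unfold OGraph.cdeg
      rw [Finset.sum_sub_distrib]
      have k1 : ∀ x : V, ∑ v ∈ Sf, (if x = v then (1:ℤ) else 0) = if x ∈ S then 1 else 0 := by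
        intro x
        rw [Finset.sum_ite_eq Sf x (fun _ => (1:ℤ))]
        exact if_congr (hmemSf x) rfl rfl
      rw [k1, k1]
    rw [← Finset.sum_congr rfl hterm]
    exact hh
  have h2 : ∑ e ∈ D, ((if G.tail ε'' e ∈ S then (1:ℤ) else 0)
      - (if G.head ε'' e ∈ S then 1 else 0)) = 0 := by
    have : ∑ e ∈ D, ((if G.tail ε'' e ∈ S then (1:ℤ) else 0)
        - (if G.head ε'' e ∈ S then 1 else 0))
      = - ∑ e ∈ D, ((if G.head ε'' e ∈ S then (1:ℤ) else 0)
        - (if G.tail ε'' e ∈ S then 1 else 0)) := by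
      rw [← Finset.sum_neg_distrib]
      exact Finset.sum_congr rfl fun e _ => by ring
    rw [this, h1]; ring
  have hnn : ∀ e ∈ D, (0:ℤ) ≤ (if G.tail ε'' e ∈ S then (1:ℤ) else 0)
      - (if G.head ε'' e ∈ S then 1 else 0) := by
    intro e _
    by_cases hh : G.head ε'' e ∈ S
    · simp [hh, hcut e hh]
    · by_cases ht : G.tail ε'' e ∈ S <;> simp [hh, ht]
  have hall := (Finset.sum_eq_zero_iff_of_nonneg hnn).mp h2
  have hnoleave : ∀ e ∈ D, G.tail ε'' e ∈ S → G.head ε'' e ∈ S := by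
    intro e heD ht
    have := hall e heD
    by_cases hh : G.head ε'' e ∈ S
    · exact hh
    · rw [if_pos ht, if_neg hh] at this; omega
  have he₀D : e₀ ∉ D := fun hin => he₀nS (hnoleave e₀ hin he₀S)
  have he₀eq : ε' e₀ = ε'' e₀ := by
    by_contra hne; exact he₀D (mem_Df.mpr hne)
  refine htc ⟨S, ⟨e₀, ?_, ?_⟩, ?_⟩
  · rw [(head_congr (G := G) he₀eq.symm).2]; exact he₀S
  · rw [(head_congr (G := G) he₀eq.symm).1]; exact he₀nS
  · intro e hhe
    by_cases heD : e ∈ D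
    · have hne : ε'' e ≠ ε' e := fun hh => (mem_Df.mp heD) hh.symm
      obtain ⟨hh1, hh2⟩ := head_flip (G := G) hne
      rw [hh1] at hhe
      rw [hh2]
      exact hnoleave e heD hhe
    · have heq : ε' e = ε'' e := by
        by_contra hne; exact heD (mem_Df.mpr hne)
      obtain ⟨hh1, hh2⟩ := head_congr (G := G) heq.symm
      rw [hh1] at hhe
      rw [hh2]
      exact hcut e hhe

variable [LinearOrder E]

noncomputable def flipC (α : E → Bool) (C : List E) : E → Bool :=
  fun f => if f ∈ C then !(α f) else α f

lemma Df_flipC (α : E → Bool) (C : List E) : Df α (flipC α C) = C.toFinset := by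
  ext e
  by_cases h : e ∈ C <;> simp [Df, flipC, h]

noncomputable def idx (e : E) : ℕ := (univ.filter (· < e)).card

lemma idx_lt {f e : E} (h : f < e) : idx f < idx e := by
  apply Finset.card_lt_card
  constructor
  · intro x hx
    simp only [mem_filter, mem_univ, true_and] at hx ⊢
    exact lt_trans hx h
  · intro hsub
    have : f ∈ univ.filter (· < e) := by simp [h]
    have := hsub this
    simp at this

lemma idx_injective : Function.Injective (idx (E := E)) := by
  intro a b hab
  rcases lt_trichotomy a b with h | h | h
  · exact absurd hab (Nat.ne_of_lt (idx_lt h))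
  · exact h
  · exact absurd hab.symm (Nat.ne_of_lt (idx_lt h))

noncomputable def meas (εN α : E → Bool) : ℕ :=
  ∑ e ∈ univ.filter (fun e => α e ≠ εN e), 2 ^ idx e

lemma sum_two_pow_lt (n : ℕ) : ∑ i ∈ Finset.range n, 2 ^ i < 2 ^ n := by
  induction n with
  | zero => simp
  | succ n ih => rw [Finset.sum_range_succ, pow_succ]; omega

lemma meas_flip {εN α : E → Bool} {C : List E} {e : E} (heC : e ∈ C)
    (hne : α e ≠ εN e) (hsmall : ∀ f ∈ C, f ≠ e → f < e) :
    meas εN (flipC α C) < meas εN α := by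
  set S' : Finset E := univ.filter (fun f => α f ≠ εN f) with hS'
  set S'' : Finset E := univ.filter (fun f => flipC α C f ≠ εN f) with hS''
  have heS' : e ∈ S' := by simp [hS', hne]
  have hsub : S'' ⊆ S'.erase e ∪ C.toFinset.erase e := by
    intro f hf
    simp only [hS'', mem_filter, mem_univ, true_and] at hf
    by_cases hfC : f ∈ C
    · rcases eq_or_ne f e with rfl | hfe
      · exfalso
        apply hf
        simp only [flipC, if_pos hfC]
        cases hα : α f <;> cases hεN : εN f <;> simp_all
      · exact Finset.mem_union_right _ (Finset.mem_erase.mpr ⟨hfe, List.mem_toFinset.mpr hfC⟩)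
    · have hfe : f ≠ e := fun hh => hfC (hh ▸ heC)
      refine Finset.mem_union_left _ (Finset.mem_erase.mpr ⟨hfe, ?_⟩)
      simp only [flipC, if_neg hfC] at hf
      simp [hS', hf]
  have hA : meas εN α = (∑ f ∈ S'.erase e, 2 ^ idx f) + 2 ^ idx e := by
    rw [meas, ← Finset.sum_erase_add S' _ heS']
  have hB : meas εN (flipC α C) ≤ (∑ f ∈ S'.erase e, 2 ^ idx f)
      + ∑ f ∈ C.toFinset.erase e, 2 ^ idx f := by
    calc meas εN (flipC α C) ≤ ∑ f ∈ S'.erase e ∪ C.toFinset.erase e, 2 ^ idx f :=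
          Finset.sum_le_sum_of_subset hsub
      _ ≤ _ := by
          have := Finset.sum_union_inter (s₁ := S'.erase e) (s₂ := C.toFinset.erase e)
            (f := fun f => 2 ^ idx f)
          omega
  have hC : ∑ f ∈ C.toFinset.erase e, 2 ^ idx f < 2 ^ idx e := by
    have himg : ∑ f ∈ C.toFinset.erase e, 2 ^ idx f
        = ∑ i ∈ (C.toFinset.erase e).image idx, 2 ^ i :=
      (Finset.sum_image fun a _ b _ hab => idx_injective hab).symm
    have hsubr : (C.toFinset.erase e).image idx ⊆ Finset.range (idx e) := by
      intro i hi
      obtain ⟨f, hf, rfl⟩ := Finset.mem_image.mp hi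
      obtain ⟨hfe, hfC⟩ := Finset.mem_erase.mp hf
      exact Finset.mem_range.mpr (idx_lt (hsmall f (List.mem_toFinset.mp hfC) hfe))
    calc ∑ f ∈ C.toFinset.erase e, 2 ^ idx f
        = ∑ i ∈ (C.toFinset.erase e).image idx, 2 ^ i := himg
      _ ≤ ∑ i ∈ Finset.range (idx e), 2 ^ i := Finset.sum_le_sum_of_subset hsubr
      _ < 2 ^ idx e := sum_two_pow_lt _
  omega

end OGraph
end Aux3

section Main
open Finset
attribute [local instance] Classical.propDecidable
namespace OGraph
variable {V E : Type} [Fintype V] [Fintype E] [LinearOrder E] {G : OGraph V E}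

lemma exists_reduced (εN ε : E → Bool) :
    ∀ (n : ℕ) (α : E → Bool), meas εN α ≤ n → G.TotallyCyclic α →
      (∀ v, G.ddeg ε (Df ε α) v = 0) →
      ∃ β, G.TotallyCyclic β ∧ (∀ v, G.ddeg ε (Df ε β) v = 0) ∧ G.Reduced εN β := by
  intro n
  induction n with
  | zero =>
    intro α hm htc hR
    by_cases hred : G.Reduced εN α
    · exact ⟨α, htc, hR, hred⟩
    · exfalso
      unfold OGraph.Reduced at hred
      push_neg at hred
      obtain ⟨e, hne, C, hC, heC, hsmall⟩ := hred
      have := meas_flip (εN := εN) heC hne hsmall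
      omega
  | succ n ih =>
    intro α hm htc hR
    by_cases hred : G.Reduced εN α
    · exact ⟨α, htc, hR, hred⟩
    · unfold OGraph.Reduced at hred
      push_neg at hred
      obtain ⟨e, hne, C, hC, heC, hsmall⟩ := hred
      set β₀ := flipC α C with hβ₀
      have hRαβ : ∀ v, G.ddeg α (Df α β₀) v = 0 := by
        intro v
        rw [hβ₀, Df_flipC]
        exact ddeg_cycle hC v
      have hRεβ : ∀ v, G.ddeg ε (Df ε β₀) v = 0 := by
        have h1 : ∀ v, G.ddeg α (Df α ε) v = 0 := R_symm hR
        exact R_trans h1 hRαβ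
      have htcβ : G.TotallyCyclic β₀ := tc_congr hRαβ htc
      have hmeas : meas εN β₀ < meas εN α := meas_flip (εN := εN) heC hne hsmall
      exact ih β₀ (by omega) htcβ hRεβ

lemma reduced_unique (εN : E → Bool) {γ β : E → Bool}
    (hR : ∀ v, G.ddeg γ (Df γ β) v = 0)
    (hγred : G.Reduced εN γ) (hβred : G.Reduced εN β) : γ = β := by
  by_contra hne
  obtain ⟨e0, he0⟩ := Function.ne_iff.mp hne
  have hDne : (Df γ β).Nonempty := ⟨e0, mem_Df.mpr he0⟩
  set e := (Df γ β).max' hDne with hedef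
  have heD : e ∈ Df γ β := Finset.max'_mem _ hDne
  have hneq : γ e ≠ β e := mem_Df.mp heD
  have hlt : ∀ f ∈ Df γ β, f ≠ e → f < e := by
    intro f hf hfe
    exact lt_of_le_of_ne (Finset.le_max' _ f hf) hfe
  by_cases hh : γ e = εN e
  · -- then β e ≠ εN e; use cycle w.r.t. β
    have hbe : β e ≠ εN e := fun hb => hneq (hh.trans hb.symm)
    have hRβ : ∀ v, G.ddeg β (Df β γ) v = 0 := R_symm hR
    have heD' : e ∈ Df β γ := by rw [Df_comm]; exact heD
    obtain ⟨C, hC, heC, hsub⟩ := exists_cycle_through hRβ heD'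
    rcases hβred e with h | h
    · exact hbe h
    · refine h ⟨C, hC, heC, fun f hf hfe => hlt f ?_ hfe⟩
      rw [Df_comm]; exact hsub f hf
  · obtain ⟨C, hC, heC, hsub⟩ := exists_cycle_through hR heD
    rcases hγred e with h | h
    · exact hh h
    · exact h ⟨C, hC, heC, fun f hf hfe => hlt f (hsub f hf) hfe⟩

end OGraph
end Main



/-- For a fixed normal orientation and edge order, every Eulerian
equivalence class of totally cyclic orientations contains exactly one reduced
orientation. -/
theorem stmt9 {V E : Type} [Fintype V] [Fintype E] [LinearOrder E] (G : OGraph V E)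
    (εN : E → Bool) (ε : E → Bool) (hε : G.TotallyCyclic ε) :
    ∃! ε' : E → Bool, G.TotallyCyclic ε' ∧ G.EulerianEquiv ε ε' ∧ G.Reduced εN ε' := by
  classical
  obtain ⟨β, hβtc, hβR, hβred⟩ :=
    OGraph.exists_reduced (G := G) εN ε (OGraph.meas εN ε) ε le_rfl hε (OGraph.R_refl ε)
  refine ⟨β, ⟨hβtc, (OGraph.eulEquiv_iff ε β).mpr hβR, hβred⟩, ?_⟩
  rintro γ ⟨hγtc, hγeq, hγred⟩
  have hγR : ∀ v, G.ddeg γ (OGraph.Df γ β) v = 0 :=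
    OGraph.R_trans ((OGraph.eulEquiv_iff ε γ).mp hγeq) hβR
  exact OGraph.reduced_unique εN hγR hγred hβred
end
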